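/- arXiv:1409.0230 — 15 statements merged into one kernel-verified Lean document; each statement's English description precedes it below -/
import Mathlib

section
/- Let α, β be real numbers and ξ = α + iβ ∈ ℂ. The additive subgroup of ℂ generated by {1, i, ξ} is dense in ℂ if and only if for all integers k, l, m, the equation kα + lβ + m = 0 implies k = l = m = 0. -/
/-!
A relation `kα + lβ + m = 0` with `(k, l) ≠ 0` makes the functional `z ↦ k re z + l im z`
integer-valued on the group, which is then not dense. Conversely, independence makes `α`
irrational, so the multiples of `ξ` reduced modulo `ℤ + ℤi` are infinitely many points of the unit
square and the group is not discrete. Normalizing ever shorter elements and passing to a limit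
direction `u` puts the line `ℝu` into the closure, so the group is dense as soon as its image under
the open projection `z ↦ Im (z / u)`, which kills that line, is dense. That image is generated by
`p, q, αp + βq` with `(p, q) ≠ 0`, and a subgroup of `ℝ` is dense or cyclic; cyclicity would give a
relation between `1, α, β`.
-/

open Complex Filter Topology Metric

theorem tendsto_floor_div_mul_nhdsGT_zero (t : ℝ) :
    Tendsto (fun r : ℝ => ⌊t / r⌋ * r) (𝓝[>] 0) (𝓝 t) := by
  have lower : Tendsto (fun r : ℝ => t - r) (𝓝[>] 0) (𝓝 t) :=
    ((continuous_const.sub continuous_id).tendsto' 0 t (sub_zero t)).mono_left nhdsWithin_le_nhds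
  refine tendsto_of_tendsto_of_tendsto_of_le_of_le' lower tendsto_const_nhds ?_ ?_ <;>
    filter_upwards [self_mem_nhdsWithin] with r (hr : 0 < r)
  · have := mul_le_mul_of_nonneg_right (Int.sub_one_lt_floor (t / r)).le hr.le
    rwa [sub_mul, div_mul_cancel₀ t hr.ne', one_mul] at this
  · simpa [div_mul_cancel₀ t hr.ne'] using mul_le_mul_of_nonneg_right (Int.floor_le (t / r)) hr.le

namespace AddSubgroup

theorem exists_ne_zero_norm_lt_of_not_discreteTopology {E : Type*} [SeminormedAddCommGroup E]
    {H : AddSubgroup E} (hH : ¬DiscreteTopology H) {ε : ℝ} (hε : 0 < ε) :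
    ∃ z ∈ H, z ≠ 0 ∧ ‖z‖ < ε := by
  contrapose! hH
  rw [discreteTopology_iff_isOpen_singleton_zero, Metric.isOpen_singleton_iff]
  refine ⟨ε, hε, fun z hz => Subtype.ext ?_⟩
  by_contra hz0
  exact (hH z z.2 hz0).not_gt (by simpa using hz)

theorem exists_forall_smul_mem_topologicalClosure {E : Type*} [NormedAddCommGroup E]
    [NormedSpace ℝ E] [ProperSpace E] {H : AddSubgroup E} (hH : ¬DiscreteTopology H) :
    ∃ u : E, u ≠ 0 ∧ ∀ t : ℝ, t • u ∈ H.topologicalClosure := by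
  choose g hgH hg0 hg using fun n : ℕ =>
    exists_ne_zero_norm_lt_of_not_discreteTopology hH (Nat.one_div_pos_of_nat (n := n))
  have hgpos n : 0 < ‖g n‖ := norm_pos_iff.mpr (hg0 n)
  have hg_lim : Tendsto (fun n => ‖g n‖) atTop (𝓝[>] 0) :=
    tendsto_nhdsWithin_iff.mpr ⟨squeeze_zero (fun n => (hgpos n).le) (fun n => (hg n).le)
      tendsto_one_div_add_atTop_nhds_zero_nat, Eventually.of_forall hgpos⟩
  obtain ⟨u, hu, φ, hφ, hdir⟩ := (isCompact_sphere (0 : E) 1).tendsto_subseq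
    (x := fun n => ‖g n‖⁻¹ • g n) fun n => by simp [norm_smul, (hgpos n).ne']
  refine ⟨u, by rintro rfl; simp at hu, fun t => ?_⟩
  have hcoeff := (tendsto_floor_div_mul_nhdsGT_zero t).comp (hg_lim.comp hφ.tendsto_atTop)
  refine mem_closure_of_tendsto (hcoeff.smul hdir) (Eventually.of_forall fun n => ?_)
  have : (⌊t / ‖g (φ n)‖⌋ * ‖g (φ n)‖) • ‖g (φ n)‖⁻¹ • g (φ n) = ⌊t / ‖g (φ n)‖⌋ • g (φ n) := by
    rw [smul_smul, mul_inv_cancel_right₀ (hgpos _).ne', Int.cast_smul_eq_zsmul]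
  simpa [this] using zsmul_mem (hgH (φ n)) _

theorem dense_of_dense_map {G G' : Type*} [AddGroup G] [TopologicalSpace G]
    [IsTopologicalAddGroup G] [AddGroup G'] [TopologicalSpace G'] {f : G →+ G'}
    (hf : IsOpenMap f) (hfc : Continuous f) {H : AddSubgroup G}
    (hker : f.ker ≤ H.topologicalClosure) (hdense : Dense (H.map f : Set G')) :
    Dense (H : Set G) := by
  have hsat : comap f (map f H) ≤ H.topologicalClosure := by
    rw [comap_map_eq]
    exact sup_le H.le_topologicalClosure hker
  rw [dense_iff_closure_eq, ← Set.univ_subset_iff, ← H.topologicalClosure_coe]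
  calc Set.univ = f ⁻¹' _root_.closure (map f H : Set G') := by
        rw [hdense.closure_eq, Set.preimage_univ]
    _ = _root_.closure (comap f (map f H) : Set G) := hf.preimage_closure_eq_closure_preimage hfc _
    _ ⊆ H.topologicalClosure := closure_minimal hsat H.isClosed_topologicalClosure

theorem dense_of_not_discreteTopology_of_dense_image {H : AddSubgroup ℂ}
    (hH : ¬DiscreteTopology H) (himage : ∀ f : ℂ →ₗ[ℝ] ℝ, f ≠ 0 → Dense (f '' H)) :
    Dense (H : Set ℂ) := by
  obtain ⟨u, hu, hline⟩ := exists_forall_smul_mem_topologicalClosure hH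
  let f : ℂ →ₗ[ℝ] ℝ := imLm ∘ₗ LinearMap.mulRight ℝ u⁻¹
  have hf z : f z = (z * u⁻¹).im := rfl
  refine dense_of_dense_map (f := f.toAddMonoidHom) ?_ ?_ ?_ (himage f fun h => ?_)
  · exact isOpenMap_im.comp (Homeomorph.mulRight₀ u⁻¹ (inv_ne_zero hu)).isOpenMap
  · exact continuous_im.comp (continuous_mul_const _)
  · intro z (hz : (z * u⁻¹).im = 0)
    have hreal : z * u⁻¹ = ((z * u⁻¹).re : ℂ) := Complex.ext rfl hz
    rw [← inv_mul_cancel_right₀ hu z, hreal, ← real_smul]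
    exact hline _
  · simpa [hf, hu] using LinearMap.congr_fun h (I * u)

theorem not_discreteTopology_of_irrational_re {H : AddSubgroup ℂ} (h1 : 1 ∈ H)
    (hI : I ∈ H) {ξ : ℂ} (hξ : ξ ∈ H) (hirr : Irrational ξ.re) : ¬DiscreteTopology H := by
  intro hdisc
  let s : ℕ → ℂ := fun n => n • ξ - ⌊n * ξ.re⌋ • 1 - ⌊n * ξ.im⌋ • I
  have hs n : s n = (Int.fract (n * ξ.re) : ℝ) + (Int.fract (n * ξ.im) : ℝ) * I := by
    apply Complex.ext <;> simp [s, ← Int.self_sub_floor]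
  have hsH n : s n ∈ H := sub_mem (sub_mem (nsmul_mem hξ n) (zsmul_mem h1 _)) (zsmul_mem hI _)
  have hs_bdd n : s n ∈ closedBall (0 : ℂ) 2 := by
    rw [mem_closedBall_zero_iff, hs]
    refine (norm_le_abs_re_add_abs_im _).trans ?_
    simp only [add_re, add_im, ofReal_re, ofReal_im, mul_re, mul_im, I_re, I_im, mul_zero, mul_one,
      sub_zero, zero_add, add_zero, Int.abs_fract]
    linarith [Int.fract_lt_one (n * ξ.re), Int.fract_lt_one (n * ξ.im)]
  have hs_inj : Function.Injective s := by
    intro m n hmn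
    obtain ⟨z, hz⟩ := Int.fract_eq_fract.mp (by simpa [hs] using congrArg re hmn)
    by_contra hne
    refine (hirr.intCast_mul (sub_ne_zero.mpr (Int.ofNat_inj.not.mpr hne))).ne_int z ?_
    push_cast
    linarith
  have hfin : (closedBall (0 : ℂ) 2 ∩ H).Finite := finite_isBounded_inter_isClosed
    (isDiscrete_iff_discreteTopology.mpr hdisc) isBounded_closedBall isClosed_of_discrete
  exact Set.infinite_range_of_injective hs_inj
    (hfin.subset (Set.range_subset_iff.mpr fun n => ⟨hs_bdd n, hsH n⟩))

end AddSubgroup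

theorem dense_closure_triple_of_independent {α β : ℝ}
    (hind : ∀ k l m : ℤ, (k : ℝ) * α + (l : ℝ) * β + (m : ℝ) = 0 → k = 0 ∧ l = 0 ∧ m = 0)
    {p q : ℝ} (hpq : p ≠ 0 ∨ q ≠ 0) :
    Dense (AddSubgroup.closure {p, q, α * p + β * q} : Set ℝ) := by
  refine (AddSubgroup.dense_or_cyclic _).resolve_right ?_
  rintro ⟨c, hc⟩
  have hmul x (hx : x ∈ ({p, q, α * p + β * q} : Set ℝ)) : ∃ n : ℤ, n * c = x := by
    simpa [hc, AddSubgroup.mem_closure_singleton, zsmul_eq_mul] using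
      AddSubgroup.subset_closure hx
  obtain ⟨a, rfl⟩ := hmul p (by simp)
  obtain ⟨b, rfl⟩ := hmul q (by simp)
  obtain ⟨e, he⟩ := hmul (α * (a * c) + β * (b * c)) (by simp)
  have hc0 : c ≠ 0 := by rintro rfl; simp at hpq
  obtain ⟨rfl, rfl, -⟩ :=
    hind a b (-e) (mul_right_cancel₀ hc0 (by push_cast; linear_combination -he))
  simp at hpq

theorem not_dense_closure_of_relation {α β : ℝ} {k l m : ℤ} (hkl : k ≠ 0 ∨ l ≠ 0)
    (hrel : (k : ℝ) * α + (l : ℝ) * β + (m : ℝ) = 0) :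
    ¬Dense (AddSubgroup.closure {1, I, (α : ℂ) + β * I} : Set ℂ) := by
  let f : ℂ →ₗ[ℝ] ℝ := (k : ℝ) • reLm + (l : ℝ) • imLm
  have hf z : f z = k * z.re + l * z.im := rfl
  have hf0 : f ≠ 0 := fun h => by
    rcases hkl with hk | hl
    · exact hk (by simpa [hf] using LinearMap.congr_fun h 1)
    · exact hl (by simpa [hf] using LinearMap.congr_fun h I)
  have hintegral : AddSubgroup.closure {1, I, (α : ℂ) + β * I} ≤
      (Int.castAddHom ℝ).range.comap f.toAddMonoidHom := by
    rw [AddSubgroup.closure_le]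
    rintro z (rfl | rfl | rfl)
    · exact ⟨k, by simp [hf]⟩
    · exact ⟨l, by simp [hf]⟩
    · exact ⟨-m, by simp [hf]; linarith⟩
  obtain ⟨x, hx⟩ := LinearMap.surjective_of_ne_zero hf0 (1 / 2)
  intro hdense
  obtain ⟨n, hn⟩ : f x ∈ Set.range ((↑) : ℤ → ℝ) := closure_minimal hintegral
    (Real.isClosed_range_intCast.preimage f.continuous_of_finiteDimensional) (hdense x)
  rw [hx] at hn
  have : 2 * n = 1 := by exact_mod_cast (by linarith : (2 : ℝ) * n = 1)
  omega

theorem dense_image_closure_of_independent {α β : ℝ}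
    (hind : ∀ k l m : ℤ, (k : ℝ) * α + (l : ℝ) * β + (m : ℝ) = 0 → k = 0 ∧ l = 0 ∧ m = 0)
    {f : ℂ →ₗ[ℝ] ℝ} (hf : f ≠ 0) :
    Dense (f '' AddSubgroup.closure {1, I, (α : ℂ) + β * I}) := by
  have hξ : f ((α : ℂ) + β * I) = α * f 1 + β * f I := by
    rw [← mul_one (α : ℂ), ← real_smul, ← real_smul, map_add, map_smul, map_smul, smul_eq_mul,
      smul_eq_mul]
  have hne : f 1 ≠ 0 ∨ f I ≠ 0 := by
    by_contra! h
    exact hf (basisOneI.ext fun i => by fin_cases i <;> simp [h])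
  rw [← LinearMap.toAddMonoidHom_coe, ← AddSubgroup.coe_map, AddMonoidHom.map_closure]
  simpa only [Set.image_insert_eq, Set.image_singleton, LinearMap.toAddMonoidHom_coe, hξ] using
    dense_closure_triple_of_independent hind hne

/-- Let α, β be real numbers and ξ = α + iβ ∈ ℂ. The additive
subgroup of ℂ generated by {1, i, ξ} is dense in ℂ iff for all integers k, l, m,
kα + lβ + m = 0 implies k = l = m = 0. -/
theorem dense_addSubgroup_iff (α β : ℝ) (ξ : ℂ) (hξ : ξ = (α : ℂ) + (β : ℂ) * Complex.I) :
    Dense ((AddSubgroup.closure {1, Complex.I, ξ} : AddSubgroup ℂ) : Set ℂ) ↔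
      (∀ k l m : ℤ, (k : ℝ) * α + (l : ℝ) * β + (m : ℝ) = 0 → k = 0 ∧ l = 0 ∧ m = 0) := by
  subst hξ
  constructor
  · intro hdense k l m hrel
    by_cases hkl : k = 0 ∧ l = 0
    · obtain ⟨rfl, rfl⟩ := hkl
      exact ⟨rfl, rfl, by exact_mod_cast (by simpa using hrel : (m : ℝ) = 0)⟩
    · exact absurd hdense (not_dense_closure_of_relation (not_and_or.mp hkl) hrel)
  · intro hind
    have hirr : Irrational α := (irrational_iff_ne_rational α).mpr fun a b hb h =>
      hb (hind b 0 (-a) (by rw [h]; field_simp; push_cast; ring)).1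
    have hdisc : ¬DiscreteTopology (AddSubgroup.closure {1, I, (α : ℂ) + β * I}) :=
      AddSubgroup.not_discreteTopology_of_irrational_re (ξ := α + β * I)
        (AddSubgroup.subset_closure (by simp)) (AddSubgroup.subset_closure (by simp))
        (AddSubgroup.subset_closure (by simp)) (by simpa using hirr)
    exact AddSubgroup.dense_of_not_discreteTopology_of_dense_image hdisc
      fun f hf => dense_image_closure_of_independent hind hf
end

section
/- Let α, β be real numbers satisfying condition (*), let ξ = α + iβ, and let G be the additive subgroup of ℂ generated by {1, i, ξ}. Then for every nonzero z ∈ ℂ and every R > 0, the set of elements g of G lying on the real line through z (i.e. g = tz for some t ∈ ℝ) with |g| ≤ R is finite. -/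
/-!
Write the points of `G` as `g = k + l i + m ξ` with `(k, l, m) ∈ ℤ³`. If two of them lie on a common
line through the origin, `g = s g₁` with `s` real, then `Re g · Im g₁ - Im g · Re g₁ = 0` is an
integer relation between `α`, `β` and `1` whose coefficients are the components of the cross
product `(k, l, m) × (k₁, l₁, m₁)`. By (*) the cross product vanishes, and together with `g = s g₁`
this forces `(k, l, m) = s (k₁, l₁, m₁)`. Fixing one nonzero `g₁` on the line, `‖g‖ ≤ R` gives
`|s| ≤ R / ‖g₁‖`, so the coefficients of `g` lie in a bounded box of `ℤ³`.
-/

open Complex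

theorem AddSubgroup.mem_closure_triple {M : Type*} [AddCommGroup M] {a b c g : M} :
    g ∈ closure {a, b, c} ↔ ∃ k l m : ℤ, k • a + l • b + m • c = g := by
  rw [← Set.singleton_union, closure_union, mem_sup]
  simp [mem_closure_singleton, mem_closure_pair, add_assoc]

theorem coeff_cross_eq_of_eq_real_mul {α β : ℝ}
    (hstar : ∀ k l m : ℤ, (k : ℝ) * α + (l : ℝ) * β + (m : ℝ) = 0 → k = 0 ∧ l = 0 ∧ m = 0)
    {k l m k₁ l₁ m₁ : ℤ} {s : ℝ}
    (h : (k : ℂ) + l * I + m * (α + β * I) = s * (k₁ + l₁ * I + m₁ * (α + β * I))) :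
    (k : ℝ) * m₁ = m * k₁ ∧ (l : ℝ) * m₁ = m * l₁ := by
  have hre : (k : ℝ) + m * α = s * (k₁ + m₁ * α) := by simpa using congrArg re h
  have him : (l : ℝ) + m * β = s * (l₁ + m₁ * β) := by simpa using congrArg im h
  obtain ⟨hl, hk, -⟩ := hstar (m * l₁ - l * m₁) (k * m₁ - m * k₁) (k * l₁ - l * k₁) (by
    push_cast
    linear_combination (l₁ + m₁ * β) * hre - (k₁ + m₁ * α) * him)
  exact ⟨mod_cast sub_eq_zero.mp hk, mod_cast (sub_eq_zero.mp hl).symm⟩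

theorem coeff_eq_real_mul_of_cross_eq {ξ : ℂ} {x y w x₁ y₁ w₁ s : ℝ}
    (h : (x : ℂ) + y * I + w * ξ = s * (x₁ + y₁ * I + w₁ * ξ))
    (h₁ : (x₁ : ℂ) + y₁ * I + w₁ * ξ ≠ 0) (hx : x * w₁ = w * x₁) (hy : y * w₁ = w * y₁) :
    x = s * x₁ ∧ y = s * y₁ ∧ w = s * w₁ := by
  have hu : ((x - s * x₁ : ℝ) : ℂ) + (y - s * y₁ : ℝ) * I + (w - s * w₁ : ℝ) * ξ = 0 := by
    push_cast; linear_combination h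
  -- by the two cross relations, `(w - s w₁) (x₁, y₁, w₁) = w₁ (x - s x₁, y - s y₁, w - s w₁)`
  have hw : ((w - s * w₁ : ℝ) : ℂ) * (x₁ + y₁ * I + w₁ * ξ) = 0 := by
    have hx' : (x : ℂ) * w₁ = w * x₁ := by exact_mod_cast hx
    have hy' : (y : ℂ) * w₁ = w * y₁ := by exact_mod_cast hy
    push_cast at hu ⊢
    linear_combination w₁ * hu - hx' - I * hy'
  have hw₀ : w - s * w₁ = 0 := by exact_mod_cast (mul_eq_zero.mp hw).resolve_right h₁
  rw [hw₀, ofReal_zero, zero_mul, add_zero] at hu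
  have hx₀ : x - s * x₁ = 0 := by simpa using congrArg re hu
  have hy₀ : y - s * y₁ = 0 := by simpa using congrArg im hu
  exact ⟨by linarith, by linarith, by linarith⟩

theorem exists_eq_real_mul_of_mem_line {z g g₁ : ℂ} {t t₁ R : ℝ} (hg : g = t * z)
    (hg₁ : g₁ = t₁ * z) (hg₁0 : g₁ ≠ 0) (hgR : ‖g‖ ≤ R) : ∃ s : ℝ, g = s * g₁ ∧ |s| ≤ R / ‖g₁‖ := by
  have ht₁ : (t₁ : ℂ) ≠ 0 := by rintro h; simp [hg₁, h] at hg₁0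
  have hs : g = ((t / t₁ : ℝ) : ℂ) * g₁ := by
    rw [hg, hg₁]; push_cast; field_simp
  refine ⟨t / t₁, hs, ?_⟩
  rw [le_div_iff₀ (norm_pos_iff.mpr hg₁0)]
  rwa [hs, norm_mul, norm_real, Real.norm_eq_abs] at hgR

theorem abs_le_ceil_of_cast_eq_mul {k k₁ : ℤ} {s C : ℝ} (h : (k : ℝ) = s * k₁) (hs : |s| ≤ C) :
    |k| ≤ ⌈C * |(k₁ : ℝ)|⌉ := by
  have hk : |(k : ℝ)| ≤ C * |(k₁ : ℝ)| := by
    rw [h, abs_mul]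
    exact mul_le_mul_of_nonneg_right hs (abs_nonneg _)
  exact_mod_cast hk.trans (Int.le_ceil _)

theorem coeff_eq_real_mul_of_zsmul_eq_real_mul {α β : ℝ}
    (hstar : ∀ k l m : ℤ, (k : ℝ) * α + (l : ℝ) * β + (m : ℝ) = 0 → k = 0 ∧ l = 0 ∧ m = 0)
    {ξ : ℂ} (hξ : ξ = α + β * I) {k l m k₁ l₁ m₁ : ℤ} {s : ℝ}
    (h : k • (1 : ℂ) + l • I + m • ξ = s * (k₁ • (1 : ℂ) + l₁ • I + m₁ • ξ))
    (h₁ : k₁ • (1 : ℂ) + l₁ • I + m₁ • ξ ≠ 0) :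
    (k : ℝ) = s * k₁ ∧ (l : ℝ) = s * l₁ ∧ (m : ℝ) = s * m₁ := by
  simp only [zsmul_eq_mul, mul_one] at h h₁
  obtain ⟨hkm, hlm⟩ := coeff_cross_eq_of_eq_real_mul hstar (hξ ▸ h)
  exact coeff_eq_real_mul_of_cross_eq (mod_cast h) (mod_cast h₁) hkm hlm

theorem finite_inter_line_ball_general (α β : ℝ)
    (hstar : ∀ k l m : ℤ, (k : ℝ) * α + (l : ℝ) * β + (m : ℝ) = 0 → k = 0 ∧ l = 0 ∧ m = 0)
    (ξ : ℂ) (hξ : ξ = (α : ℂ) + (β : ℂ) * Complex.I)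
    (z : ℂ) (R : ℝ) :
    {g : ℂ | g ∈ AddSubgroup.closure {1, Complex.I, ξ} ∧
      (∃ t : ℝ, g = (t : ℂ) * z) ∧ ‖g‖ ≤ R}.Finite := by
  by_cases h0 : ∀ g ∈ AddSubgroup.closure {1, I, ξ}, (∃ t : ℝ, g = t * z) → g = 0
  · exact (Set.finite_singleton 0).subset fun g hg => h0 g hg.1 hg.2.1
  push Not at h0
  obtain ⟨g₁, hg₁G, ⟨t₁, hg₁z⟩, hg₁0⟩ := h0
  obtain ⟨k₁, l₁, m₁, rfl⟩ := AddSubgroup.mem_closure_triple.mp hg₁G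
  let N (n : ℤ) : ℤ := ⌈R / ‖k₁ • 1 + l₁ • I + m₁ • ξ‖ * |(n : ℝ)|⌉
  have hbox := (Set.finite_Icc (-N k₁) (N k₁)).prod
    ((Set.finite_Icc (-N l₁) (N l₁)).prod (Set.finite_Icc (-N m₁) (N m₁)))
  refine (hbox.image fun v => v.1 • 1 + v.2.1 • I + v.2.2 • ξ).subset ?_
  rintro g ⟨hgG, ⟨t, hgz⟩, hgR⟩
  obtain ⟨k, l, m, rfl⟩ := AddSubgroup.mem_closure_triple.mp hgG
  obtain ⟨s, hs, hsN⟩ := exists_eq_real_mul_of_mem_line hgz hg₁z hg₁0 hgR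
  obtain ⟨hk, hl, hm⟩ := coeff_eq_real_mul_of_zsmul_eq_real_mul hstar hξ hs hg₁0
  exact ⟨(k, l, m), ⟨abs_le.mp (abs_le_ceil_of_cast_eq_mul hk hsN),
    abs_le.mp (abs_le_ceil_of_cast_eq_mul hl hsN),
    abs_le.mp (abs_le_ceil_of_cast_eq_mul hm hsN)⟩, rfl⟩

/-- Let α, β satisfy condition (*), ξ = α + iβ, and let G be the
additive subgroup of ℂ generated by {1, i, ξ}. Then for every nonzero z ∈ ℂ and
every R > 0, the set of elements of G lying on the real line through z with
modulus ≤ R is finite. -/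
theorem finite_inter_line_ball (α β : ℝ)
    (hstar : ∀ k l m : ℤ, (k : ℝ) * α + (l : ℝ) * β + (m : ℝ) = 0 → k = 0 ∧ l = 0 ∧ m = 0)
    (ξ : ℂ) (hξ : ξ = (α : ℂ) + (β : ℂ) * Complex.I)
    (z : ℂ) (hz : z ≠ 0) (R : ℝ) (hR : 0 < R) :
    {g : ℂ | g ∈ AddSubgroup.closure {1, Complex.I, ξ} ∧
      (∃ t : ℝ, g = (t : ℂ) * z) ∧ ‖g‖ ≤ R}.Finite :=
  finite_inter_line_ball_general α β hstar ξ hξ z R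
end

section
/- Let α, β be real numbers satisfying condition (*), let ξ = α + iβ, and let G be the additive subgroup of ℂ generated by {1, i, ξ}. Then 0 is an accumulation point of G: for every ε > 0 there exists g ∈ G with 0 < |g| < ε. -/
/-!
A discrete subgroup of a finite-dimensional real vector space has `ℤ`-rank at most the
dimension. Since `α` is irrational, `1, i, ξ` are `ℤ`-linearly independent, so the group they
generate in `ℂ ≅ ℝ²` has rank 3 and cannot be discrete; in a normed group this means that
`0` is not isolated in it.
-/

open Module Submodule Complex

theorem AddSubgroup.exists_norm_pos_lt_of_not_discreteTopology {E : Type*} [NormedAddCommGroup E]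
    {G : AddSubgroup E} (hG : ¬ DiscreteTopology G) {ε : ℝ} (hε : 0 < ε) :
    ∃ g ∈ G, 0 < ‖g‖ ∧ ‖g‖ < ε := by
  by_contra! h
  refine hG (discreteTopology_iff_isOpen_singleton_zero.mpr
    (Metric.isOpen_singleton_iff.mpr ⟨ε, hε, fun g hg => ?_⟩))
  by_contra hg0
  have := h g g.2 (norm_pos_iff.mpr (by exact_mod_cast hg0))
  rw [dist_zero_right, AddSubgroup.coe_norm] at hg
  linarith

theorem not_discreteTopology_span_int_of_finrank_lt {E ι : Type*} [NormedAddCommGroup E]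
    [NormedSpace ℝ E] [FiniteDimensional ℝ E] [Fintype ι] {v : ι → E}
    (hv : LinearIndependent ℤ v) (hlt : finrank ℝ E < Fintype.card ι) :
    ¬ DiscreteTopology (span ℤ (Set.range v)) := by
  intro h
  have hrank := Real.finrank_eq_int_finrank_of_discrete h
  rw [Set.finrank, Set.finrank, finrank_span_eq_card hv] at hrank
  have := Submodule.finrank_le (span ℝ (Set.range v))
  omega

theorem exists_norm_pos_lt_of_linearIndependent_int {E ι : Type*} [NormedAddCommGroup E]
    [NormedSpace ℝ E] [FiniteDimensional ℝ E] [Fintype ι] {v : ι → E}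
    (hv : LinearIndependent ℤ v) (hlt : finrank ℝ E < Fintype.card ι) {ε : ℝ} (hε : 0 < ε) :
    ∃ g ∈ AddSubgroup.closure (Set.range v), 0 < ‖g‖ ∧ ‖g‖ < ε := by
  refine AddSubgroup.exists_norm_pos_lt_of_not_discreteTopology ?_ hε
  rw [← span_int_eq_addSubgroupClosure]
  exact not_discreteTopology_span_int_of_finrank_lt hv hlt

theorem Complex.linearIndependent_int_one_I_of_irrational {z : ℂ}
    (hz : Irrational z.re ∨ Irrational z.im) :
    LinearIndependent ℤ ![1, I, z] := by
  rw [Fintype.linearIndependent_iff]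
  intro c hc
  simp only [Fin.sum_univ_three, Matrix.cons_val] at hc
  have hre := congrArg re hc
  have him := congrArg im hc
  simp only [Fin.isValue, zsmul_eq_mul, mul_one, add_re, intCast_re, mul_re, I_re, mul_zero,
    intCast_im, I_im, sub_self, add_zero, zero_mul, sub_zero, zero_re, add_im, mul_im, zero_add,
    zero_im] at hre him
  have hc2 : c 2 = 0 := by
    by_contra h
    rcases hz with hx | hx
    · exact ((hx.intCast_mul h).intCast_add (c 0)).ne_zero hre
    · exact ((hx.intCast_mul h).intCast_add (c 1)).ne_zero him
  simp only [hc2, Int.cast_zero, zero_mul, add_zero, Int.cast_eq_zero] at hre him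
  intro i
  fin_cases i <;> assumption

/-- Let α, β satisfy condition (*), ξ = α + iβ, and let G be the
additive subgroup of ℂ generated by {1, i, ξ}. Then 0 is an accumulation point of G:
for every ε > 0 there exists g ∈ G with 0 < |g| < ε. -/
theorem zero_accumulation_point (α β : ℝ)
    (hstar : ∀ k l m : ℤ, (k : ℝ) * α + (l : ℝ) * β + (m : ℝ) = 0 → k = 0 ∧ l = 0 ∧ m = 0)
    (ξ : ℂ) (hξ : ξ = (α : ℂ) + (β : ℂ) * Complex.I) :
    ∀ ε : ℝ, 0 < ε → ∃ g : ℂ, g ∈ AddSubgroup.closure {1, Complex.I, ξ} ∧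
      0 < ‖g‖ ∧ ‖g‖ < ε := by
  intro ε hε
  have hα : Irrational α := by
    refine (irrational_iff_ne_rational α).mpr fun a b hb hab => hb (hstar b 0 (-a) ?_).1
    rw [hab]
    field_simp
    push_cast
    ring
  have hξre : ξ.re = α := by simp [hξ]
  have hrange : Set.range ![1, I, ξ] = {1, I, ξ} := by
    simp only [Matrix.range_cons, Matrix.range_empty, Set.union_empty, Set.singleton_union]
  have hind := linearIndependent_int_one_I_of_irrational (.inl (hξre ▸ hα))
  have hdim : finrank ℝ ℂ < Fintype.card (Fin 3) := by simp [finrank_real_complex]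
  obtain ⟨g, hg, hpos, hlt⟩ := exists_norm_pos_lt_of_linearIndependent_int hind hdim hε
  exact ⟨g, hrange ▸ hg, hpos, hlt⟩
end

section
/- Let u, v ∈ ℂ with Im(u/v) ≠ 0, let α, β be real numbers, and let w = αu + βv. The additive subgroup of ℂ generated by {u, v, w} is dense in ℂ if and only if for all integers k, l, m, the equation kα + lβ + m = 0 implies k = l = m = 0. -/
/-!
A subgroup `G` of `ℂ ≅ ℝ²` is dense exactly when no nonzero real linear functional takes only
integer values on `G`. If the closure `H` of `G` is discrete, it is a lattice in its real span
and a coordinate functional of a lattice basis (or a functional vanishing on the span) is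
integral on it. Otherwise `H` contains a real line `ℝ d`, and projecting along that line reduces
the question to the fact that a subgroup of `ℝ` is dense or cyclic.

When `u, v` is a real basis of `ℂ`, a functional `φ` is determined by `k = φ u` and `l = φ v`,
and `φ w = k α + l β` is an integer `-m` exactly when `k α + l β + m = 0`.
-/

open Filter Topology

theorem LinearMap.eq_zero_of_range_subset_range_intCast {E : Type*} [AddCommGroup E]
    [Module ℝ E] (φ : E →ₗ[ℝ] ℝ) (h : Set.range φ ⊆ Set.range ((↑) : ℤ → ℝ)) : φ = 0 := by
  ext x
  by_contra hx
  rw [zero_apply] at hx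
  obtain ⟨n, hn⟩ := h ⟨(2 * φ x)⁻¹ • x, rfl⟩
  have : (2 * n : ℝ) = 1 := by rw [hn, map_smul, smul_eq_mul]; field_simp
  have : 2 * n = 1 := by exact_mod_cast this
  omega

theorem LinearMap.eq_zero_of_dense_of_subset_preimage_range_intCast {E : Type*}
    [TopologicalSpace E] [AddCommGroup E] [Module ℝ E] {φ : E →ₗ[ℝ] ℝ} (hφ : Continuous φ)
    {S : Set E} (hS : Dense S) (h : S ⊆ φ ⁻¹' Set.range ((↑) : ℤ → ℝ)) : φ = 0 := by
  refine φ.eq_zero_of_range_subset_range_intCast ?_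
  rintro _ ⟨x, rfl⟩
  exact closure_minimal h (Int.isClosedEmbedding_coe_real.isClosed_range.preimage hφ) (hS x)

theorem AddSubgroup.closure_subset_preimage_range_intCast_iff {E : Type*} [AddCommGroup E]
    [Module ℝ E] {φ : E →ₗ[ℝ] ℝ} {S : Set E} :
    (closure S : Set E) ⊆ φ ⁻¹' Set.range ((↑) : ℤ → ℝ) ↔ S ⊆ φ ⁻¹' Set.range ((↑) : ℤ → ℝ) :=
  closure_le ((Int.castAddHom ℝ).range.comap φ.toAddMonoidHom)

theorem AddSubgroup.exists_ne_zero_subset_preimage_range_intCast_of_discreteTopology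
    {E : Type*} [NormedAddCommGroup E] [NormedSpace ℝ E] [FiniteDimensional ℝ E] [Nontrivial E]
    (H : AddSubgroup E) [DiscreteTopology H] :
    ∃ φ : E →ₗ[ℝ] ℝ, φ ≠ 0 ∧ (H : Set E) ⊆ φ ⁻¹' Set.range ((↑) : ℤ → ℝ) := by
  let L := H.toIntSubmodule
  have : DiscreteTopology L := ‹DiscreteTopology H›
  by_cases hL : Submodule.span ℝ (L : Set E) = ⊤
  · have : IsZLattice ℝ L := ⟨hL⟩
    let b₀ := Module.Free.chooseBasis ℤ L
    let b := b₀.ofZLatticeBasis ℝ L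
    obtain ⟨i⟩ := b.index_nonempty
    refine ⟨b.coord i, fun h ↦ by simpa using congr($h (b i)), fun x hx ↦ ?_⟩
    exact ⟨b₀.repr ⟨x, hx⟩ i, (b₀.ofZLatticeBasis_repr_apply ℝ L ⟨x, hx⟩ i).symm⟩
  · obtain ⟨φ, hφ, hspan⟩ :=
      Submodule.exists_dual_map_eq_bot_of_lt_top (lt_top_iff_ne_top.2 hL) inferInstance
    refine ⟨φ, hφ, fun x hx ↦ ⟨0, ?_⟩⟩
    have : φ x ∈ (Submodule.span ℝ (L : Set E)).map φ :=
      Submodule.mem_map_of_mem (Submodule.subset_span hx)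
    rw [hspan, Submodule.mem_bot] at this
    simp [this]

theorem AddSubgroup.dense_or_exists_ne_zero_subset_preimage_range_intCast {E : Type*}
    [TopologicalSpace E] [AddCommGroup E] [IsTopologicalAddGroup E] [Module ℝ E]
    [ContinuousSMul ℝ E] (H : AddSubgroup E) (ψ : E →ₗ[ℝ] ℝ)
    (hψ : Function.Surjective ψ) (hker : ∀ x, ψ x = 0 → x ∈ H) :
    Dense (H : Set E) ∨ ∃ φ : E →ₗ[ℝ] ℝ, φ ≠ 0 ∧ (H : Set E) ⊆ φ ⁻¹' Set.range ((↑) : ℤ → ℝ) := by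
  rcases (H.map ψ.toAddMonoidHom).dense_or_cyclic with hdense | ⟨c, hc⟩
  · left
    convert hdense.preimage (ψ.isOpenMap_of_finiteDimensional hψ)
    refine Set.Subset.antisymm (fun x hx ↦ ⟨x, hx, rfl⟩) ?_
    rintro x ⟨y, hy, hxy⟩
    simpa using H.add_mem hy (hker (x - y) (by simp [map_sub, ← hxy]))
  · right
    have hcyc : ∀ x ∈ H, ∃ n : ℤ, ψ x = n * c := fun x hx ↦ by
      obtain ⟨n, hn⟩ := AddSubgroup.mem_closure_singleton.1 (hc ▸ mem_map_of_mem _ hx)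
      exact ⟨n, by rw [← zsmul_eq_mul, hn]; rfl⟩
    obtain ⟨a, ha, hmul⟩ : ∃ a : ℝ, a ≠ 0 ∧ ∀ x ∈ H, ∃ n : ℤ, ψ x = n * a := by
      rcases eq_or_ne c 0 with rfl | hc0
      · exact ⟨1, one_ne_zero, fun x hx ↦ ⟨0, by simpa using hcyc x hx⟩⟩
      · exact ⟨c, hc0, hcyc⟩
    refine ⟨a⁻¹ • ψ, fun h ↦ ?_, fun x hx ↦ ?_⟩
    · obtain ⟨x, hx⟩ := hψ 1
      simpa [hx, ha] using congr($h x)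
    · obtain ⟨n, hn⟩ := hmul x hx
      exact ⟨n, by rw [LinearMap.smul_apply, hn, smul_eq_mul]; field_simp⟩

theorem tendsto_intFloor_div_mul_nhdsGT_zero (t : ℝ) :
    Tendsto (fun c : ℝ ↦ (⌊t / c⌋ : ℝ) * c) (𝓝[>] 0) (𝓝 t) := by
  have hlow : Tendsto (fun c : ℝ ↦ t - c) (𝓝[>] 0) (𝓝 t) :=
    ((continuous_const.sub continuous_id).tendsto' 0 t (sub_zero t)).mono_left nhdsWithin_le_nhds
  refine tendsto_of_tendsto_of_tendsto_of_le_of_le' hlow tendsto_const_nhds ?_ ?_ <;>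
    filter_upwards [self_mem_nhdsWithin] with c (hc : 0 < c)
  · have := (div_lt_iff₀ hc).1 (Int.lt_floor_add_one (t / c))
    linarith
  · exact (le_div_iff₀ hc).1 (Int.floor_le _)

theorem AddSubgroup.nhdsNE_zero_inf_principal_neBot {E : Type*} [NormedAddCommGroup E]
    {H : AddSubgroup E} (hH : ¬ DiscreteTopology H) : (𝓝[≠] (0 : E) ⊓ 𝓟 H).NeBot := by
  rw [discreteTopology_iff_isOpen_singleton_zero, Metric.isOpen_singleton_iff] at hH
  push Not at hH
  refine ⟨fun h ↦ ?_⟩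
  obtain ⟨ε, hε, hsub⟩ := Metric.mem_nhdsWithin_iff.1 (inf_principal_eq_bot.1 h)
  obtain ⟨y, hy, hy0⟩ := hH ε hε
  exact hsub ⟨mem_ball_zero_iff.2 (by simpa using hy), by simpa using hy0⟩ y.2

theorem AddSubgroup.exists_ne_zero_forall_smul_mem_of_not_discreteTopology {E : Type*}
    [NormedAddCommGroup E] [NormedSpace ℝ E] [ProperSpace E] {H : AddSubgroup E}
    (hH : IsClosed (H : Set E)) (hnd : ¬ DiscreteTopology H) :
    ∃ d : E, d ≠ 0 ∧ ∀ t : ℝ, t • d ∈ H := by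
  have := nhdsNE_zero_inf_principal_neBot hnd
  let 𝒰 := Ultrafilter.of (𝓝[≠] (0 : E) ⊓ 𝓟 H)
  have h𝒰 : ↑𝒰 ≤ 𝓝[≠] (0 : E) ⊓ 𝓟 H := Ultrafilter.of_le _
  have hnorm : Tendsto (‖·‖) (𝒰 : Filter E) (𝓝[>] 0) :=
    (tendsto_norm_nhdsNE_zero (E := E)).mono_left (h𝒰.trans inf_le_left)
  have hpos : ∀ᶠ x in (𝒰 : Filter E), 0 < ‖x‖ := hnorm self_mem_nhdsWithin
  obtain ⟨d, hd, hdir⟩ := (isCompact_sphere (0 : E) 1).ultrafilter_le_nhds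
    (𝒰.map fun x ↦ ‖x‖⁻¹ • x) (by
      rw [Ultrafilter.coe_map, le_principal_iff, Filter.mem_map]
      filter_upwards [hpos] with x hx
      simp [norm_smul, hx.ne'])
  refine ⟨d, ne_zero_of_mem_unit_sphere ⟨d, hd⟩, fun t ↦ hH.mem_of_tendsto
    (b := 𝒰) (f := fun x ↦ ⌊t / ‖x‖⌋ • x) ?_ ?_⟩
  · -- `⌊t / ‖x‖⌋ • x = (⌊t / ‖x‖⌋ * ‖x‖) • (‖x‖⁻¹ • x)`, where the first factor tends to `t`
    refine (((tendsto_intFloor_div_mul_nhdsGT_zero t).comp hnorm).smul hdir).congr' ?_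
    filter_upwards [hpos] with x hx
    simp [smul_smul, mul_assoc, mul_inv_cancel₀ hx.ne', ← Int.cast_smul_eq_zsmul ℝ]
  · filter_upwards [h𝒰 (mem_inf_of_right (mem_principal_self _))] with x hx
    exact H.zsmul_mem hx _

theorem Complex.exists_surjective_ker_le_span_singleton {d : ℂ} (hd : d ≠ 0) :
    ∃ ψ : ℂ →ₗ[ℝ] ℝ, Function.Surjective ψ ∧ LinearMap.ker ψ ≤ Submodule.span ℝ {d} := by
  refine ⟨Complex.imLm ∘ₗ LinearMap.mulRight ℝ d⁻¹, fun t ↦ ⟨t * I * d, by simp [hd]⟩,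
    fun z hz ↦ Submodule.mem_span_singleton.2 ⟨(z * d⁻¹).re, ?_⟩⟩
  have hz : (z * d⁻¹).im = 0 := hz
  have hreal : ((z * d⁻¹).re : ℂ) = z * d⁻¹ :=
    Complex.ext (ofReal_re _) (by rw [ofReal_im, hz])
  rw [Complex.real_smul, hreal, inv_mul_cancel_right₀ hd]

theorem Complex.dense_addSubgroup_iff_forall_linearMap_eq_zero (G : AddSubgroup ℂ) :
    Dense (G : Set ℂ) ↔
      ∀ φ : ℂ →ₗ[ℝ] ℝ, (G : Set ℂ) ⊆ φ ⁻¹' Set.range ((↑) : ℤ → ℝ) → φ = 0 := by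
  refine ⟨fun hG φ ↦ φ.eq_zero_of_dense_of_subset_preimage_range_intCast
    φ.continuous_of_finiteDimensional hG, fun h ↦ ?_⟩
  set H := G.topologicalClosure
  have hGH : (G : Set ℂ) ⊆ H := G.le_topologicalClosure
  have hH : ∀ φ : ℂ →ₗ[ℝ] ℝ, φ ≠ 0 → ¬ (H : Set ℂ) ⊆ φ ⁻¹' Set.range ((↑) : ℤ → ℝ) :=
    fun φ hφ hHφ ↦ hφ (h φ (hGH.trans hHφ))
  rw [← dense_closure, ← G.topologicalClosure_coe]
  by_cases hdisc : DiscreteTopology H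
  · obtain ⟨φ, hφ, hHφ⟩ := H.exists_ne_zero_subset_preimage_range_intCast_of_discreteTopology
    exact absurd hHφ (hH φ hφ)
  obtain ⟨d, hd, hline⟩ := AddSubgroup.exists_ne_zero_forall_smul_mem_of_not_discreteTopology
    G.isClosed_topologicalClosure hdisc
  obtain ⟨ψ, hψ, hker⟩ := Complex.exists_surjective_ker_le_span_singleton hd
  refine (H.dense_or_exists_ne_zero_subset_preimage_range_intCast ψ hψ fun z hz ↦ ?_)
    |>.resolve_right fun ⟨φ, hφ, hHφ⟩ ↦ hH φ hφ hHφ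
  obtain ⟨t, rfl⟩ := Submodule.mem_span_singleton.1 (hker hz)
  exact hline t

theorem Complex.linearIndependent_pair_of_im_div_ne_zero {u v : ℂ} (huv : (u / v).im ≠ 0) :
    LinearIndependent ℝ ![u, v] := by
  have hv : v ≠ 0 := by rintro rfl; simp at huv
  refine LinearIndependent.pair_iff.2 fun s t hst ↦ ?_
  have hs : s * (u / v).im = 0 := by
    simpa [Complex.real_smul, add_div, mul_div_assoc, hv] using congr(($hst / v).im)
  obtain rfl : s = 0 := (mul_eq_zero.1 hs).resolve_right huv
  simpa [hv] using hst

theorem Module.Basis.forall_eq_zero_of_subset_preimage_range_intCast_iff {E : Type*}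
    [AddCommGroup E] [Module ℝ E] (b : Module.Basis (Fin 2) ℝ E) (α β : ℝ) :
    (∀ φ : E →ₗ[ℝ] ℝ, {b 0, b 1, α • b 0 + β • b 1} ⊆ φ ⁻¹' Set.range ((↑) : ℤ → ℝ) → φ = 0) ↔
      ∀ k l m : ℤ, (k : ℝ) * α + l * β + m = 0 → k = 0 ∧ l = 0 ∧ m = 0 := by
  simp only [Set.insert_subset_iff, Set.singleton_subset_iff, Set.mem_preimage, Set.mem_range,
    map_add, map_smul, smul_eq_mul]
  constructor
  · intro h k l m hklm
    have hφ := h (b.constr ℝ ![(k : ℝ), l]) ⟨⟨k, by simp⟩, ⟨l, by simp⟩, ⟨-m, by simp; linarith⟩⟩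
    have hk : (k : ℝ) = 0 := by simpa using congr($hφ (b 0))
    have hl : (l : ℝ) = 0 := by simpa using congr($hφ (b 1))
    refine ⟨by exact_mod_cast hk, by exact_mod_cast hl, ?_⟩
    rw [hk, hl] at hklm
    exact_mod_cast (by linarith : (m : ℝ) = 0)
  · rintro h φ ⟨⟨k, hk⟩, ⟨l, hl⟩, ⟨n, hn⟩⟩
    obtain ⟨rfl, rfl, -⟩ := h k l (-n) (by push_cast; rw [hk, hl, hn]; ring)
    exact b.ext fun i ↦ by fin_cases i <;> simp [← hk, ← hl]

/-- Let u, v ∈ ℂ with Im(u/v) ≠ 0, α, β ∈ ℝ, and w = αu + βv.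
The additive subgroup of ℂ generated by {u, v, w} is dense in ℂ iff for all
integers k, l, m, kα + lβ + m = 0 implies k = l = m = 0. -/
theorem dense_addSubgroup_uvw_iff (u v : ℂ) (huv : (u / v).im ≠ 0)
    (α β : ℝ) (w : ℂ) (hw : w = (α : ℂ) * u + (β : ℂ) * v) :
    Dense ((AddSubgroup.closure {u, v, w} : AddSubgroup ℂ) : Set ℂ) ↔
      (∀ k l m : ℤ, (k : ℝ) * α + (l : ℝ) * β + (m : ℝ) = 0 → k = 0 ∧ l = 0 ∧ m = 0) := by
  let b := basisOfLinearIndependentOfCardEqFinrank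
    (Complex.linearIndependent_pair_of_im_div_ne_zero huv) (by simp)
  have hu : b 0 = u := by simp [b]
  have hv : b 1 = v := by simp [b]
  have hw' : w = α • b 0 + β • b 1 := by rw [hu, hv, hw, Complex.real_smul, Complex.real_smul]
  rw [Complex.dense_addSubgroup_iff_forall_linearMap_eq_zero,
    ← b.forall_eq_zero_of_subset_preimage_range_intCast_iff α β, ← hw', hu, hv]
  simp only [AddSubgroup.closure_subset_preimage_range_intCast_iff]
end

section
/- Let u, v ∈ ℂ with Im(u/v) ≠ 0, let α, β be real numbers with αu + βv = 1, and set ξ = e^{2πiu}, η = e^{2πiv}. Then the set {ξ^m · η^n : m, n ∈ ℤ} is dense in ℂ if and only if for all integers k, l, m, the equation kα + lβ + m = 0 implies k = l = m = 0. -/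
/-!
The map `w ↦ exp (2πiw)` is a continuous open map of `ℂ` onto `ℂˣ` with kernel `ℤ`, and it sends
the group `Λ = ℤu + ℤv + ℤ` onto `{ξ^m η^n}`; so that set is dense exactly when `Λ` is.

If `kα + lβ + m = 0` with `(k, l) ≠ 0`, the real functional with `u ↦ k`, `v ↦ l` takes the value
`-m` at `1 = αu + βv`, hence integer values on all of `Λ`, and `Λ` cannot be dense.
Conversely, under (*) the numbers `u, v, 1` are `ℤ`-independent, so the closure `H` of `Λ` is not
discrete (three independent vectors in a plane), hence contains a real line `ℝe`. Projecting along
`ℝe` maps `H` to a closed subgroup of `ℝ`: if it is dense, `H = ℂ`; if it is cyclic, it yields a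
nonzero functional that is integral on `u`, `v` and `1`, which (*) forces to vanish.
-/

open Complex Set Submodule Filter Topology Module ComplexConjugate
open scoped Real

section FiniteDimensional

variable {E : Type*} [NormedAddCommGroup E] [NormedSpace ℝ E] [FiniteDimensional ℝ E]

theorem LinearMap.not_dense_of_mapsTo_range_intCast {φ : E →ₗ[ℝ] ℝ} (hφ : φ ≠ 0) {s : Set E}
    (hs : MapsTo φ s (Set.range ((↑) : ℤ → ℝ))) : ¬Dense s := fun hd ↦
  have hφs := (LinearMap.surjective hφ).denseRange.dense_image
    (φ.continuous_of_finiteDimensional) hd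
  not_denseRange_zsmul (a := (1 : ℝ)) <| by simpa [DenseRange] using hφs.mono hs.image_subset

theorem Int.tendsto_floor_div_mul {ι : Type*} {l : Filter ι} {r : ι → ℝ} (hr : ∀ i, 0 < r i)
    (hlim : Tendsto r l (𝓝 0)) (t : ℝ) : Tendsto (fun i ↦ ⌊t / r i⌋ * r i) l (𝓝 t) := by
  refine tendsto_of_tendsto_of_tendsto_of_le_of_le (by simpa using tendsto_const_nhds.sub hlim)
    tendsto_const_nhds (fun i ↦ ?_) (fun i ↦ ?_)
  · have := mul_le_mul_of_nonneg_right (Int.sub_one_lt_floor (t / r i)).le (hr i).le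
    rwa [sub_mul, div_mul_cancel₀ _ (hr i).ne', one_mul] at this
  · exact (le_div_iff₀ (hr i)).1 (Int.floor_le _)

theorem AddSubgroup.exists_ne_zero_forall_smul_mem {H : AddSubgroup E}
    (hH : IsClosed (H : Set E)) (hd : ¬DiscreteTopology H) : ∃ e ≠ (0 : E), ∀ t : ℝ, t • e ∈ H := by
  have hsmall : ∀ n : ℕ, ∃ h ∈ H, h ≠ 0 ∧ ‖h‖ < 1 / (n + 1) := by
    by_contra! hlarge
    obtain ⟨n, hn⟩ := hlarge
    refine hd (.of_forall_le_dist (r := 1 / (n + 1)) (by positivity) fun x y hxy ↦ ?_)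
    dsimp only
    rw [dist_eq_norm]
    exact hn _ (H.sub_mem x.2 y.2) (sub_ne_zero.2 (Subtype.coe_injective.ne hxy))
  choose h hmem hne hlt using hsmall
  have hpos n : 0 < ‖h n‖ := norm_pos_iff.2 (hne n)
  have hnorm : Tendsto (fun n ↦ ‖h n‖) atTop (𝓝 0) :=
    squeeze_zero (fun n ↦ (hpos n).le) (fun n ↦ (hlt n).le) tendsto_one_div_add_atTop_nhds_zero_nat
  obtain ⟨e, he, φ, hφ, hlim⟩ := (isCompact_sphere (0 : E) 1).tendsto_subseq
    (x := fun n ↦ ‖h n‖⁻¹ • h n) fun n ↦ by simp [norm_smul, (hpos n).ne']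
  -- `t • e` is the limit of `⌊t / ‖h‖⌋ • h` along the subsequence `h ∘ φ`.
  refine ⟨e, ne_zero_of_mem_unit_sphere ⟨e, he⟩, fun t ↦ hH.mem_of_tendsto
    ((Int.tendsto_floor_div_mul (fun n ↦ hpos (φ n)) (hnorm.comp hφ.tendsto_atTop) t).smul hlim)
    (Eventually.of_forall fun n ↦ ?_)⟩
  simp only [Function.comp_apply, smul_smul, mul_assoc, mul_inv_cancel₀ (hpos (φ n)).ne', mul_one]
  exact_mod_cast H.zsmul_mem (hmem (φ n)) _

theorem Submodule.not_discreteTopology_span_int {ι : Type*} [Fintype ι] {b : ι → E}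
    (hb : LinearIndependent ℤ b) (hcard : finrank ℝ E < Fintype.card ι) :
    ¬DiscreteTopology (span ℤ (Set.range b)) := fun hd ↦ by
  have h := Real.finrank_eq_int_finrank_of_discrete hd
  rw [Set.finrank, Set.finrank, finrank_span_eq_card hb] at h
  exact hcard.not_ge (h ▸ Submodule.finrank_le _)

end FiniteDimensional

theorem dense_image_iff_of_isOpenMap {X Y : Type*} [TopologicalSpace X] [TopologicalSpace Y]
    {f : X → Y} (hf : Continuous f) (hfo : IsOpenMap f) (hfr : DenseRange f) {s : Set X}
    (hs : f ⁻¹' (f '' s) ⊆ s) : Dense (f '' s) ↔ Dense s :=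
  ⟨fun h ↦ (h.preimage hfo).mono hs, hfr.dense_image hf⟩

namespace Complex

theorem exists_real_smul_eq_of_im_conj_mul_eq_zero {e z : ℂ} (he : e ≠ 0)
    (hz : (conj e * z).im = 0) : ∃ t : ℝ, t • e = z := by
  refine ⟨(conj e * z).re / normSq e, ?_⟩
  have hreal : ((conj e * z).re : ℂ) = conj e * z := Complex.ext rfl (by simp [hz])
  have hnorm : (normSq e : ℂ) ≠ 0 := by exact_mod_cast (normSq_pos.2 he).ne'
  have hconj : conj e ≠ 0 := (map_ne_zero _).2 he
  rw [real_smul, ofReal_div, hreal, ← mul_conj]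
  field_simp

theorem exists_mapsTo_range_intCast_of_forall_smul_mem {H : AddSubgroup ℂ}
    (hH : IsClosed (H : Set ℂ)) (htop : H ≠ ⊤) {e : ℂ} (he : e ≠ 0) (hline : ∀ t : ℝ, t • e ∈ H) :
    ∃ φ : ℂ →ₗ[ℝ] ℝ, φ ≠ 0 ∧ MapsTo φ H (Set.range ((↑) : ℤ → ℝ)) := by
  set ψ : ℂ →ₗ[ℝ] ℝ := imLm ∘ₗ LinearMap.mulLeft ℝ (conj e)
  have hψIe : ψ (I * e) = normSq e := by simp [ψ, normSq_apply]
  have hψ : ψ ≠ 0 := fun h ↦ he <| normSq_eq_zero.1 <| by simp [← hψIe, h]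
  have hker : ∀ z, ψ z = 0 → z ∈ H := fun z hz ↦ by
    obtain ⟨t, rfl⟩ := exists_real_smul_eq_of_im_conj_mul_eq_zero he hz
    exact hline t
  rcases (H.map ψ.toAddMonoidHom).dense_or_cyclic with hd | ⟨c, hc⟩
  · refine absurd ?_ htop
    have hsub : ψ ⁻¹' (H.map ψ.toAddMonoidHom) ⊆ H := by
      rintro z ⟨h, hh, hψz⟩
      simpa using H.add_mem hh (hker (z - h) (by simp_all))
    rw [← SetLike.coe_set_eq, AddSubgroup.coe_top, ← hH.closure_eq]
    exact ((hd.preimage (ψ.isOpenMap_of_finiteDimensional (LinearMap.surjective hψ))).mono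
      hsub).closure_eq
  have hψH : ∀ h ∈ H, ∃ n : ℤ, ψ h = n * c := fun h hh ↦ by
    obtain ⟨n, hn⟩ := AddSubgroup.mem_closure_singleton.1 (hc ▸ AddSubgroup.mem_map_of_mem _ hh)
    exact ⟨n, by simpa using hn.symm⟩
  rcases eq_or_ne c 0 with rfl | hc0
  · refine ⟨ψ, hψ, fun h hh ↦ ⟨0, ?_⟩⟩
    obtain ⟨n, hn⟩ := hψH h hh
    simp [hn]
  · refine ⟨c⁻¹ • ψ, smul_ne_zero (inv_ne_zero hc0) hψ, fun h hh ↦ ?_⟩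
    obtain ⟨n, hn⟩ := hψH h hh
    exact ⟨n, by simp [hn, field]⟩

theorem linearIndependent_pair_of_im_div_ne_zero_s4 {u v : ℂ} (h : (u / v).im ≠ 0) :
    LinearIndependent ℝ ![u, v] := by
  have hv : v ≠ 0 := by rintro rfl; simp at h
  refine LinearIndependent.pair_iff.2 fun s t hst ↦ ?_
  have hdiv : (s : ℂ) * (u / v) + t = 0 := by
    rw [real_smul, real_smul] at hst
    field_simp
    linear_combination hst
  have hs : s = 0 := by simpa [h] using congrArg im hdiv
  subst hs
  exact ⟨rfl, by simpa [hv] using hst⟩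

section IntegerSpan

variable {u v : ℂ} {α β : ℝ}

theorem exists_linearMap_apply_eq_apply_eq (huv : LinearIndependent ℝ ![u, v]) (k l : ℝ) :
    ∃ φ : ℂ →ₗ[ℝ] ℝ, φ u = k ∧ φ v = l := by
  let b := basisOfLinearIndependentOfCardEqFinrank huv (by simp)
  have hb : ⇑b = ![u, v] := coe_basisOfLinearIndependentOfCardEqFinrank _ _
  exact ⟨b.constr ℝ ![k, l],
    by simpa only [hb, Matrix.cons_val_zero] using b.constr_basis ℝ ![k, l] 0,
    by simpa only [hb, Matrix.cons_val_one, Matrix.cons_val_zero] using b.constr_basis ℝ ![k, l] 1⟩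

theorem linearMap_eq_zero_of_apply_eq_zero (huv : LinearIndependent ℝ ![u, v])
    {φ : ℂ →ₗ[ℝ] ℝ} (hu : φ u = 0) (hv : φ v = 0) : φ = 0 := by
  let b := basisOfLinearIndependentOfCardEqFinrank huv (by simp)
  have hb : ⇑b = ![u, v] := coe_basisOfLinearIndependentOfCardEqFinrank _ _
  refine b.ext fun i ↦ ?_
  fin_cases i <;> simp [hb, hu, hv]

theorem map_one_eq_of_mul_add_mul_eq_one (h1 : (α : ℂ) * u + β * v = 1) (φ : ℂ →ₗ[ℝ] ℝ) :
    φ 1 = α * φ u + β * φ v := by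
  rw [← h1, ← real_smul, ← real_smul, map_add, map_smul, map_smul, smul_eq_mul, smul_eq_mul]

theorem linearIndependent_int_of_forall_eq_zero (huv : LinearIndependent ℝ ![u, v])
    (h1 : (α : ℂ) * u + β * v = 1)
    (hind : ∀ k l m : ℤ, (k : ℝ) * α + l * β + m = 0 → k = 0 ∧ l = 0 ∧ m = 0) :
    LinearIndependent ℤ ![u, v, 1] := by
  rw [Fintype.linearIndependent_iff]
  intro g hg
  simp only [Fin.sum_univ_three, Matrix.cons_val, zsmul_eq_mul, mul_one] at hg
  obtain ⟨hu, hv⟩ := LinearIndependent.pair_iff.1 huv (g 0 + g 2 * α) (g 1 + g 2 * β) <| by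
    simp only [real_smul]
    push_cast
    linear_combination hg + (g 2 : ℂ) * h1
  obtain ⟨h2, -, h0⟩ := hind (g 2) 0 (g 0) (by push_cast; linarith)
  have h1' : g 1 = 0 := by exact_mod_cast (by simpa [h2] using hv : (g 1 : ℝ) = 0)
  intro i
  fin_cases i <;> assumption

theorem not_dense_span_int_of_add_add_eq_zero (huv : LinearIndependent ℝ ![u, v])
    (h1 : (α : ℂ) * u + β * v = 1) {k l m : ℤ}
    (hkl : k ≠ 0 ∨ l ≠ 0) (hklm : (k : ℝ) * α + l * β + m = 0) :
    ¬Dense (span ℤ {u, v, 1} : Set ℂ) := by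
  obtain ⟨φ, hφu, hφv⟩ := exists_linearMap_apply_eq_apply_eq huv k l
  have hφ1 : φ 1 = -m := by rw [map_one_eq_of_mul_add_mul_eq_one h1, hφu, hφv]; linarith
  refine φ.not_dense_of_mapsTo_range_intCast (fun h ↦ ?_) (fun x hx ↦ ?_)
  · rcases hkl with hk | hl
    · exact hk (by simpa [hφu] using LinearMap.congr_fun h u)
    · exact hl (by simpa [hφv] using LinearMap.congr_fun h v)
  · obtain ⟨a, b, c, rfl⟩ := mem_span_triple.1 hx
    refine ⟨a * k + b * l - c * m, ?_⟩
    rw [map_add, map_add, map_zsmul, map_zsmul, map_zsmul, hφu, hφv, hφ1]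
    simp only [zsmul_eq_mul]
    push_cast
    ring

theorem dense_span_int_of_forall_eq_zero (huv : LinearIndependent ℝ ![u, v])
    (h1 : (α : ℂ) * u + β * v = 1)
    (hind : ∀ k l m : ℤ, (k : ℝ) * α + l * β + m = 0 → k = 0 ∧ l = 0 ∧ m = 0) :
    Dense (span ℤ {u, v, 1} : Set ℂ) := by
  by_contra hnd
  let H := (span ℤ {u, v, (1 : ℂ)}).toAddSubgroup.topologicalClosure
  have hH : IsClosed (H : Set ℂ) := AddSubgroup.isClosed_topologicalClosure _
  have htop : H ≠ ⊤ := fun h ↦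
    hnd <| dense_iff_closure_eq.2 <| by simpa [H] using congrArg SetLike.coe h
  have hmem : ∀ z ∈ ({u, v, 1} : Set ℂ), z ∈ H := fun z hz ↦
    AddSubgroup.le_topologicalClosure _ (subset_span hz)
  have hdisc : ¬DiscreteTopology H := fun hd ↦ by
    have hrange : Set.range ![u, v, 1] = {u, v, 1} := by
      simp only [Matrix.range_cons, Matrix.range_empty, union_empty, singleton_union]
    have : DiscreteTopology (span ℤ (Set.range ![u, v, 1])) := hrange ▸
      hd.of_subset (s := (H : Set ℂ)) fun x hx ↦ AddSubgroup.le_topologicalClosure _ hx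
    exact not_discreteTopology_span_int
      (linearIndependent_int_of_forall_eq_zero huv h1 hind) (by simp) this
  obtain ⟨e, he, hline⟩ := H.exists_ne_zero_forall_smul_mem hH hdisc
  obtain ⟨φ, hφ, hφH⟩ := exists_mapsTo_range_intCast_of_forall_smul_mem hH htop he hline
  obtain ⟨p, hp⟩ := hφH (hmem u (by simp))
  obtain ⟨q, hq⟩ := hφH (hmem v (by simp))
  obtain ⟨r, hr⟩ := hφH (hmem 1 (by simp))
  obtain ⟨rfl, rfl, -⟩ := hind p q (-r) <| by
    rw [Int.cast_neg, hp, hq, hr, map_one_eq_of_mul_add_mul_eq_one h1]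
    ring
  exact hφ (linearMap_eq_zero_of_apply_eq_zero huv (by simp [← hp]) (by simp [← hq]))

theorem dense_span_int_iff (huv : LinearIndependent ℝ ![u, v])
    (h1 : (α : ℂ) * u + β * v = 1) :
    Dense (span ℤ {u, v, 1} : Set ℂ) ↔
      ∀ k l m : ℤ, (k : ℝ) * α + l * β + m = 0 → k = 0 ∧ l = 0 ∧ m = 0 := by
  refine ⟨fun hd k l m hklm ↦ ?_, dense_span_int_of_forall_eq_zero huv h1⟩
  by_cases hkl : k = 0 ∧ l = 0
  · obtain ⟨rfl, rfl⟩ := hkl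
    exact ⟨rfl, rfl, by exact_mod_cast (by simpa using hklm : (m : ℝ) = 0)⟩
  · exact absurd hd (not_dense_span_int_of_add_add_eq_zero huv h1 (not_and_or.1 hkl) hklm)

end IntegerSpan

theorem exp_two_pi_I_mul_eq_iff {w z : ℂ} :
    exp (2 * π * I * w) = exp (2 * π * I * z) ↔ ∃ n : ℤ, w = z + n := by
  have h2πI : 2 * π * I ≠ 0 := by simp [Real.pi_ne_zero, I_ne_zero]
  refine exp_eq_exp_iff_exists_int.trans (exists_congr fun n ↦ ?_)
  rw [mul_comm (n : ℂ), ← mul_add, mul_right_inj' h2πI]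

theorem dense_image_exp_two_pi_I_mul_iff {Λ : AddSubgroup ℂ} (h1 : (1 : ℂ) ∈ Λ) :
    Dense ((fun w ↦ exp (2 * π * I * w)) '' Λ) ↔ Dense (Λ : Set ℂ) := by
  have h2πI : 2 * π * I ≠ 0 := by simp [Real.pi_ne_zero, I_ne_zero]
  have hexp : DenseRange exp := by simpa [DenseRange] using dense_compl_singleton (0 : ℂ)
  refine dense_image_iff_of_isOpenMap (by fun_prop) (isOpenMap_exp.comp (isOpenMap_smul₀ h2πI))
    (hexp.comp (mul_left_surjective₀ h2πI).denseRange (by fun_prop)) ?_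
  rintro w ⟨z, hz, hwz⟩
  obtain ⟨n, rfl⟩ := exp_two_pi_I_mul_eq_iff.1 hwz.symm
  simpa using Λ.add_mem hz (Λ.zsmul_mem h1 n)

theorem exp_two_pi_I_mul_zsmul_add_zsmul_add_zsmul (u v : ℂ) (a b c : ℤ) :
    exp (2 * π * I * (a • u + b • v + c • (1 : ℂ))) =
      exp (2 * π * I * u) ^ a * exp (2 * π * I * v) ^ b := by
  rw [show 2 * π * I * (a • u + b • v + c • (1 : ℂ)) =
      a * (2 * π * I * u) + b * (2 * π * I * v) + c * (2 * π * I) by simp only [zsmul_eq_mul]; ring,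
    exp_add, exp_add, exp_int_mul, exp_int_mul, exp_int_mul_two_pi_mul_I, mul_one]

end Complex

/-- Let u, v ∈ ℂ with Im(u/v) ≠ 0, α, β ∈ ℝ with αu + βv = 1,
ξ = e^{2πiu}, η = e^{2πiv}. Then {ξ^m η^n : m, n ∈ ℤ} is dense in ℂ iff for all
integers k, l, m, kα + lβ + m = 0 implies k = l = m = 0. -/
theorem dense_multiplicative_group_iff (u v : ℂ) (huv : (u / v).im ≠ 0)
    (α β : ℝ) (h1 : (α : ℂ) * u + (β : ℂ) * v = 1)
    (ξ η : ℂ) (hξ : ξ = Complex.exp (2 * Real.pi * Complex.I * u))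
    (hη : η = Complex.exp (2 * Real.pi * Complex.I * v)) :
    Dense {z : ℂ | ∃ m n : ℤ, z = ξ ^ m * η ^ n} ↔
      (∀ k l m : ℤ, (k : ℝ) * α + (l : ℝ) * β + (m : ℝ) = 0 → k = 0 ∧ l = 0 ∧ m = 0) := by
  subst hξ hη
  let Λ := span ℤ {u, v, (1 : ℂ)}
  have hS : {z : ℂ | ∃ m n : ℤ, z = exp (2 * π * I * u) ^ m * exp (2 * π * I * v) ^ n} =
      (fun w ↦ exp (2 * π * I * w)) '' Λ.toAddSubgroup := by
    ext z
    constructor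
    · rintro ⟨m, n, rfl⟩
      exact ⟨_, mem_span_triple.2 ⟨m, n, 0, rfl⟩,
        exp_two_pi_I_mul_zsmul_add_zsmul_add_zsmul u v m n 0⟩
    · rintro ⟨_, hw, rfl⟩
      obtain ⟨a, b, c, rfl⟩ := mem_span_triple.1 hw
      exact ⟨a, b, exp_two_pi_I_mul_zsmul_add_zsmul_add_zsmul u v a b c⟩
  rw [hS, dense_image_exp_two_pi_I_mul_iff (subset_span (by simp)),
    ← dense_span_int_iff (linearIndependent_pair_of_im_div_ne_zero_s4 huv) h1]
  rfl
end

section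
/- Let ξ, η be nonzero complex numbers. Then the set H(ξ,η) is a closed subgroup of the unit circle {z ∈ ℂ : |z| = 1} (it contains 1, is closed under multiplication and inverses, and is topologically closed), and consequently H(ξ,η) is either a finite set or equals the whole unit circle {z ∈ ℂ : |z| = 1}. -/
/-!
`H(ξ, η)` is the fibre over `1` of the closure of `{(ξ ^ n * η ^ m, (ξ / |ξ|) ^ n)} ⊆ ℂ × ℂ`.
That set is closed under componentwise products and inverses, so the fibre is closed under
products (multiplication is continuous) and under inverses (inversion is continuous at `(1, z)`
with `z ≠ 0`).

For the dichotomy, pull a closed subgroup of the circle back along `t ↦ exp (i t)`: a closed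
subgroup of `ℝ` is either all of `ℝ` or cyclic, and in the cyclic case it contains `2π`, so its
generator maps to a root of unity whose powers exhaust the subgroup.
-/

open Filter Topology

/-- For nonzero ξ, η, `Hset ξ η` is the set of z with |z| = 1 for which there
are integer sequences (n_k), (m_k) with ξ^{n_k} · η^{m_k} → 1 and
(ξ/|ξ|)^{n_k} → z. -/
def Hset (ξ η : ℂ) : Set ℂ :=
  {z : ℂ | ‖z‖ = 1 ∧ ∃ n m : ℕ → ℤ,
    Tendsto (fun k => ξ ^ (n k) * η ^ (m k)) atTop (𝓝 1) ∧
    Tendsto (fun k => (ξ / (‖ξ‖ : ℂ)) ^ (n k)) atTop (𝓝 z)}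

open Real in
theorem Circle.finite_or_eq_top_of_isClosed (K : Subgroup Circle)
    (hK : IsClosed (K : Set Circle)) : (K : Set Circle).Finite ∨ K = ⊤ := by
  let G : AddSubgroup ℝ := K.toAddSubgroup.comap Circle.expHom
  have hG : IsClosed (G : Set ℝ) := hK.preimage Circle.exp.continuous
  have arg_mem {z : Circle} (hz : z ∈ K) : Complex.arg z ∈ G := by
    rwa [← Circle.exp_arg z] at hz
  rcases G.dense_or_cyclic with hdense | ⟨a, hGa⟩
  · right
    refine eq_top_iff.2 fun z _ => ?_
    have harg : Complex.arg z ∈ G := by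
      rw [← SetLike.mem_coe, ← hG.closure_eq, hdense.closure_eq]; trivial
    simpa [G, Circle.exp_arg] using harg
  · left
    obtain ⟨m, hm⟩ := AddSubgroup.mem_closure_singleton.1 (hGa ▸ show 2 * π ∈ G by simp [G])
    have hfin : IsOfFinOrder (Circle.exp a) := by
      refine isOfFinOrder_iff_zpow_eq_one.2 ⟨m, ?_, ?_⟩
      · rintro rfl; simp [pi_ne_zero] at hm
      · rw [← Circle.exp_zsmul, hm, Circle.exp_two_pi]
    refine hfin.finite_zpowers.subset fun z hz => ?_
    obtain ⟨k, hk⟩ := AddSubgroup.mem_closure_singleton.1 (hGa ▸ arg_mem hz)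
    exact ⟨k, by simp only [← Circle.exp_zsmul, hk, Circle.exp_arg]⟩

theorem finite_or_eq_unit_circle_of_isClosed_subgroup {S : Set ℂ}
    (hsub : S ⊆ {z : ℂ | ‖z‖ = 1}) (hone : (1 : ℂ) ∈ S)
    (hmul : ∀ z w : ℂ, z ∈ S → w ∈ S → z * w ∈ S) (hinv : ∀ z : ℂ, z ∈ S → z⁻¹ ∈ S)
    (hcl : IsClosed S) :
    S.Finite ∨ S = {z : ℂ | ‖z‖ = 1} := by
  let K : Subgroup Circle :=
    { carrier := {w : Circle | (w : ℂ) ∈ S}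
      one_mem' := hone
      mul_mem' := fun hz hw => hmul _ _ hz hw
      inv_mem' := fun hz => hinv _ hz }
  have exists_coe_eq {z : ℂ} (hz : ‖z‖ = 1) : ∃ w : Circle, (w : ℂ) = z :=
    ⟨⟨z, mem_sphere_zero_iff_norm.2 hz⟩, rfl⟩
  rcases Circle.finite_or_eq_top_of_isClosed K (hcl.preimage continuous_subtype_val) with
    hfin | htop
  · refine .inl <| (hfin.image (↑)).subset fun z hz => ?_
    obtain ⟨w, rfl⟩ := exists_coe_eq (hsub hz)
    exact ⟨w, hz, rfl⟩
  · refine .inr <| hsub.antisymm fun z hz => ?_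
    obtain ⟨w, rfl⟩ := exists_coe_eq hz
    exact (htop ▸ Subgroup.mem_top w : w ∈ K)

def zpowPairs (ξ η : ℂ) : Set (ℂ × ℂ) :=
  Set.range fun p : ℤ × ℤ => (ξ ^ p.1 * η ^ p.2, (ξ / (‖ξ‖ : ℂ)) ^ p.1)

theorem one_mem_zpowPairs (ξ η : ℂ) : (1 : ℂ × ℂ) ∈ zpowPairs ξ η :=
  ⟨0, by simp⟩

theorem mul_mem_zpowPairs {ξ η : ℂ} (hξ : ξ ≠ 0) (hη : η ≠ 0) {a b : ℂ × ℂ}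
    (ha : a ∈ zpowPairs ξ η) (hb : b ∈ zpowPairs ξ η) : a * b ∈ zpowPairs ξ η := by
  obtain ⟨p, rfl⟩ := ha
  obtain ⟨q, rfl⟩ := hb
  have hu : ξ / (‖ξ‖ : ℂ) ≠ 0 := div_ne_zero hξ (by simpa using hξ)
  refine ⟨p + q, Prod.ext ?_ ?_⟩
  · simp only [Prod.fst_add, Prod.snd_add, Prod.fst_mul, zpow_add₀ hξ, zpow_add₀ hη]
    ring
  · simp only [Prod.fst_add, Prod.snd_mul, zpow_add₀ hu]

theorem inv_mem_zpowPairs {ξ η : ℂ} {a : ℂ × ℂ} (ha : a ∈ zpowPairs ξ η) :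
    a⁻¹ ∈ zpowPairs ξ η := by
  obtain ⟨p, rfl⟩ := ha
  exact ⟨-p, by simp [zpow_neg, mul_comm]⟩

theorem mem_Hset_iff {ξ η z : ℂ} :
    z ∈ Hset ξ η ↔ ‖z‖ = 1 ∧ (1, z) ∈ closure (zpowPairs ξ η) := by
  refine and_congr_right fun _ => ⟨?_, fun h => ?_⟩
  · rintro ⟨n, m, hnm, hn⟩
    exact mem_closure_of_tendsto (hnm.prodMk_nhds hn) (.of_forall fun k => ⟨(n k, m k), rfl⟩)
  · obtain ⟨x, hx, hlim⟩ := mem_closure_iff_seq_limit.1 h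
    choose p hp using hx
    refine ⟨fun k => (p k).1, fun k => (p k).2, ?_, ?_⟩
    · simpa [Function.comp_def, ← hp] using (continuous_fst.tendsto _).comp hlim
    · simpa [Function.comp_def, ← hp] using (continuous_snd.tendsto _).comp hlim

namespace Hset

variable {ξ η : ℂ}

theorem one_mem : (1 : ℂ) ∈ Hset ξ η :=
  mem_Hset_iff.2 ⟨norm_one, subset_closure (one_mem_zpowPairs ξ η)⟩

theorem mul_mem (hξ : ξ ≠ 0) (hη : η ≠ 0) {z w : ℂ} (hz : z ∈ Hset ξ η) (hw : w ∈ Hset ξ η) :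
    z * w ∈ Hset ξ η := by
  rw [mem_Hset_iff] at hz hw ⊢
  refine ⟨by rw [norm_mul, hz.1, hw.1, one_mul], ?_⟩
  simpa using map_mem_closure₂ continuous_mul hz.2 hw.2 fun a ha b hb =>
    mul_mem_zpowPairs hξ hη ha hb

theorem inv_mem {z : ℂ} (hz : z ∈ Hset ξ η) : z⁻¹ ∈ Hset ξ η := by
  rw [mem_Hset_iff] at hz ⊢
  obtain ⟨hnorm, hcl⟩ := hz
  have hz0 : z ≠ 0 := norm_pos_iff.1 (hnorm ▸ one_pos)
  refine ⟨by rw [norm_inv, hnorm, inv_one], ?_⟩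
  have hinv : ContinuousAt (fun a : ℂ × ℂ => a⁻¹) (1, z) :=
    (continuousAt_fst.inv₀ one_ne_zero).prodMk (continuousAt_snd.inv₀ hz0)
  have hmaps : (fun a : ℂ × ℂ => a⁻¹) '' zpowPairs ξ η ⊆ zpowPairs ξ η :=
    Set.image_subset_iff.2 fun _ => inv_mem_zpowPairs
  simpa using closure_mono hmaps (mem_closure_image hinv hcl)

theorem isClosed : IsClosed (Hset ξ η) := by
  have : Hset ξ η = {z : ℂ | ‖z‖ = 1} ∩ (fun z => ((1 : ℂ), z)) ⁻¹' closure (zpowPairs ξ η) :=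
    Set.ext fun _ => mem_Hset_iff
  rw [this]
  exact (isClosed_eq continuous_norm continuous_const).inter
    (isClosed_closure.preimage (continuous_const.prodMk continuous_id))

end Hset

/-- For nonzero ξ, η, the set H(ξ,η) is a closed subgroup of the
unit circle, and consequently it is either finite or equals the whole unit circle. -/
theorem Hset_closed_subgroup_and_dichotomy (ξ η : ℂ) (hξ : ξ ≠ 0) (hη : η ≠ 0) :
    (Hset ξ η ⊆ {z : ℂ | ‖z‖ = 1}) ∧
    (1 : ℂ) ∈ Hset ξ η ∧
    (∀ z w : ℂ, z ∈ Hset ξ η → w ∈ Hset ξ η → z * w ∈ Hset ξ η) ∧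
    (∀ z : ℂ, z ∈ Hset ξ η → z⁻¹ ∈ Hset ξ η) ∧
    IsClosed (Hset ξ η) ∧
    ((Hset ξ η).Finite ∨ Hset ξ η = {z : ℂ | ‖z‖ = 1}) := by
  have hsub : Hset ξ η ⊆ {z : ℂ | ‖z‖ = 1} := fun _ hz => hz.1
  have hmul : ∀ z w : ℂ, z ∈ Hset ξ η → w ∈ Hset ξ η → z * w ∈ Hset ξ η :=
    fun _ _ => Hset.mul_mem hξ hη
  have hinv : ∀ z : ℂ, z ∈ Hset ξ η → z⁻¹ ∈ Hset ξ η := fun _ => Hset.inv_mem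
  exact ⟨hsub, Hset.one_mem, hmul, hinv, Hset.isClosed,
    finite_or_eq_unit_circle_of_isClosed_subgroup hsub Hset.one_mem hmul hinv Hset.isClosed⟩
end

section
/- Let u, v ∈ ℂ and set ξ = e^{2πiu}, η = e^{2πiv}. Suppose there exist an irrational real number α and integer sequences (r_k), (s_k), (t_k), (p_k) such that r_k·u + s_k·v − t_k → 0 and r_k·Re(u) − p_k → α as k → ∞. Then H(ξ,η) equals the whole unit circle {z ∈ ℂ : |z| = 1}. -/
open Filter Topology

/-!
Write `e(x) = exp(2πix)`, so `ξ = e(u)`, `η = e(v)` and `ξ/|ξ| = e(Re u)`. Multiplying the given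
sequences by an integer `a`, the exponents `n_k = a r_k`, `m_k = a s_k` give
`ξ^{n_k} η^{m_k} = e(a(r_k u + s_k v - t_k)) → 1` and
`(ξ/|ξ|)^{n_k} = e(a(r_k Re u - p_k)) → e(aα)`, so `e(aα) ∈ H(ξ,η)`.
Since `H(ξ,η)` is the slice at first coordinate `1` of the closure of `{(ξ^n η^m, (ξ/|ξ|)^n)}`,
it is closed, and the points `e(aα)` are dense in the unit circle because `α` is irrational.
-/

open Complex Set

noncomputable def circleExp (x : ℂ) : ℂ := exp (2 * Real.pi * I * x)

lemma continuous_circleExp : Continuous circleExp := by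
  unfold circleExp; fun_prop

lemma circleExp_add (x y : ℂ) : circleExp (x + y) = circleExp x * circleExp y := by
  simp only [circleExp, mul_add, exp_add]

lemma circleExp_intCast (n : ℤ) : circleExp n = 1 := by
  rw [circleExp, mul_comm, exp_int_mul_two_pi_mul_I]

lemma circleExp_intCast_mul (n : ℤ) (x : ℂ) : circleExp (n * x) = circleExp x ^ n := by
  rw [circleExp, circleExp, ← exp_int_mul, mul_left_comm]

lemma circleExp_add_intCast (x : ℂ) (n : ℤ) : circleExp (x + n) = circleExp x := by
  rw [circleExp_add, circleExp_intCast, mul_one]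

lemma norm_circleExp (x : ℂ) : ‖circleExp x‖ = Real.exp (-(2 * Real.pi * x.im)) := by
  simp [circleExp, norm_exp]

lemma circleExp_div_norm (u : ℂ) : circleExp u / (‖circleExp u‖ : ℂ) = circleExp u.re := by
  rw [norm_circleExp, ofReal_exp, circleExp, circleExp, ← exp_sub]
  congr 1
  apply Complex.ext <;> simp

lemma exists_circleExp_ofReal_eq {z : ℂ} (hz : ‖z‖ = 1) : ∃ x : ℝ, circleExp x = z := by
  refine ⟨z.arg / (2 * Real.pi), ?_⟩
  have hπ : (Real.pi : ℂ) ≠ 0 := ofReal_ne_zero.mpr Real.pi_ne_zero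
  conv_rhs => rw [← norm_mul_exp_arg_mul_I z, hz]
  simp only [circleExp, ofReal_div, ofReal_mul, ofReal_ofNat, ofReal_one, one_mul]
  congr 1
  field_simp

/-- The integer multiples of an irrational number are dense modulo `1`. -/
lemma unitCircle_subset_closure_range_circleExp {α : ℝ} (hα : Irrational α) :
    {z : ℂ | ‖z‖ = 1} ⊆ closure (range fun a : ℤ => circleExp ((a : ℂ) * α)) := by
  intro z hz
  obtain ⟨x, rfl⟩ := exists_circleExp_ofReal_eq hz
  have hdense : Dense (AddSubgroup.closure {α, 1} : Set ℝ) :=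
    dense_addSubgroupClosure_pair_iff.mpr (by rwa [div_one])
  have hx : circleExp x ∈ closure ((fun y : ℝ => circleExp y) '' AddSubgroup.closure {α, 1}) :=
    mem_closure_image (continuous_circleExp.comp continuous_ofReal).continuousAt (hdense x)
  refine closure_mono ?_ hx
  rintro _ ⟨y, hy, rfl⟩
  obtain ⟨a, b, rfl⟩ := AddSubgroup.mem_closure_pair.mp hy
  exact ⟨a, by simp [circleExp_add_intCast]⟩

lemma mem_Hset_iff_s7 {ξ η z : ℂ} :
    z ∈ Hset ξ η ↔ ‖z‖ = 1 ∧ ((1 : ℂ), z) ∈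
      closure (range fun nm : ℤ × ℤ => (ξ ^ nm.1 * η ^ nm.2, (ξ / (‖ξ‖ : ℂ)) ^ nm.1)) := by
  simp only [Hset, mem_ofPred_eq, mem_closure_iff_seq_limit, mem_range]
  refine and_congr_right fun _ => ⟨?_, ?_⟩
  · rintro ⟨n, m, hprod, hpow⟩
    exact ⟨_, fun k => ⟨(n k, m k), rfl⟩, hprod.prodMk_nhds hpow⟩
  · rintro ⟨x, hx, hlim⟩
    choose nm hnm using hx
    obtain rfl : x = _ := funext fun k => (hnm k).symm
    exact ⟨fun k => (nm k).1, fun k => (nm k).2,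
      (continuous_fst.tendsto _).comp hlim, (continuous_snd.tendsto _).comp hlim⟩

lemma isClosed_Hset (ξ η : ℂ) : IsClosed (Hset ξ η) := by
  have hH : Hset ξ η = {z : ℂ | ‖z‖ = 1} ∩ (fun z => ((1 : ℂ), z)) ⁻¹'
      closure (range fun nm : ℤ × ℤ => (ξ ^ nm.1 * η ^ nm.2, (ξ / (‖ξ‖ : ℂ)) ^ nm.1)) :=
    Set.ext fun _ => mem_Hset_iff_s7
  rw [hH]
  exact (isClosed_eq continuous_norm continuous_const).inter
    (isClosed_closure.preimage (by fun_prop))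

lemma circleExp_mul_combination (u v : ℂ) (a r s t : ℤ) :
    circleExp (a * (r * u + s * v - t)) = circleExp u ^ (a * r) * circleExp v ^ (a * s) := by
  have h : (a : ℂ) * (r * u + s * v - t) =
      ((a * r : ℤ) * u + (a * s : ℤ) * v) + (-(a * t) : ℤ) := by
    push_cast; ring
  rw [h, circleExp_add_intCast, circleExp_add, circleExp_intCast_mul, circleExp_intCast_mul]

lemma circleExp_intCast_mul_mem_Hset {u v : ℂ} {α : ℝ} {r s t p : ℕ → ℤ}
    (h1 : Tendsto (fun k => (r k : ℂ) * u + (s k : ℂ) * v - (t k : ℂ)) atTop (𝓝 0))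
    (h2 : Tendsto (fun k => (r k : ℝ) * u.re - (p k : ℝ)) atTop (𝓝 α)) (a : ℤ) :
    circleExp ((a : ℂ) * α) ∈ Hset (circleExp u) (circleExp v) := by
  refine ⟨?_, fun k => a * r k, fun k => a * s k, ?_, ?_⟩
  · rw [← ofReal_intCast, ← ofReal_mul, norm_circleExp, ofReal_im, mul_zero, neg_zero,
      Real.exp_zero]
  · have hlim := (continuous_circleExp.tendsto _).comp (h1.const_mul (a : ℂ))
    rw [mul_zero, ← Int.cast_zero, circleExp_intCast] at hlim
    exact hlim.congr fun k => circleExp_mul_combination u v a (r k) (s k) (t k)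
  · have hlim := ((continuous_circleExp.comp continuous_ofReal).tendsto _).comp
      (h2.const_mul (a : ℝ))
    rw [Function.comp_apply, ofReal_mul, ofReal_intCast] at hlim
    refine hlim.congr fun k => ?_
    have h : ((a * (r k * u.re - p k) : ℝ) : ℂ) =
        (a * r k : ℤ) * (u.re : ℂ) + (-(a * p k) : ℤ) := by
      push_cast; ring
    simp only [Function.comp_apply, h, circleExp_add_intCast, circleExp_intCast_mul,
      circleExp_div_norm]

/-- Let ξ = e^{2πiu}, η = e^{2πiv}. If there exist an irrational
real α and integer sequences (r_k), (s_k), (t_k), (p_k) with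
r_k·u + s_k·v − t_k → 0 and r_k·Re(u) − p_k → α, then H(ξ,η) is the whole unit
circle. -/
theorem Hset_eq_circle_of_sequences (u v : ℂ) (ξ η : ℂ)
    (hξ : ξ = Complex.exp (2 * Real.pi * Complex.I * u))
    (hη : η = Complex.exp (2 * Real.pi * Complex.I * v))
    (α : ℝ) (hα : Irrational α) (r s t p : ℕ → ℤ)
    (h1 : Tendsto (fun k => (r k : ℂ) * u + (s k : ℂ) * v - (t k : ℂ)) atTop (𝓝 0))
    (h2 : Tendsto (fun k => (r k : ℝ) * u.re - (p k : ℝ)) atTop (𝓝 α)) :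
    Hset ξ η = {z : ℂ | ‖z‖ = 1} := by
  obtain rfl : ξ = circleExp u := hξ
  obtain rfl : η = circleExp v := hη
  refine Subset.antisymm (fun _ hz => hz.1) ?_
  calc {z : ℂ | ‖z‖ = 1}
      ⊆ closure (range fun a : ℤ => circleExp ((a : ℂ) * α)) :=
        unitCircle_subset_closure_range_circleExp hα
    _ ⊆ Hset (circleExp u) (circleExp v) :=
        closure_minimal (range_subset_iff.mpr (circleExp_intCast_mul_mem_Hset h1 h2))
          (isClosed_Hset _ _)
end

section
/- Let ξ, η be nonzero complex numbers such that {ξ^m · η^n : m, n ∈ ℤ} is dense in ℂ and H(ξ,η) equals the whole unit circle. Then for every nonempty open set V ⊆ ℂ, every complex number w with |w| = 1, and every ε > 0, there exist integers m, n with ξ^m · η^n ∈ V and |(ξ/|ξ|)^m − w| < ε. -/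
open Filter Topology

/-! Shifting the sequences witnessing `z ∈ H(ξ,η)` by a fixed exponent pair `(m₀, n₀)`
moves `ξ^m η^n` towards `ξ^m₀ η^n₀` while moving the argument of `ξ^m` towards that of
`ξ^m₀` rotated by `z`. Density supplies `ξ^m₀ η^n₀ ∈ V`, and `z` is then chosen as the
rotation taking the argument of `ξ^m₀` to `w`. -/

theorem norm_div_ofReal_norm_self {ξ : ℂ} (hξ : ξ ≠ 0) : ‖ξ / (‖ξ‖ : ℂ)‖ = 1 := by
  rw [norm_div, Complex.norm_of_nonneg (norm_nonneg ξ), div_self (norm_ne_zero_iff.mpr hξ)]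

theorem exists_zpow_mul_zpow_mem_of_mem_Hset {ξ η z : ℂ} (hξ : ξ ≠ 0) (hη : η ≠ 0)
    (hz : z ∈ Hset ξ η) (m₀ n₀ : ℤ) {U W : Set ℂ}
    (hU : U ∈ 𝓝 (ξ ^ m₀ * η ^ n₀)) (hW : W ∈ 𝓝 ((ξ / (‖ξ‖ : ℂ)) ^ m₀ * z)) :
    ∃ m n : ℤ, ξ ^ m * η ^ n ∈ U ∧ (ξ / (‖ξ‖ : ℂ)) ^ m ∈ W := by
  obtain ⟨-, nseq, mseq, h_prod, h_arg⟩ := hz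
  have hu : ξ / (‖ξ‖ : ℂ) ≠ 0 := norm_ne_zero_iff.mp (by rw [norm_div_ofReal_norm_self hξ]; simp)
  have h_prod' : Tendsto (fun k => ξ ^ (m₀ + nseq k) * η ^ (n₀ + mseq k)) atTop
      (𝓝 (ξ ^ m₀ * η ^ n₀)) := by
    convert (mul_one (ξ ^ m₀ * η ^ n₀) ▸ h_prod.const_mul (ξ ^ m₀ * η ^ n₀)) using 2 with k
    rw [zpow_add₀ hξ, zpow_add₀ hη]
    ring
  have h_arg' : Tendsto (fun k => (ξ / (‖ξ‖ : ℂ)) ^ (m₀ + nseq k)) atTop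
      (𝓝 ((ξ / (‖ξ‖ : ℂ)) ^ m₀ * z)) := by
    simpa only [zpow_add₀ hu] using h_arg.const_mul ((ξ / (‖ξ‖ : ℂ)) ^ m₀)
  obtain ⟨k, hkU, hkW⟩ := ((h_prod'.eventually hU).and (h_arg'.eventually hW)).exists
  exact ⟨m₀ + nseq k, n₀ + mseq k, hkU, hkW⟩

/-- If {ξ^m η^n} is dense in ℂ and H(ξ,η) is the whole unit
circle, then for every nonempty open V ⊆ ℂ, every w with |w| = 1 and every ε > 0
there are integers m, n with ξ^m η^n ∈ V and |(ξ/|ξ|)^m − w| < ε. -/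
theorem arg_dense_in_open_sets (ξ η : ℂ) (hξ : ξ ≠ 0) (hη : η ≠ 0)
    (hdense : Dense {z : ℂ | ∃ m n : ℤ, z = ξ ^ m * η ^ n})
    (hH : Hset ξ η = {z : ℂ | ‖z‖ = 1})
    (V : Set ℂ) (hV : IsOpen V) (hVne : V.Nonempty)
    (w : ℂ) (hw : ‖w‖ = 1) (ε : ℝ) (hε : 0 < ε) :
    ∃ m n : ℤ, ξ ^ m * η ^ n ∈ V ∧
      ‖(ξ / (‖ξ‖ : ℂ)) ^ m - w‖ < ε := by
  obtain ⟨_, ⟨m₀, n₀, rfl⟩, hV₀⟩ := hdense.exists_mem_open hV hVne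
  set u := (ξ / (‖ξ‖ : ℂ)) ^ m₀
  have hu : ‖u‖ = 1 := by rw [norm_zpow, norm_div_ofReal_norm_self hξ, one_zpow]
  have hz : w / u ∈ Hset ξ η := by
    rw [hH, Set.mem_ofPred_eq, norm_div, hu, hw, div_one]
  have hW : Metric.ball w ε ∈ 𝓝 (u * (w / u)) := by
    rw [mul_div_cancel₀ w (norm_ne_zero_iff.mp (by rw [hu]; simp))]
    exact Metric.ball_mem_nhds w hε
  obtain ⟨m, n, hmnV, hm⟩ :=
    exists_zpow_mul_zpow_mem_of_mem_Hset hξ hη hz m₀ n₀ (hV.mem_nhds hV₀) hW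
  exact ⟨m, n, hmnV, by rwa [Metric.mem_ball, Complex.dist_eq] at hm⟩
end

section
/- Let ξ, η be nonzero complex numbers such that {ξ^m · η^n : m, n ∈ ℤ} is dense in ℂ and H(ξ,η) equals the whole unit circle. Then for any nonzero complex numbers z₁, z₂ there exist integer sequences (n_k), (m_k) such that (z₁ · ξ^{n_k})/(z₂ · η^{m_k}) → 1, (ξ/|ξ|)^{n_k} → conj(z₁)/|z₁|, and (η/|η|)^{m_k} → conj(z₂)/|z₂| as k → ∞. -/
/-!
Let `A ⊆ ℂ × ℂ` be the set of joint limits `(w, t)` of `(ξ^n η^m, (ξ/|ξ|)^n)` along integer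
sequences; it is closed under multiplication. Density gives, for every `w`, some `t` with
`(w, t) ∈ A` (pass to a subsequence on the compact unit circle), and `H(ξ,η) = S¹` says that
`(1, t') ∈ A` for every unit `t'`; multiplying, `(w, t) ∈ A` for every `w` and every unit `t`.
Taking `w = z₂/z₁`, `t = conj z₁/|z₁|` and `m ↦ -m` gives the first two limits, and the third
follows from them because `z ↦ z/|z|` is multiplicative and continuous away from `0`.
-/

open Filter Topology

namespace Complex

lemma norm_div_norm_self {z : ℂ} (hz : z ≠ 0) : ‖z / (‖z‖ : ℂ)‖ = 1 := by
  simp [hz]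

lemma conj_div_norm (z : ℂ) : (starRingEnd ℂ) z / (‖z‖ : ℂ) = ‖z‖ / z := by
  rcases eq_or_ne z 0 with rfl | hz
  · simp
  have : (‖z‖ : ℂ) ≠ 0 := by simpa using hz
  rw [div_eq_div_iff this hz, mul_comm, mul_conj, normSq_eq_norm_sq]
  push_cast
  ring

lemma div_norm_zpow_mul_div_norm_zpow (ξ η : ℂ) (n m : ℤ) :
    (ξ / (‖ξ‖ : ℂ)) ^ n * (η / (‖η‖ : ℂ)) ^ m
      = ξ ^ n * η ^ m / (‖ξ ^ n * η ^ m‖ : ℂ) := by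
  rw [norm_mul, norm_zpow, norm_zpow, div_zpow, div_zpow, div_mul_div_comm,
    ofReal_mul, ofReal_zpow, ofReal_zpow]

lemma tendsto_div_norm {f : ℕ → ℂ} {w : ℂ} (hw : w ≠ 0) (hf : Tendsto f atTop (𝓝 w)) :
    Tendsto (fun k => f k / (‖f k‖ : ℂ)) atTop (𝓝 (w / (‖w‖ : ℂ))) :=
  hf.div (continuous_ofReal.tendsto _ |>.comp hf.norm) (by simpa using hw)

end Complex

open Complex

/-- By definition, `Hset ξ η` is the set of unit `t` with `IsJointLimit ξ η 1 t`. -/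
def IsJointLimit (ξ η w t : ℂ) : Prop :=
  ∃ n m : ℕ → ℤ,
    Tendsto (fun k => ξ ^ (n k) * η ^ (m k)) atTop (𝓝 w) ∧
    Tendsto (fun k => (ξ / (‖ξ‖ : ℂ)) ^ (n k)) atTop (𝓝 t)

namespace IsJointLimit

variable {ξ η : ℂ}

lemma mul (hξ : ξ ≠ 0) (hη : η ≠ 0) {w t w' t' : ℂ} (h : IsJointLimit ξ η w t)
    (h' : IsJointLimit ξ η w' t') : IsJointLimit ξ η (w * w') (t * t') := by
  obtain ⟨n, m, hw, ht⟩ := h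
  obtain ⟨n', m', hw', ht'⟩ := h'
  have hu : ξ / (‖ξ‖ : ℂ) ≠ 0 := div_ne_zero hξ (by simpa using hξ)
  refine ⟨n + n', m + m', (hw.mul hw').congr fun k => ?_,
    (ht.mul ht').congr fun k => (zpow_add₀ hu _ _).symm⟩
  simp only [Pi.add_apply, zpow_add₀ hξ, zpow_add₀ hη]
  ring

lemma exists_of_dense (hξ : ξ ≠ 0) (hdense : Dense {z : ℂ | ∃ m n : ℤ, z = ξ ^ m * η ^ n})
    (w : ℂ) : ∃ t, ‖t‖ = 1 ∧ IsJointLimit ξ η w t := by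
  obtain ⟨x, hx, hxw⟩ := mem_closure_iff_seq_limit.mp (hdense w)
  choose a b hab using hx
  have hsphere : ∀ k, (ξ / (‖ξ‖ : ℂ)) ^ a k ∈ Metric.sphere (0 : ℂ) 1 := fun k => by
    rw [mem_sphere_zero_iff_norm, norm_zpow, norm_div_norm_self hξ, one_zpow]
  obtain ⟨t, ht, φ, hφ, hlim⟩ := (isCompact_sphere (0 : ℂ) 1).tendsto_subseq hsphere
  refine ⟨t, mem_sphere_zero_iff_norm.mp ht, a ∘ φ, b ∘ φ, ?_, hlim⟩
  exact (hxw.comp hφ.tendsto_atTop).congr fun k => hab (φ k)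

lemma of_dense_of_Hset (hξ : ξ ≠ 0) (hη : η ≠ 0)
    (hdense : Dense {z : ℂ | ∃ m n : ℤ, z = ξ ^ m * η ^ n})
    (hH : {z : ℂ | ‖z‖ = 1} ⊆ Hset ξ η) (w : ℂ) {t : ℂ} (ht : ‖t‖ = 1) :
    IsJointLimit ξ η w t := by
  obtain ⟨t₀, ht₀, hwt₀⟩ := exists_of_dense hξ hdense w
  have ht₀' : t₀ ≠ 0 := norm_ne_zero_iff.mp (ht₀ ▸ one_ne_zero)
  have hcorr : IsJointLimit ξ η 1 (t / t₀) := (hH (by simp [ht, ht₀])).2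
  simpa [mul_div_cancel₀ t ht₀'] using hwt₀.mul hξ hη hcorr

end IsJointLimit

lemma tendsto_div_norm_zpow_of_tendsto {ξ η w t : ℂ} (hξ : ξ ≠ 0) (hw : w ≠ 0) (ht : t ≠ 0)
    {n m : ℕ → ℤ} (hnm : Tendsto (fun k => ξ ^ (n k) * η ^ (m k)) atTop (𝓝 w))
    (hn : Tendsto (fun k => (ξ / (‖ξ‖ : ℂ)) ^ (n k)) atTop (𝓝 t)) :
    Tendsto (fun k => (η / (‖η‖ : ℂ)) ^ (m k)) atTop (𝓝 (w / (‖w‖ : ℂ) / t)) := by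
  have hu : ξ / (‖ξ‖ : ℂ) ≠ 0 := div_ne_zero hξ (by simpa using hξ)
  refine ((tendsto_div_norm hw hnm).div hn ht).congr fun k => ?_
  rw [Pi.div_apply, ← div_norm_zpow_mul_div_norm_zpow, mul_div_cancel_left₀ _ (zpow_ne_zero _ hu)]

/-- If {ξ^m η^n} is dense in ℂ and H(ξ,η) is the whole unit
circle, then for any nonzero z₁, z₂ there are integer sequences (n_k), (m_k) with
(z₁ ξ^{n_k})/(z₂ η^{m_k}) → 1, (ξ/|ξ|)^{n_k} → conj(z₁)/|z₁| and
(η/|η|)^{m_k} → conj(z₂)/|z₂|. -/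
theorem simultaneous_approach (ξ η : ℂ) (hξ : ξ ≠ 0) (hη : η ≠ 0)
    (hdense : Dense {z : ℂ | ∃ m n : ℤ, z = ξ ^ m * η ^ n})
    (hH : Hset ξ η = {z : ℂ | ‖z‖ = 1})
    (z₁ z₂ : ℂ) (hz₁ : z₁ ≠ 0) (hz₂ : z₂ ≠ 0) :
    ∃ n m : ℕ → ℤ,
      Tendsto (fun k => (z₁ * ξ ^ (n k)) / (z₂ * η ^ (m k))) atTop (𝓝 1) ∧
      Tendsto (fun k => (ξ / (‖ξ‖ : ℂ)) ^ (n k)) atTop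
        (𝓝 ((starRingEnd ℂ) z₁ / (‖z₁‖ : ℂ))) ∧
      Tendsto (fun k => (η / (‖η‖ : ℂ)) ^ (m k)) atTop
        (𝓝 ((starRingEnd ℂ) z₂ / (‖z₂‖ : ℂ))) := by
  have hw : z₂ / z₁ ≠ 0 := div_ne_zero hz₂ hz₁
  have ht : (‖z₁‖ : ℂ) / z₁ ≠ 0 := by simp [hz₁]
  rw [conj_div_norm, conj_div_norm]
  obtain ⟨n, m, hnm, hn⟩ := IsJointLimit.of_dense_of_Hset hξ hη hdense hH.ge (z₂ / z₁)
    (t := ‖z₁‖ / z₁) (by simp [hz₁])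
  refine ⟨n, -m, ?_, hn, ?_⟩
  · have h := (tendsto_const_nhds (x := z₁ / z₂)).mul hnm
    rw [show z₁ / z₂ * (z₂ / z₁) = 1 by field_simp] at h
    refine h.congr fun k => ?_
    simp only [Pi.neg_apply, zpow_neg]
    field_simp
  · have h := (tendsto_div_norm_zpow_of_tendsto hξ hw ht hnm hn).inv₀ (by simp [hz₁, hz₂])
    convert h using 2
    · simp [zpow_neg]
    · have hz₁' : (‖z₁‖ : ℂ) ≠ 0 := by simpa using hz₁
      rw [norm_div]
      push_cast
      field_simp
end

section
/- Let u, v ∈ ℂ and set ξ = e^{2πiu}, η = e^{2πiv}. Suppose {ξ^m · η^n : m, n ∈ ℤ} is dense in ℂ, Re(v)·Im(u) ≠ 0, and the ratio (Re(u)·Im(v))/(Re(v)·Im(u)) is a rational number. Then H(ξ,η) is a finite set. -/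
/-!
Write `w = n u + m v`, so that `ξ ^ n * η ^ m = exp (2πi w)` and `ξ / ‖ξ‖ = exp (2πi Re u)`.
If `ξ ^ n_k * η ^ m_k → 1`, then `Im w_k → 0` and `exp (2πi Re w_k) → 1`. With
`Δ = Re u Im v - Re v Im u` and the rational number `r = Re u Im v / Δ`, solving for `n` gives
`den r * (n Re u) = num r * Re w - den r * (Re u Re v / Δ) * Im w`, so `z ^ den r = 1` for every
`z ∈ H(ξ, η)`. When `Δ = 0` the numbers `Re w` and `Im w` are proportional, so no `ξ ^ m * η ^ n`
can approach `-1`, and density fails.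
-/

open Filter Topology

open Complex Real

section

variable {ι : Type*} {l : Filter ι}

lemma exp_two_pi_I_zpow_mul_zpow (u v : ℂ) (n m : ℤ) :
    exp (2 * π * I * u) ^ n * exp (2 * π * I * v) ^ m = exp (2 * π * I * (n * u + m * v)) := by
  rw [← exp_int_mul, ← exp_int_mul, ← Complex.exp_add]
  ring_nf

lemma exp_two_pi_I_mul_eq (w : ℂ) :
    exp (2 * π * I * w) = exp (2 * π * I * w.re) * exp ((-(2 * π * w.im) : ℝ) : ℂ) := by
  rw [← Complex.exp_add]
  congr 1
  conv_lhs => rw [← re_add_im w]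
  push_cast
  linear_combination (2 * π * w.im : ℂ) * I_sq

lemma norm_exp_two_pi_I_mul (w : ℂ) : ‖exp (2 * π * I * w)‖ = Real.exp (-(2 * π * w.im)) := by
  rw [norm_exp]
  simp [mul_re]

lemma exp_two_pi_I_mul_div_norm (u : ℂ) :
    exp (2 * π * I * u) / (‖exp (2 * π * I * u)‖ : ℂ) = exp (2 * π * I * u.re) := by
  rw [norm_exp_two_pi_I_mul, exp_two_pi_I_mul_eq u, ofReal_exp, mul_div_assoc,
    div_self (Complex.exp_ne_zero _), mul_one]

lemma tendsto_exp_mul_ofReal {c : ℂ} {t : ι → ℝ} (ht : Tendsto t l (𝓝 0)) :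
    Tendsto (fun k => exp (c * t k)) l (𝓝 1) := by
  have hcont : Continuous fun s : ℝ => exp (c * s) := by fun_prop
  simpa [Function.comp_def] using (hcont.tendsto 0).comp ht

lemma tendsto_im_and_tendsto_exp_re_of_tendsto_exp_two_pi_I_mul {w : ι → ℂ} {ζ : ℂ}
    (hζ : ‖ζ‖ = 1) (h : Tendsto (fun k => exp (2 * π * I * w k)) l (𝓝 ζ)) :
    Tendsto (fun k => (w k).im) l (𝓝 0) ∧
      Tendsto (fun k => exp (2 * π * I * (w k).re)) l (𝓝 ζ) := by
  have him : Tendsto (fun k => (w k).im) l (𝓝 0) := by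
    have hlog := (h.norm.log (by simp [hζ])).const_mul (-(2 * π))⁻¹
    simp only [hζ, Real.log_one, mul_zero, norm_exp_two_pi_I_mul, Real.log_exp] at hlog
    refine hlog.congr fun k => ?_
    field_simp
  refine ⟨him, ?_⟩
  have hre := h.mul (tendsto_exp_mul_ofReal (c := 2 * π) him)
  rw [mul_one] at hre
  refine hre.congr fun k => ?_
  rw [exp_two_pi_I_mul_eq (w k), mul_assoc, ← Complex.exp_add]
  push_cast
  rw [neg_add_cancel, Complex.exp_zero, mul_one]

end

lemma not_dense_zpow_mul_zpow_of_re_mul_im_eq {u v : ℂ} (hu : u.im ≠ 0)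
    (h : u.re * v.im = v.re * u.im) :
    ¬Dense {z : ℂ | ∃ m n : ℤ, z = exp (2 * π * I * u) ^ m * exp (2 * π * I * v) ^ n} := by
  intro hdense
  obtain ⟨z, hz, hlim⟩ := mem_closure_iff_seq_limit.mp (hdense (-1))
  choose m n hz using hz
  set w : ℕ → ℂ := fun k => m k * u + n k * v
  have hw : Tendsto (fun k => exp (2 * π * I * w k)) atTop (𝓝 (-1)) := by
    simpa only [funext hz, exp_two_pi_I_zpow_mul_zpow] using hlim
  obtain ⟨him, hre⟩ := tendsto_im_and_tendsto_exp_re_of_tendsto_exp_two_pi_I_mul (by simp) hw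
  have hcollinear : ∀ k, (w k).re = u.re / u.im * (w k).im := by
    intro k
    simp only [w, add_re, add_im, mul_re, mul_im, intCast_re, intCast_im,
      zero_mul, sub_zero, add_zero]
    field_simp
    linear_combination -(n k : ℝ) * h
  have hre_one : Tendsto (fun k => exp (2 * π * I * (w k).re)) atTop (𝓝 1) := by
    simp_rw [hcollinear]
    exact tendsto_exp_mul_ofReal (by simpa using him.const_mul (u.re / u.im))
  exact absurd (tendsto_nhds_unique hre hre_one) (by norm_num)

lemma pow_den_eq_one_of_mem_Hset {u v : ℂ} (hΔ : u.re * v.im - v.re * u.im ≠ 0) {r : ℚ}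
    (hr : u.re * v.im / (u.re * v.im - v.re * u.im) = r) {z : ℂ}
    (hz : z ∈ Hset (exp (2 * π * I * u)) (exp (2 * π * I * v))) : z ^ r.den = 1 := by
  obtain ⟨-, n, m, hprod, hphase⟩ := hz
  set w : ℕ → ℂ := fun k => n k * u + m k * v
  obtain ⟨him, hre⟩ := tendsto_im_and_tendsto_exp_re_of_tendsto_exp_two_pi_I_mul (w := w) (ζ := 1)
    norm_one (by simpa [exp_two_pi_I_zpow_mul_zpow] using hprod)
  set s : ℝ := u.re * v.re / (u.re * v.im - v.re * u.im)
  have hkey : ∀ k, r.den * (n k * u.re) = r.num * (w k).re - r.den * s * (w k).im := by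
    intro k
    have hnum : (r.num : ℝ) = r.den * r := by
      exact_mod_cast ((Rat.mul_den_eq_num r).symm.trans (mul_comm _ _))
    simp only [w, s, hnum, ← hr, add_re, add_im, mul_re, mul_im, intCast_re, intCast_im,
      zero_mul, sub_zero, add_zero]
    field_simp
    ring
  have hpow : ∀ k, ((exp (2 * π * I * u) / (‖exp (2 * π * I * u)‖ : ℂ)) ^ n k) ^ r.den =
      exp (2 * π * I * (w k).re) ^ r.num * exp (2 * π * I * ((-(r.den * s * (w k).im)) : ℝ)) := by
    intro k
    rw [exp_two_pi_I_mul_div_norm, ← exp_int_mul, ← Complex.exp_nat_mul, ← exp_int_mul,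
      ← Complex.exp_add]
    congr 1
    have := congrArg ((↑) : ℝ → ℂ) (hkey k)
    push_cast at this ⊢
    linear_combination (2 * π * I) * this
  have hlim := (hre.zpow₀ r.num (by simp)).mul
    (tendsto_exp_mul_ofReal (c := 2 * π * I) (by simpa using (him.const_mul (r.den * s)).neg))
  rw [one_zpow, one_mul] at hlim
  exact tendsto_nhds_unique ((hphase.pow r.den).congr hpow) hlim

/-- Let ξ = e^{2πiu}, η = e^{2πiv}, with {ξ^m η^n} dense in ℂ,
Re(v)·Im(u) ≠ 0 and (Re(u)·Im(v))/(Re(v)·Im(u)) rational. Then H(ξ,η) is finite. -/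
theorem Hset_finite_of_rational_ratio (u v : ℂ) (ξ η : ℂ)
    (hξ : ξ = Complex.exp (2 * Real.pi * Complex.I * u))
    (hη : η = Complex.exp (2 * Real.pi * Complex.I * v))
    (hdense : Dense {z : ℂ | ∃ m n : ℤ, z = ξ ^ m * η ^ n})
    (hne : v.re * u.im ≠ 0)
    (hrat : ∃ q : ℚ, (u.re * v.im) / (v.re * u.im) = (q : ℝ)) :
    (Hset ξ η).Finite := by
  subst hξ hη
  obtain ⟨q, hq⟩ := hrat
  have hΔ : u.re * v.im - v.re * u.im ≠ 0 := fun h =>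
    not_dense_zpow_mul_zpow_of_re_mul_im_eq (right_ne_zero_of_mul hne) (sub_eq_zero.mp h) hdense
  have hr : u.re * v.im / (u.re * v.im - v.re * u.im) = ((q / (q - 1) : ℚ) : ℝ) := by
    rw [div_eq_iff hne] at hq
    push_cast
    rw [hq, ← sub_one_mul, mul_div_mul_right _ _ hne]
  refine (Polynomial.nthRootsFinset (q / (q - 1)).den (1 : ℂ)).finite_toSet.subset fun z hz => ?_
  rw [Finset.mem_coe, Polynomial.mem_nthRootsFinset (Rat.den_pos _)]
  exact pow_den_eq_one_of_mem_Hset hΔ hr hz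
end

section
/- Let u, v ∈ ℂ and set ξ = e^{2πiu}, η = e^{2πiv}. Suppose {ξ^m · η^n : m, n ∈ ℤ} is dense in ℂ, Re(u)·Im(v) ≠ 0, and there are integers p, q with q ≠ 0, p ≠ q, and q·Re(v)·Im(u) = p·Re(u)·Im(v). Then every z ∈ H(ξ,η) satisfies z^{q−p} = 1; in particular H(ξ,η) is contained in the set of |q−p|-th roots of unity. -/
/-!
Write `ξ ^ n * η ^ m = exp (2πi w)` with `w = n u + m v`. If this tends to `1`, its modulus
`exp (-2π Im w)` does too, so `Im w → 0`. The relation between `p` and `q` gives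
`(q - p) n Re u = q Re w - (q Re v / Im v) Im w`, hence
`((ξ / |ξ|) ^ n) ^ (q - p) = exp (2πi w) ^ q * exp (-c Im w)` for a constant `c`; along the
sequences defining `z ∈ H(ξ, η)` the left side tends to `z ^ (q - p)` and the right side to `1`.
-/

open Filter Topology

open Complex
open scoped Real

lemma tendsto_im_nhds_zero_of_tendsto_exp {ι : Type*} {l : Filter ι} {w : ι → ℂ}
    (h : Tendsto (fun k => exp (2 * π * I * w k)) l (𝓝 1)) :
    Tendsto (fun k => (w k).im) l (𝓝 0) := by
  have hlog : Tendsto (fun k => -(2 * π * (w k).im)) l (𝓝 0) := by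
    simpa [Function.comp_def, norm_exp] using
      (Real.continuousAt_log (by simp : ‖(1 : ℂ)‖ ≠ 0)).tendsto.comp h.norm
  simpa [Real.pi_ne_zero] using hlog.neg.div_const (2 * π)

lemma exp_div_norm_exp (w : ℂ) : exp w / ‖exp w‖ = exp (w.im * I) := by
  rw [norm_exp, ofReal_exp, ← Complex.exp_sub, sub_eq_iff_eq_add'.mpr (re_add_im w).symm]

lemma sub_mul_mul_re_eq {u v : ℂ} {p q : ℝ} (hv : v.im ≠ 0)
    (hrel : q * (v.re * u.im) = p * (u.re * v.im)) (N M : ℝ) :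
    (q - p) * (N * u.re) =
      q * (N * u + M * v).re - q * v.re / v.im * (N * u + M * v).im := by
  simp only [add_re, add_im, re_ofReal_mul, im_ofReal_mul]
  field_simp
  linear_combination N * hrel

lemma zpow_sub_eq_one_of_mem_Hset {u v z : ℂ} {p q : ℤ} (hv : v.im ≠ 0)
    (hrel : (q : ℝ) * (v.re * u.im) = p * (u.re * v.im))
    (hz : z ∈ Hset (exp (2 * π * I * u)) (exp (2 * π * I * v))) : z ^ (q - p) = 1 := by
  obtain ⟨hz1, n, m, hprod, hunit⟩ := hz
  set w : ℕ → ℂ := fun k => (n k : ℝ) * u + (m k : ℝ) * v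
  have hw : Tendsto (fun k => exp (2 * π * I * w k)) atTop (𝓝 1) := by
    refine hprod.congr fun k => ?_
    simp only [w, ← exp_int_mul, ← Complex.exp_add, ofReal_intCast]
    ring_nf
  -- by `sub_mul_mul_re_eq`, `exp (2πi w) ^ q * exp (-(c * Im w)) = exp (2πi (q - p) n Re u)`
  set c : ℂ := 2 * π * I * (q * v.re / v.im + q * I)
  have hlim1 : Tendsto (fun k => exp (2 * π * I * w k) ^ q * exp (-(c * (w k).im)))
      atTop (𝓝 1) := by
    have hc : Continuous fun x : ℝ => exp (-(c * x)) := by fun_prop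
    simpa using ((continuousAt_zpow₀ 1 q (Or.inl one_ne_zero)).tendsto.comp hw).mul
      ((hc.tendsto 0).comp (tendsto_im_nhds_zero_of_tendsto_exp hw))
  have hz0 : z ≠ 0 := by rintro rfl; simp at hz1
  have hlim2 := (continuousAt_zpow₀ z (q - p) (Or.inl hz0)).tendsto.comp hunit
  refine tendsto_nhds_unique hlim2 (hlim1.congr fun k => ?_)
  have hre := congrArg ((↑) : ℝ → ℂ) (sub_mul_mul_re_eq hv hrel (n k) (m k))
  push_cast at hre
  simp only [Function.comp_apply, exp_div_norm_exp, ← exp_int_mul, ← Complex.exp_add]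
  rw [show (2 * π * I * u).im = 2 * π * u.re by simp]
  congr 1
  push_cast
  linear_combination (2 * π * I) * hre.symm + (2 * π * I * q) * (re_add_im (w k)).symm

lemma pow_natAbs_eq_one_of_zpow_eq_one {α : Type*} [DivisionMonoid α] {a : α} {n : ℤ}
    (h : a ^ n = 1) : a ^ n.natAbs = 1 := by
  cases n <;> simp_all

theorem Hset_subset_roots_of_unity_general (u v : ℂ) (ξ η : ℂ)
    (hξ : ξ = Complex.exp (2 * Real.pi * Complex.I * u))
    (hη : η = Complex.exp (2 * Real.pi * Complex.I * v))
    (hne : u.re * v.im ≠ 0)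
    (p q : ℤ)
    (hrel : (q : ℝ) * (v.re * u.im) = (p : ℝ) * (u.re * v.im)) :
    (∀ z ∈ Hset ξ η, z ^ (q - p) = 1) ∧
      Hset ξ η ⊆ {z : ℂ | z ^ (q - p).natAbs = 1} := by
  subst hξ hη
  have key : ∀ z ∈ Hset _ _, z ^ (q - p) = 1 := fun z hz =>
    zpow_sub_eq_one_of_mem_Hset (right_ne_zero_of_mul hne) hrel hz
  exact ⟨key, fun z hz => pow_natAbs_eq_one_of_zpow_eq_one (key z hz)⟩

/-- Let ξ = e^{2πiu}, η = e^{2πiv}, with {ξ^m η^n} dense in ℂ,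
Re(u)·Im(v) ≠ 0, and integers p, q with q ≠ 0, p ≠ q and
q·Re(v)·Im(u) = p·Re(u)·Im(v). Then every z ∈ H(ξ,η) satisfies z^{q−p} = 1; in
particular H(ξ,η) is contained in the |q−p|-th roots of unity. -/
theorem Hset_subset_roots_of_unity (u v : ℂ) (ξ η : ℂ)
    (hξ : ξ = Complex.exp (2 * Real.pi * Complex.I * u))
    (hη : η = Complex.exp (2 * Real.pi * Complex.I * v))
    (hdense : Dense {z : ℂ | ∃ m n : ℤ, z = ξ ^ m * η ^ n})
    (hne : u.re * v.im ≠ 0)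
    (p q : ℤ) (hq : q ≠ 0) (hpq : p ≠ q)
    (hrel : (q : ℝ) * (v.re * u.im) = (p : ℝ) * (u.re * v.im)) :
    (∀ z ∈ Hset ξ η, z ^ (q - p) = 1) ∧
      Hset ξ η ⊆ {z : ℂ | z ^ (q - p).natAbs = 1} :=
  Hset_subset_roots_of_unity_general u v ξ η hξ hη hne p q hrel
end

section
/- There exist nonzero complex numbers ξ and η such that the set {ξ^m · η^n : m, n ∈ ℤ} is dense in ℂ and H(ξ,η) equals the whole unit circle {z ∈ ℂ : |z| = 1}. -/
open Filter Topology

/-!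
Take `ξ = exp (1 + 2πib)` and `η = exp (-γ + 2πid)`. Nested intervals produce `γ, b, d` and
integers `A k, B k, N k, Z k` for which `c = Bγ - A`, `y = Ab - N` and `z = Bd + Ab - Z` are
positive of sizes `σ³`, `σ` and `σ²`, where `σ k → 0`. Then `ξ^A η^B = exp (-c + 2πiz)`: its
modulus is much closer to `1` than its argument is to `0`, so the powers of exponent
`round (θ / 2πz)` tend to `exp (iθ)` and the closure of the group contains the unit circle.
As `0 < c → 0`, the group `ℤ + γℤ` of logarithms of the moduli is dense in `ℝ`, which gives
density. For `H`, the exponent `t = round (θ / 2πy)` makes `(ξ / |ξ|)^{tA} = exp (2πity)` tend to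
`exp (iθ)` while `ξ^{tA} η^{tB} = exp (t (-c + 2πiz)) → 1`, because `c` and `z` are `o(y)`.
-/

open Set Complex
open scoped Real

section NestedIntervals

variable (q s τ : ℕ → ℝ) (x₀ : ℝ)

/- The intervals `[approxSeq (k + 1), approxSeq (k + 1) + τ k / q k]` are nested, and on the `k`-th
one `q k * x + s k` lies in `[τ k, 2 τ k]` modulo `1`. -/
noncomputable def approxSeq : ℕ → ℝ
  | 0 => x₀
  | k + 1 => (⌈q k * approxSeq k + s k⌉ - s k + τ k) / q k

variable {k : ℕ}

lemma mul_approxSeq_succ_add (hq : q k ≠ 0) :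
    q k * approxSeq q s τ x₀ (k + 1) + s k = ⌈q k * approxSeq q s τ x₀ k + s k⌉ + τ k := by
  rw [approxSeq, mul_div_cancel₀ _ hq]
  ring

lemma approxSeq_le_succ (hq : 0 < q k) (hτ : 0 ≤ τ k) :
    approxSeq q s τ x₀ k ≤ approxSeq q s τ x₀ (k + 1) := by
  have h := mul_approxSeq_succ_add q s τ x₀ hq.ne'
  have := Int.le_ceil (q k * approxSeq q s τ x₀ k + s k)
  nlinarith

lemma approxSeq_succ_le (hq : 0 < q k) :
    approxSeq q s τ x₀ (k + 1) ≤ approxSeq q s τ x₀ k + (1 + τ k) / q k := by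
  have h := mul_approxSeq_succ_add q s τ x₀ hq.ne'
  have := Int.ceil_lt_add_one (q k * approxSeq q s τ x₀ k + s k)
  rw [← sub_le_iff_le_add', le_div_iff₀ hq]
  linarith

lemma approxSeq_add_div_antitone (hq : ∀ k, 0 < q k) (hτ : ∀ k, τ k ≤ 1 / 2)
    (hgrow : ∀ k, 2 * q k ≤ τ k * q (k + 1)) :
    Antitone fun k => approxSeq q s τ x₀ (k + 1) + τ k / q k := by
  refine antitone_nat_of_succ_le fun k => ?_
  have h1 := approxSeq_succ_le q s τ x₀ (hq (k + 1))
  have h2 : (1 + τ (k + 1)) / q (k + 1) + τ (k + 1) / q (k + 1) ≤ τ k / q k := by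
    rw [← add_div, div_le_div_iff₀ (hq _) (hq _)]
    nlinarith [hτ (k + 1), hgrow k, hq k]
  linarith

theorem exists_forall_mul_add_sub_int_mem_Icc (hq : ∀ k, 0 < q k) (hτ₀ : ∀ k, 0 ≤ τ k)
    (hτ : ∀ k, τ k ≤ 1 / 2) (hgrow : ∀ k, 2 * q k ≤ τ k * q (k + 1)) :
    ∃ x ∈ Icc x₀ (x₀ + 2 / q 0), ∃ n : ℕ → ℤ, ∀ k, q k * x + s k - n k ∈ Icc (τ k) (2 * τ k) := by
  set c := approxSeq q s τ x₀
  have hmono : Monotone fun k => c (k + 1) :=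
    monotone_nat_of_le_succ fun k => approxSeq_le_succ q s τ x₀ (hq _) (hτ₀ _)
  have hx := hmono.ciSup_mem_iInter_Icc_of_antitone
    (approxSeq_add_div_antitone q s τ x₀ hq hτ hgrow)
    fun k => le_add_of_nonneg_right (div_nonneg (hτ₀ k) (hq k).le)
  simp only [mem_iInter, mem_Icc] at hx
  set x := ⨆ k, c (k + 1)
  refine ⟨x, ⟨(approxSeq_le_succ q s τ x₀ (hq 0) (hτ₀ 0)).trans (hx 0).1, ?_⟩,
    fun k => ⌈q k * c k + s k⌉, fun k => ?_⟩
  · have h1 : c 1 ≤ x₀ + (1 + τ 0) / q 0 := approxSeq_succ_le q s τ x₀ (hq 0)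
    have h2 : (1 + τ 0) / q 0 + τ 0 / q 0 ≤ 2 / q 0 := by
      rw [← add_div]; gcongr; exacts [(hq 0).le, by linarith [hτ 0]]
    linarith [(hx 0).2]
  · have h := mul_approxSeq_succ_add q s τ x₀ (hq k).ne'
    have h1 := mul_le_mul_of_nonneg_left (hx k).1 (hq k).le
    have h2 := mul_le_mul_of_nonneg_left (hx k).2 (hq k).le
    rw [mul_add, mul_div_cancel₀ _ (hq k).ne'] at h2
    constructor <;> linarith

end NestedIntervals

lemma tendsto_round_div_mul_self {a : ℕ → ℝ} (ha : Tendsto a atTop (𝓝 0)) (ha0 : ∀ k, a k ≠ 0)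
    (θ : ℝ) : Tendsto (fun k => (round (θ / a k) : ℝ) * a k) atTop (𝓝 θ) := by
  have h : Tendsto (fun k => ((round (θ / a k) : ℝ) - θ / a k) * a k) atTop (𝓝 0) := by
    refine squeeze_zero_norm (a := fun k => 1 / 2 * ‖a k‖) (fun k => ?_) ?_
    · rw [norm_mul, Real.norm_eq_abs, abs_sub_comm]
      exact mul_le_mul_of_nonneg_right (abs_sub_round _) (norm_nonneg _)
    · simpa only [norm_zero, mul_zero] using ha.norm.const_mul (1 / 2)
  refine (by simpa using h.add_const θ : Tendsto _ _ (𝓝 θ)).congr fun k => ?_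
  rw [sub_mul, div_mul_cancel₀ _ (ha0 k)]
  ring

lemma tendsto_round_div_mul {a : ℕ → ℝ} {w : ℕ → ℂ} {v : ℂ} (ha : Tendsto a atTop (𝓝 0))
    (ha0 : ∀ k, a k ≠ 0) (hw : Tendsto (fun k => w k / a k) atTop (𝓝 v)) (θ : ℝ) :
    Tendsto (fun k => (round (θ / a k) : ℂ) * w k) atTop (𝓝 (θ * v)) := by
  refine ((tendsto_round_div_mul_self ha ha0 θ).ofReal.mul hw).congr fun k => ?_
  have : (a k : ℂ) ≠ 0 := ofReal_ne_zero.2 (ha0 k)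
  push_cast
  field_simp

lemma exp_mul_I_mem_closure {S : Set ℂ} {w : ℕ → ℂ} (hS : ∀ k (t : ℤ), exp (t * w k) ∈ S)
    (him : Tendsto (fun k => (w k).im) atTop (𝓝 0)) (him0 : ∀ k, (w k).im ≠ 0)
    (hre : Tendsto (fun k => (w k).re / (w k).im) atTop (𝓝 0)) (θ : ℝ) :
    exp (θ * I) ∈ closure S := by
  have hw : Tendsto (fun k => w k / (w k).im) atTop (𝓝 I) := by
    refine (by simpa using hre.ofReal.add_const I : Tendsto _ _ (𝓝 I)).congr fun k => ?_
    have : ((w k).im : ℂ) ≠ 0 := ofReal_ne_zero.2 (him0 k)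
    rw [eq_div_iff this]
    conv_rhs => rw [← re_add_im (w k)]
    field_simp
  exact mem_closure_of_tendsto (tendsto_round_div_mul him him0 hw θ).cexp
    (Eventually.of_forall fun k => hS k _)

lemma dense_of_exp_mul_I_mem_closure {S : Set ℂ} (hmul : ∀ g ∈ S, ∀ h ∈ S, g * h ∈ S)
    (hcirc : ∀ θ : ℝ, exp (θ * I) ∈ closure S)
    (hnorm : Dense {s : ℝ | ∃ g ∈ S, ‖g‖ = Real.exp s}) : Dense S := by
  have hclosed : IsClosed {s : ℝ | ∀ θ : ℝ, exp (s + θ * I) ∈ closure S} := by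
    simp only [ofPred_forall]
    exact isClosed_iInter fun θ => isClosed_closure.preimage (by fun_prop)
  have hexp : ∀ s θ : ℝ, exp (s + θ * I) ∈ closure S := by
    refine fun s => hclosed.closure_subset_iff.2 ?_ (hnorm s)
    rintro s ⟨g, hg, hgs⟩ θ
    have hpolar : exp (s + θ * I) = g * exp ((θ - arg g : ℝ) * I) := by
      calc exp (s + θ * I) = exp s * exp (arg g * I) * exp ((θ - arg g : ℝ) * I) := by
            rw [← Complex.exp_add, ← Complex.exp_add]; push_cast; ring_nf
        _ = g * exp ((θ - arg g : ℝ) * I) := by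
            rw [← ofReal_exp, ← hgs, norm_mul_exp_arg_mul_I]
    rw [hpolar]
    exact map_mem_closure (continuous_const_mul g) (hcirc _) fun h hh => hmul g hg h hh
  refine Dense.of_closure ((dense_compl_singleton (0 : ℂ)).mono ?_)
  rw [← Complex.range_exp]
  rintro _ ⟨z, rfl⟩
  rw [← re_add_im z]
  exact hexp _ _

lemma exp_zpow_mul_exp_zpow (α β : ℂ) (m n : ℤ) : exp α ^ m * exp β ^ n = exp (m * α + n * β) := by
  rw [← exp_int_mul, ← exp_int_mul, ← Complex.exp_add]

lemma tendsto_div_of_mem_Icc_pow {σ x y : ℕ → ℝ} {i j : ℕ} (hij : j < i)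
    (hσ : Tendsto σ atTop (𝓝 0)) (hσ0 : ∀ k, 0 < σ k)
    (hx : ∀ k, x k ∈ Icc (σ k ^ i) (2 * σ k ^ i)) (hy : ∀ k, σ k ^ j ≤ y k) :
    Tendsto (fun k => x k / y k) atTop (𝓝 0) := by
  have hlim : Tendsto (fun k => 2 * σ k ^ (i - j)) atTop (𝓝 0) := by
    simpa [zero_pow (Nat.sub_pos_of_lt hij).ne'] using (hσ.pow (i - j)).const_mul 2
  have hσj : ∀ k, 0 < σ k ^ j := fun k => pow_pos (hσ0 k) j
  refine squeeze_zero (fun k => div_nonneg ((pow_pos (hσ0 k) i).le.trans (hx k).1)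
    ((hσj k).le.trans (hy k))) (fun k => ?_) hlim
  calc x k / y k ≤ 2 * σ k ^ i / σ k ^ j :=
        div_le_div₀ (mul_nonneg zero_le_two (pow_pos (hσ0 k) i).le) (hx k).2 (hσj k) (hy k)
    _ = 2 * σ k ^ (i - j) := by rw [mul_div_assoc, pow_sub₀ _ (hσ0 k).ne' hij.le, div_eq_mul_inv]

/- A logarithm of `exp (1 + 2πib) ^ m * exp (-γ + 2πid) ^ n`, shifted by `2πir` to make its
imaginary part small. -/
noncomputable def reducedLog (γ b d : ℝ) (m n r : ℤ) : ℂ :=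
  m * (1 + 2 * π * b * I) + n * (-γ + 2 * π * d * I) - r * (2 * π * I)

section ExpLattice

variable {γ b d : ℝ}

lemma exp_int_mul_reducedLog (m n r t : ℤ) :
    exp (t * reducedLog γ b d m n r) =
      exp (1 + 2 * π * b * I) ^ (t * m) * exp (-γ + 2 * π * d * I) ^ (t * n) := by
  rw [exp_zpow_mul_exp_zpow, exp_eq_exp_iff_exists_int]
  exact ⟨-(t * r), by simp only [reducedLog]; push_cast; ring⟩

lemma reducedLog_eq (m n r : ℤ) :
    reducedLog γ b d m n r = (m - n * γ : ℝ) + (2 * π * (n * d + m * b - r) : ℝ) * I := by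
  simp only [reducedLog]; push_cast; ring

lemma reducedLog_re (m n r : ℤ) : (reducedLog γ b d m n r).re = m - n * γ := by
  simp [reducedLog_eq]

lemma reducedLog_im (m n r : ℤ) :
    (reducedLog γ b d m n r).im = 2 * π * (n * d + m * b - r) := by
  simp [reducedLog_eq]

variable {σ : ℕ → ℝ} {A B N Z : ℕ → ℤ}

theorem dense_exp_zpow_mul_exp_zpow (hσ : Tendsto σ atTop (𝓝 0)) (hσ0 : ∀ k, 0 < σ k)
    (hA : ∀ k, (B k : ℝ) * γ - A k ∈ Icc (σ k ^ 3) (2 * σ k ^ 3))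
    (hZ : ∀ k, (B k : ℝ) * d + A k * b - Z k ∈ Icc (σ k ^ 2) (2 * σ k ^ 2)) :
    Dense {z : ℂ | ∃ m n : ℤ, z = exp (1 + 2 * π * b * I) ^ m * exp (-γ + 2 * π * d * I) ^ n} := by
  have hc : Tendsto (fun k => (B k : ℝ) * γ - A k) atTop (𝓝 0) := by
    simpa using tendsto_div_of_mem_Icc_pow (y := 1) three_pos hσ hσ0 hA (by simp)
  refine dense_of_exp_mul_I_mem_closure ?_
    (exp_mul_I_mem_closure (w := fun k => reducedLog γ b d (A k) (B k) (Z k)) ?_ ?_ ?_ ?_) ?_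
  · rintro _ ⟨m, n, rfl⟩ _ ⟨m', n', rfl⟩
    exact ⟨m + m', n + n', by rw [zpow_add₀ (exp_ne_zero _), zpow_add₀ (exp_ne_zero _)]; ring⟩
  · exact fun k t => ⟨_, _, exp_int_mul_reducedLog _ _ _ t⟩
  · simp only [reducedLog_im]
    simpa using (tendsto_div_of_mem_Icc_pow (y := 1) two_pos hσ hσ0 hZ (by simp)).const_mul (2 * π)
  · intro k
    rw [reducedLog_im]
    exact mul_ne_zero (by positivity) (pow_pos (hσ0 k) 2 |>.trans_le (hZ k).1).ne'
  · simp only [reducedLog_re, reducedLog_im]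
    have := (tendsto_div_of_mem_Icc_pow (by norm_num : 2 < 3) hσ hσ0 hA
      fun k => (hZ k).1).const_mul (-(2 * π)⁻¹)
    rw [mul_zero] at this
    refine this.congr fun k => ?_
    field_simp
    ring
  · refine ((AddSubgroup.closure {(1 : ℝ), -γ}).dense_of_not_isolated_zero fun ε hε => ?_).mono ?_
    · obtain ⟨k, hk⟩ := ((tendsto_order.1 hc).2 ε hε).exists
      have hmem : (B k : ℝ) * γ - A k ∈ AddSubgroup.closure {(1 : ℝ), -γ} :=
        AddSubgroup.mem_closure_pair.2 ⟨-A k, -B k, by simp only [zsmul_eq_mul]; push_cast; ring⟩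
      exact ⟨_, hmem, (pow_pos (hσ0 k) 3).trans_le (hA k).1, hk⟩
    · intro s hs
      obtain ⟨m, n, rfl⟩ := AddSubgroup.mem_closure_pair.1 hs
      exact ⟨_, ⟨m, n, rfl⟩, by rw [exp_zpow_mul_exp_zpow, norm_exp]; simp⟩

theorem Hset_exp_exp_eq (hσ : Tendsto σ atTop (𝓝 0)) (hσ0 : ∀ k, 0 < σ k)
    (hA : ∀ k, (B k : ℝ) * γ - A k ∈ Icc (σ k ^ 3) (2 * σ k ^ 3))
    (hN : ∀ k, (A k : ℝ) * b - N k ∈ Icc (σ k) (2 * σ k))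
    (hZ : ∀ k, (B k : ℝ) * d + A k * b - Z k ∈ Icc (σ k ^ 2) (2 * σ k ^ 2)) :
    Hset (exp (1 + 2 * π * b * I)) (exp (-γ + 2 * π * d * I)) = {z | ‖z‖ = 1} := by
  ext z
  refine ⟨fun h => h.1, fun hz => ⟨hz, ?_⟩⟩
  have hN' : ∀ k, (A k : ℝ) * b - N k ∈ Icc (σ k ^ 1) (2 * σ k ^ 1) := by simpa using hN
  set a : ℕ → ℝ := fun k => 2 * π * (A k * b - N k)
  have ha : Tendsto a atTop (𝓝 0) := by
    simpa using (tendsto_div_of_mem_Icc_pow (y := 1) one_pos hσ hσ0 hN' (by simp)).const_mul (2 * π)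
  have ha0 : ∀ k, a k ≠ 0 := fun k =>
    mul_ne_zero (by positivity) ((hσ0 k).trans_le (hN k).1).ne'
  refine ⟨fun k => round (arg z / a k) * A k, fun k => round (arg z / a k) * B k, ?_, ?_⟩
  · have hw : Tendsto (fun k => reducedLog γ b d (A k) (B k) (Z k) / a k) atTop (𝓝 0) := by
      have hc := tendsto_div_of_mem_Icc_pow (by norm_num : 1 < 3) hσ hσ0 hA fun k => (hN' k).1
      have hz := tendsto_div_of_mem_Icc_pow (by norm_num : 1 < 2) hσ hσ0 hZ fun k => (hN' k).1
      have := (hc.ofReal.const_mul (-(2 * π : ℂ)⁻¹)).add (hz.ofReal.mul_const I)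
      simp only [ofReal_zero, mul_zero, zero_mul, add_zero] at this
      refine this.congr fun k => ?_
      have : (A k * b - N k : ℂ) ≠ 0 := by exact_mod_cast ((hσ0 k).trans_le (hN k).1).ne'
      simp only [reducedLog_eq, a]
      push_cast
      field_simp
      ring
    have := (tendsto_round_div_mul ha ha0 hw (arg z)).cexp
    rw [mul_zero, Complex.exp_zero] at this
    exact this.congr fun k => exp_int_mul_reducedLog _ _ _ _
  · have hunit : exp (1 + 2 * π * b * I) / (‖exp (1 + 2 * π * b * I)‖ : ℂ) =
        exp (2 * π * b * I) := by
      rw [norm_exp, ofReal_exp, ← Complex.exp_sub]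
      simp
    have hI : Tendsto (fun k => (a k * I : ℂ) / a k) atTop (𝓝 I) :=
      tendsto_const_nhds.congr fun k => by field_simp [ofReal_ne_zero.2 (ha0 k)]
    have := (tendsto_round_div_mul ha ha0 hI (arg z)).cexp
    have hpolar := norm_mul_exp_arg_mul_I z
    rw [show ‖z‖ = 1 from hz, ofReal_one, one_mul] at hpolar
    rw [hpolar] at this
    refine this.congr fun k => ?_
    rw [hunit, ← exp_int_mul, exp_eq_exp_iff_exists_int]
    exact ⟨-(round (arg z / a k) * N k), by simp only [a]; push_cast; ring⟩

end ExpLattice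

section Parameters

noncomputable def approxScale (k : ℕ) : ℝ := (1 / 2) ^ (k + 1)

def approxDenom (k : ℕ) : ℤ := 2 ^ (4 * (k + 1) ^ 2)

variable {k : ℕ}

lemma approxScale_pos : 0 < approxScale k := by unfold approxScale; positivity

lemma tendsto_approxScale : Tendsto approxScale atTop (𝓝 0) :=
  (tendsto_pow_atTop_nhds_zero_of_lt_one (by norm_num) (by norm_num)).comp (tendsto_add_atTop_nat 1)

lemma approxScale_pow_le_half {j : ℕ} (hj : j ≠ 0) : approxScale k ^ j ≤ 1 / 2 := by
  unfold approxScale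
  rw [← pow_mul]
  exact pow_le_of_le_one (by norm_num) (by norm_num) (by positivity)

lemma two_pow_mul_approxDenom_le {m j : ℕ} (hm : m ≤ 3) (hj : j ≤ 3) :
    2 ^ m * (approxDenom k : ℝ) ≤ approxScale k ^ j * approxDenom (k + 1) := by
  simp only [approxScale, approxDenom, Int.cast_pow, Int.cast_ofNat]
  rw [← pow_mul, one_div, inv_pow, ← div_eq_inv_mul, le_div_iff₀ (by positivity), ← pow_add,
    ← pow_add]
  exact pow_le_pow_right₀ one_le_two (by nlinarith)

lemma sixteen_le_approxDenom : (16 : ℝ) ≤ approxDenom k := by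
  simp only [approxDenom, Int.cast_pow, Int.cast_ofNat]
  calc (16 : ℝ) = 2 ^ 4 := by norm_num
    _ ≤ 2 ^ (4 * (k + 1) ^ 2) := pow_le_pow_right₀ one_le_two (by
        have := Nat.one_le_pow 2 (k + 1) k.succ_pos; omega)

lemma approxDenom_pos : (0 : ℝ) < approxDenom k :=
  lt_of_lt_of_le (by norm_num) sixteen_le_approxDenom

lemma exists_approxDenom_mul_sub_mem_Icc : ∃ γ ∈ Icc (1 / 4 : ℝ) (1 / 2), ∃ A : ℕ → ℤ,
    ∀ k, (approxDenom k : ℝ) * γ - A k ∈ Icc (approxScale k ^ 3) (2 * approxScale k ^ 3) := by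
  obtain ⟨γ, hγ, A, hA⟩ := exists_forall_mul_add_sub_int_mem_Icc (fun k => approxDenom k) 0
    (fun k => approxScale k ^ 3) (1 / 4) (fun _ => approxDenom_pos)
    (fun _ => (pow_pos approxScale_pos 3).le) (fun _ => approxScale_pow_le_half three_ne_zero)
    (fun _ => by simpa using two_pow_mul_approxDenom_le (m := 1) (j := 3) (by norm_num) le_rfl)
  refine ⟨γ, ⟨hγ.1, hγ.2.trans ?_⟩, A, fun k => by simpa using hA k⟩
  have := @sixteen_le_approxDenom 0
  rw [add_comm, ← le_sub_iff_add_le, div_le_iff₀ (by linarith)]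
  linarith

variable {γ : ℝ} {A : ℕ → ℤ}

lemma approxNum_pos (hγ : γ ∈ Icc (1 / 4 : ℝ) (1 / 2))
    (hA : ∀ k, (approxDenom k : ℝ) * γ - A k ∈ Icc (approxScale k ^ 3) (2 * approxScale k ^ 3))
    (k : ℕ) : 0 < (A k : ℝ) := by
  have := (hA k).2
  have := @sixteen_le_approxDenom k
  have := approxScale_pow_le_half (k := k) three_ne_zero
  nlinarith [hγ.1]

lemma two_mul_approxNum_le (hγ : γ ∈ Icc (1 / 4 : ℝ) (1 / 2))
    (hA : ∀ k, (approxDenom k : ℝ) * γ - A k ∈ Icc (approxScale k ^ 3) (2 * approxScale k ^ 3))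
    (k : ℕ) : 2 * (A k : ℝ) ≤ approxScale k * A (k + 1) := by
  have hB := @sixteen_le_approxDenom (k + 1)
  have hsmall : 2 * (A k : ℝ) ≤ approxDenom k := by
    have := mul_le_mul_of_nonneg_left hγ.2 (@approxDenom_pos k).le
    linarith [(hA k).1, pow_pos (@approxScale_pos k) 3]
  have hlarge : (approxDenom (k + 1) : ℝ) / 8 ≤ A (k + 1) := by
    have := mul_le_mul_of_nonneg_left hγ.1 (@approxDenom_pos (k + 1)).le
    linarith [(hA (k + 1)).2, approxScale_pow_le_half (k := k + 1) three_ne_zero]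
  have := two_pow_mul_approxDenom_le (k := k) (m := 3) (j := 1) le_rfl (by norm_num)
  have := mul_le_mul_of_nonneg_left hlarge (@approxScale_pos k).le
  nlinarith

end Parameters

/-- There exist nonzero ξ, η ∈ ℂ such that {ξ^m η^n : m, n ∈ ℤ}
is dense in ℂ and H(ξ,η) equals the whole unit circle. -/
theorem exists_second_type_group :
    ∃ ξ η : ℂ, ξ ≠ 0 ∧ η ≠ 0 ∧
      Dense {z : ℂ | ∃ m n : ℤ, z = ξ ^ m * η ^ n} ∧
      Hset ξ η = {z : ℂ | ‖z‖ = 1} := by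
  obtain ⟨γ, hγ, A, hA⟩ := exists_approxDenom_mul_sub_mem_Icc
  obtain ⟨b, -, N, hN⟩ := exists_forall_mul_add_sub_int_mem_Icc (fun k => (A k : ℝ)) 0
    approxScale 0 (approxNum_pos hγ hA) (fun _ => approxScale_pos.le)
    (fun _ => by simpa using approxScale_pow_le_half one_ne_zero) (two_mul_approxNum_le hγ hA)
  obtain ⟨d, -, Z, hZ⟩ := exists_forall_mul_add_sub_int_mem_Icc (fun k => (approxDenom k : ℝ))
    (fun k => A k * b) (fun k => approxScale k ^ 2) 0 (fun _ => approxDenom_pos)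
    (fun _ => (pow_pos approxScale_pos 2).le) (fun _ => approxScale_pow_le_half two_ne_zero)
    (fun _ => by
      simpa using two_pow_mul_approxDenom_le (m := 1) (j := 2) (by norm_num) (by norm_num))
  refine ⟨_, _, exp_ne_zero _, exp_ne_zero _,
    dense_exp_zpow_mul_exp_zpow tendsto_approxScale (fun _ => approxScale_pos) hA hZ,
    Hset_exp_exp_eq tendsto_approxScale (fun _ => approxScale_pos) hA (by simpa using hN) hZ⟩
end

section
/- There exist irrational real numbers α, β, γ in the open interval (0,1), a strictly increasing sequence of positive integers (q_k), and integer sequences (p_k), (r_k), (s_k), such that: (i) for all integers l, m, k, the equation lβ + mγ = k implies l = m = k = 0 (i.e., 1, β, γ are linearly independent over ℚ); and (ii) q_k·α − p_k → 0, (q_k + 1)·β − r_k → 0, and (q_k + 1)·γ − s_k → 0 as k → ∞. -/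
open Filter Topology

section SimApproxConstruction
open Finset

namespace SimApprox

def qq : ℕ → ℕ
  | 0 => 2
  | n+1 => qq n * (1 + qq n * (qq n + 1))

lemma qq_two_le (n : ℕ) : 2 ≤ qq n := by
  induction n with
  | zero => simp [qq]
  | succ n ih => calc 2 ≤ qq n := ih
                  _ ≤ qq n * (1 + qq n * (qq n + 1)) := Nat.le_mul_of_pos_right _ (by positivity)
                  _ = qq (n+1) := rfl

lemma qq_succ (n : ℕ) : qq (n+1) = qq n * (1 + qq n * (qq n + 1)) := rfl

lemma qq_succ_add_one (n : ℕ) : qq (n+1) + 1 = (qq n + 1) * (1 + qq n * qq n) := by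
  rw [qq_succ]; ring

lemma seven_mul_le (n : ℕ) : 7 * qq n ≤ qq (n+1) := by
  have h := qq_two_le n
  rw [qq_succ]
  calc 7 * qq n = qq n * 7 := by ring
    _ ≤ qq n * (1 + qq n * (qq n + 1)) := by
        have : 7 ≤ 1 + qq n * (qq n + 1) := by nlinarith
        exact Nat.mul_le_mul_left _ this

lemma qq_strictMono : StrictMono qq := by
  apply strictMono_nat_of_lt_succ
  intro n
  have := seven_mul_le n
  have h2 := qq_two_le n
  omega

lemma qq_ge (n : ℕ) : 2 * 7 ^ n ≤ qq n := by
  induction n with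
  | zero => simp [qq]
  | succ n ih =>
    calc 2 * 7 ^ (n+1) = 7 * (2 * 7 ^ n) := by ring
      _ ≤ 7 * qq n := by omega
      _ ≤ qq (n+1) := seven_mul_le n

lemma qq_dvd {j n : ℕ} (h : j ≤ n) : qq j ∣ qq n := by
  induction n with
  | zero => simp_all
  | succ n ih =>
    rcases Nat.lt_or_ge j (n+1) with h' | h'
    · exact (ih (by omega)).trans ⟨_, qq_succ n⟩
    · have : j = n+1 := by omega
      simp [this]

lemma qq_add_one_dvd {j n : ℕ} (h : j ≤ n) : qq j + 1 ∣ qq n + 1 := by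
  induction n with
  | zero => simp_all
  | succ n ih =>
    rcases Nat.lt_or_ge j (n+1) with h' | h'
    · exact (ih (by omega)).trans ⟨_, qq_succ_add_one n⟩
    · have : j = n+1 := by omega
      simp [this]

/-! ### generic geometric bounds -/

lemma geo_pow (u : ℕ → ℝ) (hr : ∀ i, u (i+1) ≤ (2/5) * u i) (hpos : ∀ i, 0 ≤ u i) (i : ℕ) :
    u i ≤ (2/5) ^ i * u 0 := by
  induction i with
  | zero => simp
  | succ i ih =>
    calc u (i+1) ≤ (2/5) * u i := hr i
      _ ≤ (2/5) * ((2/5)^i * u 0) := by nlinarith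
      _ = (2/5)^(i+1) * u 0 := by ring

lemma geo_summable (u : ℕ → ℝ) (hpos : ∀ i, 0 ≤ u i) (hr : ∀ i, u (i+1) ≤ (2/5) * u i) :
    Summable u := by
  apply Summable.of_nonneg_of_le hpos (geo_pow u hr hpos)
  exact (summable_geometric_of_lt_one (by norm_num) (by norm_num)).mul_right _

lemma geo_tsum_le (u : ℕ → ℝ) (hpos : ∀ i, 0 ≤ u i) (hr : ∀ i, u (i+1) ≤ (2/5) * u i) :
    ∑' i, u i ≤ (5/3) * u 0 := by
  have h1 : ∑' i, u i ≤ ∑' i, (2/5:ℝ)^i * u 0 := by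
    apply Summable.tsum_le_tsum (geo_pow u hr hpos) (geo_summable u hpos hr)
    exact (summable_geometric_of_lt_one (by norm_num) (by norm_num)).mul_right _
  rw [tsum_mul_right, tsum_geometric_of_lt_one (by norm_num) (by norm_num)] at h1
  calc ∑' i, u i ≤ (1 - 2/5)⁻¹ * u 0 := h1
    _ = (5/3) * u 0 := by norm_num

/-- The shifted sequence facts: tail sum bounds. -/
lemma tail_bounds (u : ℕ → ℝ) (hpos : ∀ i, 0 < u i) (hr : ∀ i, u (i+1) ≤ (2/5) * u i) (n : ℕ) :
    0 < ∑' i, u (i + n) ∧ ∑' i, u (i + n) ≤ (5/3) * u n := by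
  set v : ℕ → ℝ := fun i => u (i + n) with hv
  have hvpos : ∀ i, 0 < v i := fun i => hpos _
  have hvr : ∀ i, v (i+1) ≤ (2/5) * v i := fun i => by
    simpa [hv, Nat.add_right_comm] using hr (i + n)
  have hsum : Summable v := geo_summable v (fun i => (hvpos i).le) hvr
  constructor
  · exact Summable.tsum_pos hsum (fun i => (hvpos i).le) 0 (hvpos 0)
  · simpa [hv] using geo_tsum_le v (fun i => (hvpos i).le) hvr

/-! ### the three term sequences -/

noncomputable def tA (j : ℕ) : ℝ := 1 / (qq j : ℝ)
noncomputable def tB (j : ℕ) : ℝ := 1 / ((qq j : ℝ) + 1)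
def aa (j : ℕ) : ℕ := 1 + j % 2
noncomputable def tC (j : ℕ) : ℝ := (aa j : ℝ) / ((qq j : ℝ) + 1)

lemma qq_pos_real (j : ℕ) : (0:ℝ) < qq j := by
  have := qq_two_le j; positivity

lemma tA_pos (j : ℕ) : 0 < tA j := by
  have := qq_pos_real j; unfold tA; positivity

lemma tB_pos (j : ℕ) : 0 < tB j := by
  have := qq_pos_real j; unfold tB; positivity

lemma aa_one_le (j : ℕ) : 1 ≤ aa j := by unfold aa; omega
lemma aa_le_two (j : ℕ) : aa j ≤ 2 := by unfold aa; omega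

lemma tC_pos (j : ℕ) : 0 < tC j := by
  have := qq_pos_real j; have := aa_one_le j
  unfold tC
  have : (1:ℝ) ≤ aa j := by exact_mod_cast aa_one_le j
  positivity

lemma tA_ratio (j : ℕ) : tA (j+1) ≤ (2/5) * tA j := by
  unfold tA
  have h7 : (7:ℝ) * qq j ≤ qq (j+1) := by exact_mod_cast seven_mul_le j
  have e : (2/5:ℝ) * (1 / qq j) = 2 / (5 * qq j) := by ring
  rw [e, div_le_div_iff₀ (qq_pos_real _) (by have := qq_pos_real j; linarith)]
  nlinarith [qq_pos_real j]

lemma five_le_aux (j : ℕ) : (5:ℝ) * ((qq j:ℝ) + 1) ≤ (qq (j+1) : ℝ) + 1 := by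
  have h : ((qq (j+1) : ℕ) + 1 : ℕ) = (qq j + 1) * (1 + qq j * qq j) := qq_succ_add_one j
  have h2 : (2:ℝ) ≤ qq j := by exact_mod_cast qq_two_le j
  have : ((qq (j+1):ℝ) + 1) = ((qq j:ℝ) + 1) * (1 + (qq j:ℝ) * qq j) := by exact_mod_cast h
  rw [this]
  nlinarith

lemma tB_ratio (j : ℕ) : tB (j+1) ≤ (2/5) * tB j := by
  unfold tB
  have h1 : (0:ℝ) < (qq j:ℝ) + 1 := by have := qq_pos_real j; linarith
  have h2 : (0:ℝ) < (qq (j+1):ℝ) + 1 := by have := qq_pos_real (j+1); linarith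
  have e : (2/5:ℝ) * (1 / ((qq j:ℝ)+1)) = 2 / (5 * ((qq j:ℝ)+1)) := by
    rw [div_mul_div_comm, mul_one]
  rw [e, div_le_div_iff₀ h2 (by linarith)]
  have := five_le_aux j
  nlinarith

lemma tC_ratio (j : ℕ) : tC (j+1) ≤ (2/5) * tC j := by
  unfold tC
  have h1 : (0:ℝ) < (qq j:ℝ) + 1 := by have := qq_pos_real j; linarith
  have h2 : (0:ℝ) < (qq (j+1):ℝ) + 1 := by have := qq_pos_real (j+1); linarith
  have ha1 : (1:ℝ) ≤ aa j := by exact_mod_cast aa_one_le j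
  have ha2 : (aa (j+1):ℝ) ≤ 2 := by exact_mod_cast aa_le_two (j+1)
  have ha0 : (0:ℝ) ≤ aa (j+1) := by positivity
  have e : (2/5:ℝ) * ((aa j:ℝ) / ((qq j:ℝ)+1)) = (2 * aa j) / (5 * ((qq j:ℝ)+1)) := by
    rw [div_mul_div_comm]
  rw [e, div_le_div_iff₀ h2 (by linarith)]
  have := five_le_aux j
  nlinarith

noncomputable def α : ℝ := ∑' j, tA j
noncomputable def β : ℝ := ∑' j, tB j
noncomputable def γ : ℝ := ∑' j, tC j

lemma tA_summable : Summable tA := geo_summable _ (fun i => (tA_pos i).le) tA_ratio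
lemma tB_summable : Summable tB := geo_summable _ (fun i => (tB_pos i).le) tB_ratio
lemma tC_summable : Summable tC := geo_summable _ (fun i => (tC_pos i).le) tC_ratio

end SimApprox

namespace SimApprox2
open SimApprox

def pInt (n : ℕ) : ℤ := ∑ j ∈ range (n+1), ((qq n / qq j : ℕ) : ℤ)
def rInt (n : ℕ) : ℤ := ∑ j ∈ range (n+1), (((qq n + 1) / (qq j + 1) : ℕ) : ℤ)
def sInt (n : ℕ) : ℤ := ∑ j ∈ range (n+1), ((aa j * ((qq n + 1) / (qq j + 1)) : ℕ) : ℤ)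

lemma err_a (n : ℕ) :
    (qq n : ℝ) * α - (pInt n : ℝ) = (qq n : ℝ) * ∑' i, tA (i + (n+1)) := by
  have h := Summable.sum_add_tsum_nat_add (f := tA) (n+1) tA_summable
  have hfin : (qq n : ℝ) * ∑ j ∈ range (n+1), tA j = (pInt n : ℝ) := by
    rw [mul_sum, pInt, Int.cast_sum]
    apply sum_congr rfl
    intro j hj
    have hdvd : qq j ∣ qq n := qq_dvd (Nat.lt_succ_iff.mp (mem_range.mp hj))
    rw [Int.cast_natCast, Nat.cast_div hdvd (by exact_mod_cast (qq_pos_real j).ne'), tA]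
    ring
  rw [α, ← h]
  rw [mul_add, hfin]
  ring

lemma err_b (n : ℕ) :
    ((qq n : ℝ) + 1) * β - (rInt n : ℝ) = ((qq n : ℝ) + 1) * ∑' i, tB (i + (n+1)) := by
  have h := Summable.sum_add_tsum_nat_add (f := tB) (n+1) tB_summable
  have hfin : ((qq n : ℝ) + 1) * ∑ j ∈ range (n+1), tB j = (rInt n : ℝ) := by
    rw [mul_sum, rInt, Int.cast_sum]
    apply sum_congr rfl
    intro j hj
    have hdvd : qq j + 1 ∣ qq n + 1 := qq_add_one_dvd (Nat.lt_succ_iff.mp (mem_range.mp hj))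
    have hne : ((qq j + 1 : ℕ) : ℝ) ≠ 0 := by positivity
    rw [Int.cast_natCast, Nat.cast_div hdvd hne, tB]
    push_cast
    ring
  rw [β, ← h, mul_add, hfin]
  ring

lemma err_c (n : ℕ) :
    ((qq n : ℝ) + 1) * γ - (sInt n : ℝ) = ((qq n : ℝ) + 1) * ∑' i, tC (i + (n+1)) := by
  have h := Summable.sum_add_tsum_nat_add (f := tC) (n+1) tC_summable
  have hfin : ((qq n : ℝ) + 1) * ∑ j ∈ range (n+1), tC j = (sInt n : ℝ) := by
    rw [mul_sum, sInt, Int.cast_sum]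
    apply sum_congr rfl
    intro j hj
    have hdvd : qq j + 1 ∣ qq n + 1 := qq_add_one_dvd (Nat.lt_succ_iff.mp (mem_range.mp hj))
    have hne : ((qq j + 1 : ℕ) : ℝ) ≠ 0 := by positivity
    rw [Int.cast_natCast, Nat.cast_mul, Nat.cast_div hdvd hne, tC]
    push_cast
    ring
  rw [γ, ← h, mul_add, hfin]
  ring

end SimApprox2

namespace SimApprox3
open SimApprox SimApprox2

noncomputable def eA (n : ℕ) : ℝ := (qq n : ℝ) * α - (pInt n : ℝ)
noncomputable def eB (n : ℕ) : ℝ := ((qq n : ℝ) + 1) * β - (rInt n : ℝ)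
noncomputable def eC (n : ℕ) : ℝ := ((qq n : ℝ) + 1) * γ - (sInt n : ℝ)

lemma tailA (n : ℕ) : 0 < ∑' i, tA (i + n) ∧ ∑' i, tA (i + n) ≤ (5/3) * tA n :=
  tail_bounds tA tA_pos tA_ratio n
lemma tailB (n : ℕ) : 0 < ∑' i, tB (i + n) ∧ ∑' i, tB (i + n) ≤ (5/3) * tB n :=
  tail_bounds tB tB_pos tB_ratio n
lemma tailC (n : ℕ) : 0 < ∑' i, tC (i + n) ∧ ∑' i, tC (i + n) ≤ (5/3) * tC n :=
  tail_bounds tC tC_pos tC_ratio n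

lemma eA_pos (n : ℕ) : 0 < eA n := by
  rw [eA, err_a]
  exact mul_pos (qq_pos_real n) (tailA (n+1)).1

lemma eB_pos (n : ℕ) : 0 < eB n := by
  rw [eB, err_b]
  exact mul_pos (by have := qq_pos_real n; linarith) (tailB (n+1)).1

lemma eC_pos (n : ℕ) : 0 < eC n := by
  rw [eC, err_c]
  exact mul_pos (by have := qq_pos_real n; linarith) (tailC (n+1)).1

lemma eA_le (n : ℕ) : eA n ≤ (10/3) / (qq n : ℝ) := by
  rw [eA, err_a]
  have h1 := (tailA (n+1)).2
  have hq := qq_pos_real n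
  have hq1 := qq_pos_real (n+1)
  have key : (qq n : ℝ) * ((5/3) * tA (n+1)) ≤ (10/3) / (qq n : ℝ) := by
    rw [tA]
    have eL : (qq n : ℝ) * ((5/3) * (1 / (qq (n+1) : ℝ))) = ((qq n:ℝ) * 5) / (3 * (qq (n+1):ℝ)) := by
      field_simp
    rw [eL, div_le_div_iff₀ (by linarith) hq]
    have hs : ((qq (n+1) : ℕ) : ℝ) = (qq n : ℝ) * (1 + (qq n:ℝ) * ((qq n:ℝ) + 1)) := by
      exact_mod_cast congrArg (Nat.cast : ℕ → ℝ) (qq_succ n)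
    nlinarith
  calc (qq n : ℝ) * ∑' i, tA (i + (n+1)) ≤ (qq n : ℝ) * ((5/3) * tA (n+1)) := by
        exact mul_le_mul_of_nonneg_left h1 hq.le
    _ ≤ (10/3) / (qq n : ℝ) := key

lemma eB_le (n : ℕ) : eB n ≤ (10/3) / (qq n : ℝ) := by
  rw [eB, err_b]
  have h1 := (tailB (n+1)).2
  have hq := qq_pos_real n
  have hq1 := qq_pos_real (n+1)
  have hp : (0:ℝ) < (qq n : ℝ) + 1 := by linarith
  have key : ((qq n : ℝ) + 1) * ((5/3) * tB (n+1)) ≤ (10/3) / (qq n : ℝ) := by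
    rw [tB]
    have eL : ((qq n : ℝ) + 1) * ((5/3) * (1 / ((qq (n+1) : ℝ) + 1))) = (((qq n:ℝ) + 1) * 5) / (3 * ((qq (n+1):ℝ) + 1)) := by
      field_simp
    rw [eL, div_le_div_iff₀ (by linarith) hq]
    have hs : ((qq (n+1) : ℕ) : ℝ) + 1 = ((qq n : ℝ) + 1) * (1 + (qq n:ℝ) * (qq n:ℝ)) := by
      exact_mod_cast congrArg (Nat.cast : ℕ → ℝ) (qq_succ_add_one n)
    nlinarith
  calc ((qq n : ℝ) + 1) * ∑' i, tB (i + (n+1)) ≤ ((qq n : ℝ) + 1) * ((5/3) * tB (n+1)) := by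
        exact mul_le_mul_of_nonneg_left h1 hp.le
    _ ≤ (10/3) / (qq n : ℝ) := key

lemma eC_le (n : ℕ) : eC n ≤ (20/3) / (qq n : ℝ) := by
  rw [eC, err_c]
  have h1 := (tailC (n+1)).2
  have hq := qq_pos_real n
  have hq1 := qq_pos_real (n+1)
  have hp : (0:ℝ) < (qq n : ℝ) + 1 := by linarith
  have ha : (aa (n+1) : ℝ) ≤ 2 := by exact_mod_cast aa_le_two (n+1)
  have key : ((qq n : ℝ) + 1) * ((5/3) * tC (n+1)) ≤ (20/3) / (qq n : ℝ) := by
    rw [tC]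
    have eL : ((qq n : ℝ) + 1) * ((5/3) * ((aa (n+1) : ℝ) / ((qq (n+1) : ℝ) + 1))) = (((qq n:ℝ) + 1) * 5 * (aa (n+1):ℝ)) / (3 * ((qq (n+1):ℝ) + 1)) := by
      field_simp
    rw [eL, div_le_div_iff₀ (by linarith) hq]
    have hs : ((qq (n+1) : ℕ) : ℝ) + 1 = ((qq n : ℝ) + 1) * (1 + (qq n:ℝ) * (qq n:ℝ)) := by
      exact_mod_cast congrArg (Nat.cast : ℕ → ℝ) (qq_succ_add_one n)
    nlinarith
  calc ((qq n : ℝ) + 1) * ∑' i, tC (i + (n+1)) ≤ ((qq n : ℝ) + 1) * ((5/3) * tC (n+1)) := by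
        exact mul_le_mul_of_nonneg_left h1 hp.le
    _ ≤ (20/3) / (qq n : ℝ) := key

lemma qq_tendsto : Tendsto (fun n => (qq n : ℝ)) atTop atTop :=
  tendsto_natCast_atTop_atTop.comp qq_strictMono.tendsto_atTop

lemma bound_tendsto (c : ℝ) : Tendsto (fun n => c / (qq n : ℝ)) atTop (𝓝 0) :=
  qq_tendsto.const_div_atTop c

lemma eA_tendsto : Tendsto eA atTop (𝓝 0) := by
  apply squeeze_zero (fun n => (eA_pos n).le) eA_le (bound_tendsto (10/3))

lemma eB_tendsto : Tendsto eB atTop (𝓝 0) := by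
  apply squeeze_zero (fun n => (eB_pos n).le) eB_le (bound_tendsto (10/3))

lemma eC_tendsto : Tendsto eC atTop (𝓝 0) := by
  apply squeeze_zero (fun n => (eC_pos n).le) eC_le (bound_tendsto (20/3))

end SimApprox3

namespace SimApprox4
open SimApprox SimApprox2 SimApprox3

lemma irrational_of_int_approx (x : ℝ) (Q : ℕ → ℕ) (P : ℕ → ℤ) (e : ℕ → ℝ)
    (he : ∀ n, (Q n : ℝ) * x - (P n : ℝ) = e n)
    (hpos : ∀ n, 0 < e n) (hto : Tendsto e atTop (𝓝 0)) : Irrational x := by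
  rintro ⟨y, hy⟩
  have hden : (0:ℝ) < (y.den : ℝ) := by exact_mod_cast y.pos
  set z : ℕ → ℤ := fun n => Q n * y.num - P n * y.den with hz
  have hnum : ((y.num : ℝ)) = x * (y.den : ℝ) := by
    rw [← hy, Rat.cast_def]
    field_simp
  have hcast : ∀ n, (z n : ℝ) = (y.den : ℝ) * e n := by
    intro n
    have h1 := he n
    simp only [hz]
    push_cast
    rw [hnum]
    nlinarith [h1]
  have hzto : Tendsto (fun n => (z n : ℝ)) atTop (𝓝 0) := by
    have := hto.const_mul (y.den : ℝ)
    simp only [mul_zero] at this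
    simpa [hcast] using this
  have hev : ∀ᶠ n in atTop, |(z n : ℝ)| < 1 := by
    have := hzto.abs
    simp only [abs_zero] at this
    exact this.eventually_lt_const one_pos
  obtain ⟨n, hn⟩ := hev.exists
  have hzn : z n = 0 := by
    have h1 : ((|z n| : ℤ) : ℝ) < 1 := by push_cast; exact hn
    have : |z n| < 1 := by exact_mod_cast h1
    rwa [Int.abs_lt_one_iff] at this
  have : (y.den : ℝ) * e n = 0 := by rw [← hcast, hzn]; simp
  have := hpos n
  nlinarith

lemma tC_eq (j : ℕ) : tC j = (aa j : ℝ) * tB j := by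
  unfold tC tB; ring

lemma shift_tsum (f : ℕ → ℝ) (hf : Summable f) (n : ℕ) :
    ∑' i, f (i + (n+1)) = f (n+1) + ∑' i, f (i + (n+2)) := by
  have hg : Summable (fun i => f (i + (n+1))) := (summable_nat_add_iff (n+1)).2 hf
  rw [Summable.tsum_eq_zero_add hg]
  congr 1
  · simp
  · exact tsum_congr fun i => by congr 1; omega

lemma first_le_tail (f : ℕ → ℝ) (hf : Summable f) (hpos : ∀ i, 0 < f i) (n : ℕ) :
    f (n+1) ≤ ∑' i, f (i + (n+1)) := by
  have hg : Summable (fun i => f (i + (n+1))) := (summable_nat_add_iff (n+1)).2 hf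
  have := Summable.le_tsum hg 0 (fun j _ => (hpos _).le)
  simpa using this

lemma eB_lower (n : ℕ) : ((qq n : ℝ) + 1) * tB (n+1) ≤ eB n := by
  rw [eB, err_b]
  have hp : (0:ℝ) < (qq n : ℝ) + 1 := by have := qq_pos_real n; linarith
  exact mul_le_mul_of_nonneg_left (first_le_tail tB tB_summable tB_pos n) hp.le

lemma D_bound (n : ℕ) :
    |eC n - (aa (n+1) : ℝ) * eB n| ≤ ((20/3) / (qq n : ℝ)) * (((qq n : ℝ) + 1) * tB (n+1)) := by
  have hp : (0:ℝ) < (qq n : ℝ) + 1 := by have := qq_pos_real n; linarith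
  have hq := qq_pos_real n
  have hsB := shift_tsum tB tB_summable n
  have hsC := shift_tsum tC tC_summable n
  have hD : eC n - (aa (n+1) : ℝ) * eB n
      = ((qq n : ℝ) + 1) * ((∑' i, tC (i + (n+2))) - (aa (n+1):ℝ) * ∑' i, tB (i + (n+2))) := by
    rw [eC, eB, err_c, err_b, hsB, hsC, tC_eq]
    ring
  rw [hD]
  have h2C := (tail_bounds tC tC_pos tC_ratio (n+2)).2
  have h2B := (tail_bounds tB tB_pos tB_ratio (n+2)).2
  have h2Cp := (tail_bounds tC tC_pos tC_ratio (n+2)).1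
  have h2Bp := (tail_bounds tB tB_pos tB_ratio (n+2)).1
  have ha : (aa (n+1) : ℝ) ≤ 2 := by exact_mod_cast aa_le_two (n+1)
  have ha0 : (0:ℝ) ≤ (aa (n+1) : ℝ) := by positivity
  have hCB : tC (n+2) ≤ 2 * tB (n+2) := by
    rw [tC_eq]
    have : (aa (n+2) : ℝ) ≤ 2 := by exact_mod_cast aa_le_two (n+2)
    nlinarith [tB_pos (n+2)]
  -- |S_C - a S_B| ≤ (20/3) tB (n+2)
  have habs : |(∑' i, tC (i + (n+2))) - (aa (n+1):ℝ) * ∑' i, tB (i + (n+2))| ≤ (20/3) * tB (n+2) := by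
    rw [abs_le]
    constructor <;> nlinarith [tB_pos (n+2)]
  rw [abs_mul, abs_of_pos hp]
  -- key : (qq n + 1) * ((20/3) tB (n+2)) ≤ RHS
  have hkey : (20/3) * tB (n+2) ≤ ((20/3) / (qq n : ℝ)) * tB (n+1) := by
    unfold tB
    have h1 : (0:ℝ) < (qq (n+1) : ℝ) + 1 := by have := qq_pos_real (n+1); linarith
    have h2 : (0:ℝ) < (qq (n+2) : ℝ) + 1 := by have := qq_pos_real (n+2); linarith
    have hs : ((qq (n+2) : ℕ) : ℝ) + 1 = ((qq (n+1) : ℝ) + 1) * (1 + (qq (n+1):ℝ) * (qq (n+1):ℝ)) := by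
      exact_mod_cast congrArg (Nat.cast : ℕ → ℝ) (qq_succ_add_one (n+1))
    have hmono : (qq n : ℝ) ≤ (qq (n+1) : ℝ) := by
      exact_mod_cast (qq_strictMono (Nat.lt_succ_self n)).le
    have e1 : (20/3:ℝ) * (1 / ((qq (n+2):ℝ) + 1)) = 20 / (3 * ((qq (n+2):ℝ) + 1)) := by
      field_simp
    have e2 : ((20/3:ℝ) / (qq n : ℝ)) * (1 / ((qq (n+1):ℝ) + 1)) = 20 / (3 * ((qq n:ℝ) * ((qq (n+1):ℝ) + 1))) := by
      field_simp
    rw [e1, e2, div_le_div_iff₀ (by linarith) (by positivity)]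
    have hq1 := qq_pos_real (n+1)
    nlinarith
  calc ((qq n : ℝ) + 1) * |(∑' i, tC (i + (n+2))) - (aa (n+1):ℝ) * ∑' i, tB (i + (n+2))|
      ≤ ((qq n : ℝ) + 1) * ((20/3) * tB (n+2)) := mul_le_mul_of_nonneg_left habs hp.le
    _ ≤ ((qq n : ℝ) + 1) * (((20/3) / (qq n : ℝ)) * tB (n+1)) := mul_le_mul_of_nonneg_left hkey hp.le
    _ = ((20/3) / (qq n : ℝ)) * (((qq n : ℝ) + 1) * tB (n+1)) := by ring

end SimApprox4

namespace SimApprox5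
open SimApprox SimApprox2 SimApprox3 SimApprox4

lemma indep (l m k : ℤ) (h : (l:ℝ) * β + (m:ℝ) * γ = (k:ℝ)) : l = 0 ∧ m = 0 ∧ k = 0 := by
  set z : ℕ → ℤ := fun n => ((qq n : ℤ) + 1) * k - l * rInt n - m * sInt n with hz
  have hcast : ∀ n, (z n : ℝ) = (l:ℝ) * eB n + (m:ℝ) * eC n := by
    intro n
    simp only [hz, eB, eC]
    push_cast
    linear_combination -((qq n : ℝ) + 1) * h
  have hzto : Tendsto (fun n => (z n : ℝ)) atTop (𝓝 0) := by
    have h1 := (eB_tendsto.const_mul (l:ℝ)).add (eC_tendsto.const_mul (m:ℝ))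
    simp only [mul_zero, add_zero] at h1
    simpa [hcast] using h1
  have hE0 : ∀ᶠ n in atTop, z n = 0 := by
    have := hzto.abs
    simp only [abs_zero] at this
    filter_upwards [this.eventually_lt_const one_pos] with n hn
    have h1 : ((|z n| : ℤ) : ℝ) < 1 := by push_cast; exact hn
    have h2 : |z n| < 1 := by exact_mod_cast h1
    rwa [Int.abs_lt_one_iff] at h2
  have hsm : ∀ᶠ n in atTop, |(m:ℝ)| * ((20/3) / (qq n : ℝ)) < 1 := by
    have h1 := (bound_tendsto (20/3)).const_mul |(m:ℝ)|
    simp only [mul_zero] at h1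
    exact h1.eventually_lt_const one_pos
  have hkey : ∀ᶠ n in atTop, l + m * (aa (n+1) : ℤ) = 0 := by
    filter_upwards [hE0, hsm] with n h0 h1
    have heq : (l:ℝ) * eB n + (m:ℝ) * eC n = 0 := by
      rw [← hcast n, h0]; simp
    set a : ℝ := (aa (n+1) : ℝ) with ha
    have hBpos := eB_pos n
    have hlow := eB_lower n
    have hD := D_bound n
    have hiden : ((l:ℝ) + m * a) * eB n = -((m:ℝ) * (eC n - a * eB n)) := by
      linear_combination heq
    have hq := qq_pos_real n
    have hchain : |(l:ℝ) + m * a| * eB n < 1 * eB n := by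
      have e1 : |(l:ℝ) + m * a| * eB n = |((l:ℝ) + m * a) * eB n| := by
        rw [abs_mul, abs_of_pos hBpos]
      rw [e1, hiden, abs_neg, abs_mul]
      calc |(m:ℝ)| * |eC n - a * eB n|
          ≤ |(m:ℝ)| * (((20/3) / (qq n : ℝ)) * (((qq n : ℝ) + 1) * tB (n+1))) := by
            exact mul_le_mul_of_nonneg_left hD (abs_nonneg _)
        _ ≤ |(m:ℝ)| * (((20/3) / (qq n : ℝ)) * eB n) := by
            apply mul_le_mul_of_nonneg_left _ (abs_nonneg _)
            apply mul_le_mul_of_nonneg_left hlow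
            positivity
        _ = (|(m:ℝ)| * ((20/3) / (qq n : ℝ))) * eB n := by ring
        _ < 1 * eB n := by exact mul_lt_mul_of_pos_right h1 hBpos
    have habs : |(l:ℝ) + m * a| < 1 := lt_of_mul_lt_mul_right hchain hBpos.le
    have hcast2 : ((|l + m * (aa (n+1) : ℤ)| : ℤ) : ℝ) < 1 := by
      push_cast
      exact habs
    have h2 : |l + m * (aa (n+1) : ℤ)| < 1 := by exact_mod_cast hcast2
    rwa [Int.abs_lt_one_iff] at h2
  obtain ⟨N, hN⟩ := eventually_atTop.mp hkey
  have c1 := hN N (le_refl N)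
  have c2 := hN (N+1) (by omega)
  have haa : (aa (N+1) : ℤ) ≠ (aa (N+1+1) : ℤ) := by
    unfold aa; push_cast; omega
  have hm : m = 0 := by
    have hdiff : m * ((aa (N+1) : ℤ) - (aa (N+1+1) : ℤ)) = 0 := by linear_combination c1 - c2
    rcases mul_eq_zero.mp hdiff with h' | h'
    · exact h'
    · exact absurd (sub_eq_zero.mp h') haa
  have hl : l = 0 := by simpa [hm] using c1
  have hk : k = 0 := by
    have hk0 : (k:ℝ) = 0 := by rw [hl, hm] at h; push_cast at h; linarith
    exact_mod_cast hk0
  exact ⟨hl, hm, hk⟩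

lemma α_mem : α ∈ Set.Ioo (0:ℝ) 1 := by
  constructor
  · exact Summable.tsum_pos tA_summable (fun i => (tA_pos i).le) 0 (tA_pos 0)
  · have h := geo_tsum_le tA (fun i => (tA_pos i).le) tA_ratio
    have h0 : tA 0 = 1/2 := by norm_num [tA, qq]
    rw [h0] at h
    calc α ≤ (5/3) * (1/2) := h
      _ < 1 := by norm_num

lemma β_mem : β ∈ Set.Ioo (0:ℝ) 1 := by
  constructor
  · exact Summable.tsum_pos tB_summable (fun i => (tB_pos i).le) 0 (tB_pos 0)
  · have h := geo_tsum_le tB (fun i => (tB_pos i).le) tB_ratio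
    have h0 : tB 0 = 1/3 := by norm_num [tB, qq]
    rw [h0] at h
    calc β ≤ (5/3) * (1/3) := h
      _ < 1 := by norm_num

lemma γ_mem : γ ∈ Set.Ioo (0:ℝ) 1 := by
  constructor
  · exact Summable.tsum_pos tC_summable (fun i => (tC_pos i).le) 0 (tC_pos 0)
  · have h := geo_tsum_le tC (fun i => (tC_pos i).le) tC_ratio
    have h0 : tC 0 = 1/3 := by norm_num [tC, aa, qq]
    rw [h0] at h
    calc γ ≤ (5/3) * (1/3) := h
      _ < 1 := by norm_num

lemma α_irr : Irrational α :=
  irrational_of_int_approx α qq pInt eA (fun n => rfl) eA_pos eA_tendsto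

lemma β_irr : Irrational β :=
  irrational_of_int_approx β (fun n => qq n + 1) rInt eB
    (fun n => by rw [eB]; push_cast; ring) eB_pos eB_tendsto

lemma γ_irr : Irrational γ :=
  irrational_of_int_approx γ (fun n => qq n + 1) sInt eC
    (fun n => by rw [eC]; push_cast; ring) eC_pos eC_tendsto

end SimApprox5

end SimApproxConstruction

/-- There exist irrationals α, β, γ ∈ (0,1), a strictly
increasing sequence of positive integers (q_k), and integer sequences (p_k),
(r_k), (s_k) such that (i) 1, β, γ are linearly independent over ℚ and
(ii) q_k·α − p_k → 0, (q_k+1)·β − r_k → 0 and (q_k+1)·γ − s_k → 0. -/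
theorem exists_simultaneous_approximation :
    ∃ (α β γ : ℝ) (q : ℕ → ℕ) (p r s : ℕ → ℤ),
      Irrational α ∧ Irrational β ∧ Irrational γ ∧
      α ∈ Set.Ioo (0 : ℝ) 1 ∧ β ∈ Set.Ioo (0 : ℝ) 1 ∧ γ ∈ Set.Ioo (0 : ℝ) 1 ∧
      (∀ k, 0 < q k) ∧ StrictMono q ∧
      (∀ l m k : ℤ, (l : ℝ) * β + (m : ℝ) * γ = (k : ℝ) → l = 0 ∧ m = 0 ∧ k = 0) ∧
      Tendsto (fun k => (q k : ℝ) * α - (p k : ℝ)) atTop (𝓝 0) ∧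
      Tendsto (fun k => ((q k : ℝ) + 1) * β - (r k : ℝ)) atTop (𝓝 0) ∧
      Tendsto (fun k => ((q k : ℝ) + 1) * γ - (s k : ℝ)) atTop (𝓝 0) := by
  refine ⟨SimApprox.α, SimApprox.β, SimApprox.γ, SimApprox.qq,
    SimApprox2.pInt, SimApprox2.rInt, SimApprox2.sInt,
    SimApprox5.α_irr, SimApprox5.β_irr, SimApprox5.γ_irr,
    SimApprox5.α_mem, SimApprox5.β_mem, SimApprox5.γ_mem,
    fun k => by have := SimApprox.qq_two_le k; omega,
    SimApprox.qq_strictMono,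
    fun l m k h => SimApprox5.indep l m k h,
    SimApprox3.eA_tendsto, SimApprox3.eB_tendsto, SimApprox3.eC_tendsto⟩
end

section
/- Let α ∈ (0,1) be real, h > 0, and let β, γ be nonzero real numbers. Define u = (α + ih)/β and v = (1 − α − ih)/γ in ℂ. Suppose (q_k) is a sequence of positive integers and (p_k), (r_k), (s_k) are integer sequences with q_k·α − p_k → 0, (q_k + 1)·β − r_k → 0, and (q_k + 1)·γ − s_k → 0 as k → ∞. Then (r_k·u + s_k·v) − (q_k + 1) → 0 in ℂ and r_k·Re(u) − p_k → α as k → ∞; consequently e^{2πi(r_k·u + s_k·v)} → 1. -/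
/-!
Since `β·u + γ·v = 1`, writing `n_k = q_k + 1` gives
`r_k·u + s_k·v − n_k = −(n_k·β − r_k)·u − (n_k·γ − s_k)·v → 0`.
Likewise `β·Re u = α`, so `r_k·Re u − n_k·α → 0`, and adding `q_k·α − p_k → 0` yields
`r_k·Re u − p_k → α`. Finally `n_k` is an integer, so by periodicity
`e^{2πi(r_k·u + s_k·v)} = e^{2πi(r_k·u + s_k·v − n_k)} → 1`.
-/

open Filter Topology

section TopologicalRing

variable {ι R : Type*} [CommRing R] [TopologicalSpace R] [IsTopologicalRing R] {l : Filter ι}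

theorem tendsto_mul_sub_mul_of_tendsto_mul_sub {b u w : R} (hbu : b * u = w) {n r : ι → R}
    (hr : Tendsto (fun k => n k * b - r k) l (𝓝 0)) :
    Tendsto (fun k => r k * u - n k * w) l (𝓝 0) := by
  have h := (hr.mul_const u).neg
  rw [zero_mul, neg_zero] at h
  refine h.congr fun k => ?_
  rw [← hbu]
  ring

theorem tendsto_mul_add_mul_sub_of_tendsto_mul_sub {b c u v : R} (huv : b * u + c * v = 1)
    {n r s : ι → R} (hr : Tendsto (fun k => n k * b - r k) l (𝓝 0))
    (hs : Tendsto (fun k => n k * c - s k) l (𝓝 0)) :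
    Tendsto (fun k => r k * u + s k * v - n k) l (𝓝 0) := by
  have h := (tendsto_mul_sub_mul_of_tendsto_mul_sub (u := u) rfl hr).add
    (tendsto_mul_sub_mul_of_tendsto_mul_sub (u := v) rfl hs)
  rw [add_zero] at h
  refine h.congr fun k => ?_
  linear_combination (-n k) * huv

end TopologicalRing

theorem Complex.tendsto_exp_two_pi_I_mul_of_tendsto_sub_int {ι : Type*} {l : Filter ι}
    {z : ι → ℂ} (n : ι → ℤ) (hz : Tendsto (fun k => z k - n k) l (𝓝 0)) :
    Tendsto (fun k => exp (2 * Real.pi * I * z k)) l (𝓝 1) := by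
  have h := (continuous_exp.tendsto _).comp (hz.const_mul (2 * Real.pi * I))
  rw [mul_zero, exp_zero] at h
  refine h.congr fun k => ?_
  rw [Function.comp_apply, mul_sub, mul_comm _ (n k : ℂ), exp_periodic.sub_int_mul_eq]

theorem limits_for_constructed_uv_general (α : ℝ)
    (h : ℝ) (β γ : ℝ) (hβ : β ≠ 0) (hγ : γ ≠ 0)
    (u v : ℂ)
    (hu : u = ((α : ℂ) + (h : ℂ) * Complex.I) / (β : ℂ))
    (hv : v = (1 - (α : ℂ) - (h : ℂ) * Complex.I) / (γ : ℂ))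
    (q : ℕ → ℕ) (p r s : ℕ → ℤ)
    (h1 : Tendsto (fun k => (q k : ℝ) * α - (p k : ℝ)) atTop (𝓝 0))
    (h2 : Tendsto (fun k => ((q k : ℝ) + 1) * β - (r k : ℝ)) atTop (𝓝 0))
    (h3 : Tendsto (fun k => ((q k : ℝ) + 1) * γ - (s k : ℝ)) atTop (𝓝 0)) :
    Tendsto (fun k => ((r k : ℂ) * u + (s k : ℂ) * v) - ((q k : ℂ) + 1)) atTop (𝓝 0) ∧
    Tendsto (fun k => (r k : ℝ) * u.re - (p k : ℝ)) atTop (𝓝 α) ∧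
    Tendsto (fun k => Complex.exp (2 * Real.pi * Complex.I * ((r k : ℂ) * u + (s k : ℂ) * v)))
      atTop (𝓝 1) := by
  have huv : (β : ℂ) * u + γ * v = 1 := by
    have hβ' : (β : ℂ) ≠ 0 := Complex.ofReal_ne_zero.mpr hβ
    have hγ' : (γ : ℂ) ≠ 0 := Complex.ofReal_ne_zero.mpr hγ
    rw [hu, hv]
    field_simp
    ring
  have hre : β * u.re = α := by
    rw [hu, Complex.div_ofReal_re]
    simp [mul_div_cancel₀ _ hβ]
  have hlim : Tendsto (fun k => ((r k : ℂ) * u + (s k : ℂ) * v) - ((q k : ℂ) + 1)) atTop (𝓝 0) :=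
    tendsto_mul_add_mul_sub_of_tendsto_mul_sub huv (by exact_mod_cast h2.ofReal)
      (by exact_mod_cast h3.ofReal)
  refine ⟨hlim, ?_, Complex.tendsto_exp_two_pi_I_mul_of_tendsto_sub_int (fun k => q k + 1)
    (by exact_mod_cast hlim)⟩
  have h := ((tendsto_mul_sub_mul_of_tendsto_mul_sub hre h2).add h1).add_const α
  rw [zero_add, zero_add] at h
  exact h.congr fun k => by ring

/-- Let α ∈ (0,1), h > 0, β, γ ≠ 0, u = (α + ih)/β,
v = (1 − α − ih)/γ. If q_k·α − p_k → 0, (q_k+1)·β − r_k → 0 and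
(q_k+1)·γ − s_k → 0, then (r_k·u + s_k·v) − (q_k+1) → 0 in ℂ and
r_k·Re(u) − p_k → α; consequently e^{2πi(r_k·u + s_k·v)} → 1. -/
theorem limits_for_constructed_uv (α : ℝ) (hα : α ∈ Set.Ioo (0 : ℝ) 1)
    (h : ℝ) (hh : 0 < h) (β γ : ℝ) (hβ : β ≠ 0) (hγ : γ ≠ 0)
    (u v : ℂ)
    (hu : u = ((α : ℂ) + (h : ℂ) * Complex.I) / (β : ℂ))
    (hv : v = (1 - (α : ℂ) - (h : ℂ) * Complex.I) / (γ : ℂ))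
    (q : ℕ → ℕ) (hq : ∀ k, 0 < q k) (p r s : ℕ → ℤ)
    (h1 : Tendsto (fun k => (q k : ℝ) * α - (p k : ℝ)) atTop (𝓝 0))
    (h2 : Tendsto (fun k => ((q k : ℝ) + 1) * β - (r k : ℝ)) atTop (𝓝 0))
    (h3 : Tendsto (fun k => ((q k : ℝ) + 1) * γ - (s k : ℝ)) atTop (𝓝 0)) :
    Tendsto (fun k => ((r k : ℂ) * u + (s k : ℂ) * v) - ((q k : ℂ) + 1)) atTop (𝓝 0) ∧
    Tendsto (fun k => (r k : ℝ) * u.re - (p k : ℝ)) atTop (𝓝 α) ∧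
    Tendsto (fun k => Complex.exp (2 * Real.pi * Complex.I * ((r k : ℂ) * u + (s k : ℂ) * v)))
      atTop (𝓝 1) :=
  limits_for_constructed_uv_general α h β γ hβ hγ u v hu hv q p r s h1 h2 h3
end

section
/- Let ξ, η be real numbers with ξ > 1 and η > 1 such that log(ξ)/log(η) is irrational. Then for every λ > 0 there exist sequences of positive integers (n_k), (m_k) with n_k → ∞, m_k → ∞, and ξ^{n_k}/η^{m_k} → λ as k → ∞. -/
open Filter Topology Set

/-- Walking with a small positive step from below a target, we land within ε of it. -/
lemma step_reach (a t s ε : ℝ) (hs : 0 < s) (hsε : s < ε) (hat : a < t) :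
    ∃ k : ℕ, |a + k * s - t| < ε := by
  classical
  have hex : ∃ k : ℕ, t < a + k * s := by
    obtain ⟨k, hk⟩ := Archimedean.arch (t - a) hs
    rw [nsmul_eq_mul] at hk
    exact ⟨k + 1, by push_cast; nlinarith⟩
  obtain ⟨j, hj⟩ : ∃ j : ℕ, Nat.find hex = j + 1 := by
    have h0 : Nat.find hex ≠ 0 := by
      intro h
      have := Nat.find_spec hex
      rw [h] at this; push_cast at this; linarith
    exact ⟨Nat.find hex - 1, (Nat.succ_pred_eq_of_pos (Nat.pos_of_ne_zero h0)).symm⟩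
  have hK := Nat.find_spec hex
  rw [hj] at hK
  have hprev : ¬ t < a + j * s := Nat.find_min hex (by omega)
  push_neg at hprev
  refine ⟨j + 1, ?_⟩
  rw [abs_lt]
  push_cast at hK ⊢
  constructor <;> linarith

/-- Given a small nonzero element p·α + q (p > 0) we can hit any residue c mod 1
with n·α - m, n ≥ N. -/
lemma reach (α c ε : ℝ) (N p : ℕ) (q : ℤ)
    (hs : (p : ℝ) * α + q ∈ Set.Ioo 0 ε ∨ -((p : ℝ) * α + q) ∈ Set.Ioo 0 ε) :
    ∃ (n : ℕ) (m : ℤ), N ≤ n ∧ |(n : ℝ) * α - m - c| < ε := by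
  set s : ℝ := (p : ℝ) * α + q with hs_def
  rcases hs with h | h
  · set M : ℤ := ⌈(N : ℝ) * α - c⌉ + 1 with hM
    have hat : (N : ℝ) * α < c + M := by
      have := Int.le_ceil ((N : ℝ) * α - c)
      push_cast [hM]; linarith
    obtain ⟨k, hk⟩ := step_reach ((N : ℝ) * α) (c + M) s ε h.1 h.2 hat
    refine ⟨N + k * p, M - k * q, Nat.le_add_right _ _, ?_⟩
    have he : ((N + k * p : ℕ) : ℝ) * α - ((M - k * q : ℤ) : ℝ) - c
        = (N : ℝ) * α + k * s - (c + M) := by push_cast [hs_def]; ring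
    rw [he]; exact hk
  · set M : ℤ := ⌊(N : ℝ) * α - c⌋ - 1 with hM
    have hat : -((N : ℝ) * α) < -(c + M) := by
      have := Int.floor_le ((N : ℝ) * α - c)
      push_cast [hM]; linarith
    obtain ⟨k, hk⟩ := step_reach (-((N : ℝ) * α)) (-(c + M)) (-s) ε h.1 h.2 hat
    refine ⟨N + k * p, M - k * q, Nat.le_add_right _ _, ?_⟩
    have he : ((N + k * p : ℕ) : ℝ) * α - ((M - k * q : ℤ) : ℝ) - c
        = -(-((N : ℝ) * α) + k * (-s) - (-(c + M))) := by push_cast [hs_def]; ring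
    rw [he, abs_neg]; exact hk

/-- Key density: for irrational α, n·α - m (n ∈ ℕ large, m ∈ ℤ) approximates any c. -/
lemma key (α : ℝ) (hirr : Irrational α) (c ε : ℝ) (hε : 0 < ε) (N : ℕ) :
    ∃ (n : ℕ) (m : ℤ), N ≤ n ∧ |(n : ℝ) * α - m - c| < ε := by
  classical
  set ε' : ℝ := min ε 1 with hε'
  have hε'0 : 0 < ε' := lt_min hε one_pos
  have hε'ε : ε' ≤ ε := min_le_left _ _
  have hε'1 : ε' ≤ 1 := min_le_right _ _
  set S : AddSubgroup ℝ :=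
    { carrier := {x : ℝ | ∃ pq : ℤ × ℤ, x = (pq.1 : ℝ) * α + pq.2}
      zero_mem' := ⟨(0, 0), by norm_num⟩
      add_mem' := by
        rintro a b ⟨⟨n1, m1⟩, rfl⟩ ⟨⟨n2, m2⟩, rfl⟩
        exact ⟨(n1 + n2, m1 + m2), by push_cast; ring⟩
      neg_mem' := by
        rintro a ⟨⟨n1, m1⟩, rfl⟩
        exact ⟨(-n1, -m1), by push_cast; ring⟩ } with hS
  have hdense : Dense (S : Set ℝ) := by
    rcases S.dense_or_cyclic with h | ⟨a, ha⟩
    · exact h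
    · exfalso
      have h1 : (1 : ℝ) ∈ S := ⟨(0, 1), by norm_num⟩
      have hα : α ∈ S := ⟨(1, 0), by norm_num⟩
      rw [ha, AddSubgroup.mem_closure_singleton] at h1 hα
      obtain ⟨i, hi⟩ := h1
      obtain ⟨j, hj⟩ := hα
      simp only [zsmul_eq_mul] at hi hj
      have hi0 : (i : ℝ) ≠ 0 := by
        intro h0; rw [h0, zero_mul] at hi; exact one_ne_zero hi.symm
      exact hirr ⟨(j : ℚ) / (i : ℚ), by
        push_cast
        rw [div_eq_iff hi0]
        linear_combination (i : ℝ) * hj - (j : ℝ) * hi⟩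
  obtain ⟨g, hgS, hg⟩ := hdense.exists_mem_open isOpen_Ioo (nonempty_Ioo.2 hε'0)
  obtain ⟨⟨n0, m0⟩, rfl⟩ := hgS
  have hn0 : n0 ≠ 0 := by
    intro h0
    rw [h0] at hg
    simp only [Int.cast_zero, zero_mul, zero_add, mem_Ioo] at hg
    have h1' : (0 : ℤ) < m0 := by exact_mod_cast hg.1
    have : (1 : ℝ) ≤ (m0 : ℝ) := by exact_mod_cast h1'
    linarith [hg.2]
  rcases hn0.lt_or_gt with hneg | hpos
  · -- n0 < 0 : use p = -n0, q = -m0, then -(p α + q) = n0 α + m0 ∈ Ioo 0 ε'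
    obtain ⟨n, m, hn, hm⟩ := reach α c ε' N (-n0).toNat (-m0) (Or.inr (by
      have hcast : ((((-n0).toNat : ℕ)) : ℝ) = -(n0 : ℝ) := by
        have h := Int.toNat_of_nonneg (show (0:ℤ) ≤ -n0 by omega)
        exact_mod_cast congrArg (fun z : ℤ => (z : ℝ)) h
      rw [hcast]
      have he : -(-(n0:ℝ) * α + ((-m0 : ℤ) : ℝ)) = (n0:ℝ) * α + (m0:ℝ) := by
        push_cast; ring
      rw [he]; exact hg))
    exact ⟨n, m, hn, lt_of_lt_of_le hm hε'ε⟩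
  · obtain ⟨n, m, hn, hm⟩ := reach α c ε' N n0.toNat m0 (Or.inl (by
      have hcast : (((n0.toNat : ℕ)) : ℝ) = (n0 : ℝ) := by
        have h := Int.toNat_of_nonneg (show (0:ℤ) ≤ n0 by omega)
        exact_mod_cast congrArg (fun z : ℤ => (z : ℝ)) h
      rw [hcast]; exact hg))
    exact ⟨n, m, hn, lt_of_lt_of_le hm hε'ε⟩

/-- Let ξ, η be reals with ξ > 1, η > 1 and log(ξ)/log(η)
irrational. Then for every λ > 0 there are sequences of positive integers
(n_k), (m_k) with n_k → ∞, m_k → ∞ and ξ^{n_k}/η^{m_k} → λ. -/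
theorem ratio_powers_dense (ξ η : ℝ) (hξ : 1 < ξ) (hη : 1 < η)
    (hirr : Irrational (Real.log ξ / Real.log η)) (lam : ℝ) (hlam : 0 < lam) :
    ∃ n m : ℕ → ℕ, (∀ k, 0 < n k) ∧ (∀ k, 0 < m k) ∧
      Tendsto n atTop atTop ∧ Tendsto m atTop atTop ∧
      Tendsto (fun k => ξ ^ (n k) / η ^ (m k)) atTop (𝓝 lam) := by
  have hLη : 0 < Real.log η := Real.log_pos hη
  have hLξ : 0 < Real.log ξ := Real.log_pos hξ
  set α : ℝ := Real.log ξ / Real.log η with hαdef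
  have hα : 0 < α := div_pos hLξ hLη
  set c : ℝ := Real.log lam / Real.log η with hcdef
  have H : ∀ k : ℕ, ∃ (n m : ℕ), k + 1 ≤ n ∧ k + 1 ≤ m ∧
      |(n : ℝ) * α - m - c| < 1 / (k + 1) := by
    intro k
    set N : ℕ := (k + 1) + ⌈(c + k + 2) / α⌉₊ with hN
    obtain ⟨n, m, hn, hm⟩ := key α hirr c (1 / (k + 1)) (by positivity) N
    have hnk : k + 1 ≤ n := le_trans (Nat.le_add_right _ _) hn
    have hcle : c + k + 2 ≤ (N : ℝ) * α := by
      have h1 : (c + k + 2) / α ≤ (⌈(c + k + 2) / α⌉₊ : ℝ) := Nat.le_ceil _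
      have h2 : ((⌈(c + k + 2) / α⌉₊ : ℕ) : ℝ) ≤ (N : ℝ) := by
        exact_mod_cast Nat.le_add_left _ _
      calc c + k + 2 = ((c + k + 2) / α) * α := by field_simp
        _ ≤ (N : ℝ) * α := mul_le_mul_of_nonneg_right (h1.trans h2) hα.le
    have hNn : (N : ℝ) * α ≤ (n : ℝ) * α := by
      apply mul_le_mul_of_nonneg_right _ hα.le; exact_mod_cast hn
    have h3 := (abs_lt.1 hm).2
    have h4 : (1 : ℝ) / (k + 1) ≤ 1 := by
      rw [div_le_one (by positivity)]; norm_num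
    have hmk : ((k : ℝ) + 1) ≤ (m : ℝ) := by linarith
    have hm0 : (0 : ℤ) ≤ m := by
      have : (0 : ℝ) ≤ (m : ℝ) := by linarith [(by positivity : (0:ℝ) ≤ (k:ℝ))]
      exact_mod_cast this
    have hmm : ((m.toNat : ℕ) : ℝ) = (m : ℝ) := by
      exact_mod_cast congrArg (fun z : ℤ => (z : ℝ)) (Int.toNat_of_nonneg hm0)
    refine ⟨n, m.toNat, hnk, ?_, ?_⟩
    · have : ((k + 1 : ℕ) : ℝ) ≤ ((m.toNat : ℕ) : ℝ) := by rw [hmm]; push_cast; linarith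
      exact_mod_cast this
    · rw [hmm]; exact hm
  choose n m h1 h2 h3 using H
  have hξ0 : (0 : ℝ) < ξ := by linarith
  have hη0 : (0 : ℝ) < η := by linarith
  have hfun : ∀ k, Real.exp (((n k : ℝ) * α - m k - c) * Real.log η) * lam
      = ξ ^ (n k) / η ^ (m k) := by
    intro k
    have e0 : ((n k : ℝ) * α - m k - c) * Real.log η
        = (n k : ℝ) * Real.log ξ - (m k : ℝ) * Real.log η - Real.log lam := by
      rw [hαdef, hcdef]; field_simp
    have e1 : Real.exp ((n k : ℝ) * Real.log ξ) = ξ ^ n k := by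
      rw [← Real.log_pow, Real.exp_log (by positivity)]
    have e2 : Real.exp ((m k : ℝ) * Real.log η) = η ^ m k := by
      rw [← Real.log_pow, Real.exp_log (by positivity)]
    rw [e0, Real.exp_sub, Real.exp_sub, e1, e2, Real.exp_log hlam]
    field_simp
  have hd : Tendsto (fun k => (n k : ℝ) * α - m k - c) atTop (𝓝 0) := by
    apply squeeze_zero_norm (fun k => (h3 k).le) tendsto_one_div_add_atTop_nhds_zero_nat
  have hT : Tendsto (fun k => Real.exp (((n k : ℝ) * α - m k - c) * Real.log η) * lam)
      atTop (𝓝 (Real.exp (0 * Real.log η) * lam)) :=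
    ((Real.continuous_exp.tendsto _).comp (hd.mul_const _)).mul_const lam
  simp only [zero_mul, Real.exp_zero, one_mul] at hT
  exact ⟨n, m, fun k => lt_of_lt_of_le k.succ_pos (h1 k),
    fun k => lt_of_lt_of_le k.succ_pos (h2 k),
    tendsto_atTop_mono (fun k => (Nat.le_succ k).trans (h1 k)) tendsto_id,
    tendsto_atTop_mono (fun k => (Nat.le_succ k).trans (h2 k)) tendsto_id,
    hT.congr (fun k => hfun k)⟩
end
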